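/- arXiv:2507.05188 — 7 statements merged into one kernel-verified Lean document; each statement's English description precedes it below -/
import Mathlib

section
/- An atomic integral domain D is a unique factorization domain if and only if D is length-factorial. -/
/-- An integral domain is *atomic* if every nonzero nonunit can be written as a finite
product of irreducible elements. -/
def IsAtomicDomain (D : Type*) [CommRing D] [IsDomain D] : Prop :=
  ∀ x : D, x ≠ 0 → ¬IsUnit x → ∃ s : Multiset D, (∀ a ∈ s, Irreducible a) ∧ s.prod = x

/-- `D` is *length-factorial* if whenever `x₁ ⋯ xₙ = y₁ ⋯ yₙ` with all `xᵢ` and `yⱼ`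
irreducible, then there is a permutation matching each `xᵢ` with an associated `yⱼ`. -/
def IsLengthFactorialDomain (D : Type*) [CommRing D] [IsDomain D] : Prop :=
  ∀ s t : Multiset D, (∀ a ∈ s, Irreducible a) → (∀ a ∈ t, Irreducible a) →
    s.prod = t.prod → Multiset.card s = Multiset.card t →
    Multiset.Rel Associated s t

open Multiset
open scoped Classical

section Aux

variable {D : Type*} [CommRing D] [IsDomain D]

private lemma atoms_prod_ne_zero {A : Multiset D} (hA : ∀ a ∈ A, Irreducible a) :
    A.prod ≠ 0 := by
  intro h
  rw [Multiset.prod_eq_zero_iff] at h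
  exact (hA 0 h).ne_zero rfl

private lemma atoms_prod_not_unit {A : Multiset D} (h0 : A ≠ 0)
    (hA : ∀ a ∈ A, Irreducible a) : ¬ IsUnit A.prod := by
  obtain ⟨a, ha⟩ := Multiset.exists_mem_of_ne_zero h0
  intro hu
  exact (hA a ha).not_isUnit (isUnit_of_dvd_unit (Multiset.dvd_prod ha) hu)

private lemma countP_eq_of_rel {s t : Multiset D} (h : Multiset.Rel Associated s t) (b : D) :
    s.countP (fun x => Associated b x) = t.countP (fun x => Associated b x) := by
  induction h with
  | zero => rfl
  | cons hab h ih =>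
      have hiff : (Associated b _) ↔ (Associated b _) :=
        ⟨fun h' => h'.trans hab, fun h' => h'.trans hab.symm⟩
      simp [Multiset.countP_cons, ih, hiff]

/-- absorb a unit into the first element of a nonempty multiset of atoms -/
private lemma absorb_unit {u : D} (hu : IsUnit u) {A : Multiset D} (h0 : A ≠ 0)
    (hA : ∀ a ∈ A, Irreducible a) :
    ∃ A' : Multiset D, (∀ a ∈ A', Irreducible a) ∧ A'.prod = u * A.prod ∧
      Multiset.card A' = Multiset.card A ∧
      (∀ b : D, A'.countP (fun x => Associated b x) = A.countP (fun x => Associated b x)) ∧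
      Multiset.Rel Associated A A' := by
  obtain ⟨a, ha⟩ := Multiset.exists_mem_of_ne_zero h0
  obtain ⟨A₂, rfl⟩ := Multiset.exists_cons_of_mem ha
  have haA : Irreducible a := hA a (Multiset.mem_cons_self a A₂)
  have hassoc : Associated a (u * a) := ⟨hu.unit, by rw [IsUnit.unit_spec]; ring⟩
  refine ⟨(u * a) ::ₘ A₂, ?_, ?_, ?_, ?_, ?_⟩
  · intro x hx
    rcases Multiset.mem_cons.1 hx with rfl | hx
    · exact hassoc.irreducible haA
    · exact hA x (Multiset.mem_cons_of_mem hx)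
  · rw [Multiset.prod_cons, Multiset.prod_cons]; ring
  · simp
  · intro b
    have hiff : Associated b (u * a) ↔ Associated b a :=
      ⟨fun h' => h'.trans hassoc.symm, fun h' => h'.trans hassoc⟩
    simp [Multiset.countP_cons, hiff]
  · exact Multiset.Rel.cons hassoc (Multiset.rel_refl_of_refl_on fun x _ => Associated.refl x)

private lemma factor_up_to_unit (hD : IsAtomicDomain D) (x : D) (hx : x ≠ 0) :
    ∃ (u : D) (Γ : Multiset D), IsUnit u ∧ (∀ g ∈ Γ, Irreducible g) ∧ x = u * Γ.prod := by
  by_cases hu : IsUnit x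
  · exact ⟨x, 0, hu, by simp, by simp⟩
  · obtain ⟨Γ, hΓ, hprod⟩ := hD x hx hu
    exact ⟨1, Γ, isUnit_one, hΓ, by rw [one_mul, hprod]⟩

private lemma half_factorial (hD : IsAtomicDomain D) (hLF : IsLengthFactorialDomain D) :
    ∀ A B : Multiset D, (∀ a ∈ A, Irreducible a) → (∀ b ∈ B, Irreducible b) →
      A.prod = B.prod → Multiset.card A = Multiset.card B := by
  by_contra hcon
  push_neg at hcon
  obtain ⟨A0, B0, hA0, hB0, hprod0, hne0⟩ := hcon
  -- the set of positive "length differences" of counterexamples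
  have hBad : ∃ d : ℕ, 0 < d ∧ ∃ A B : Multiset D, (∀ a ∈ A, Irreducible a) ∧
      (∀ b ∈ B, Irreducible b) ∧ A.prod = B.prod ∧
      Multiset.card B = Multiset.card A + d := by
    rcases lt_or_gt_of_ne hne0 with h | h
    · exact ⟨Multiset.card B0 - Multiset.card A0, by omega, A0, B0, hA0, hB0, hprod0, by omega⟩
    · exact ⟨Multiset.card A0 - Multiset.card B0, by omega, B0, A0, hB0, hA0, hprod0.symm,
        by omega⟩
  obtain ⟨hdpos, A1, B1, hA1, hB1, hprod1, hcard1⟩ := Nat.find_spec hBad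
  have hdmin := fun d' (h : d' < Nat.find hBad) => Nat.find_min hBad h
  -- among counterexamples of difference d, minimize the small length t
  have hBad2 : ∃ t : ℕ, ∃ A B : Multiset D, (∀ a ∈ A, Irreducible a) ∧
      (∀ b ∈ B, Irreducible b) ∧ A.prod = B.prod ∧ Multiset.card A = t ∧
      Multiset.card B = t + Nat.find hBad :=
    ⟨Multiset.card A1, A1, B1, hA1, hB1, hprod1, rfl, hcard1⟩
  obtain ⟨A, B, hA, hB, hprodAB, hcardA, hcardB⟩ := Nat.find_spec hBad2
  have htmin := fun t' (h : t' < Nat.find hBad2) => Nat.find_min hBad2 h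
  -- t ≥ 1
  have ht1 : 1 ≤ Nat.find hBad2 := by
    by_contra h
    have hA0' : A = 0 := Multiset.card_eq_zero.1 (by omega)
    have hB0' : B ≠ 0 := by
      intro h'
      rw [h', Multiset.card_zero] at hcardB
      omega
    exact atoms_prod_not_unit hB0' hB
      (by rw [← hprodAB, hA0', Multiset.prod_zero]; exact isUnit_one)
  -- A and B share no associated atoms
  have hcross : ∀ a ∈ A, ∀ b ∈ B, ¬ Associated a b := by
    intro a haA b hbB habs
    obtain ⟨A₂, hA₂⟩ := Multiset.exists_cons_of_mem haA
    obtain ⟨B₂, hB₂⟩ := Multiset.exists_cons_of_mem hbB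
    obtain ⟨uu, huu⟩ := habs
    have ha0 : a ≠ 0 := (hA a haA).ne_zero
    have hprod2 : A₂.prod = (uu : D) * B₂.prod := by
      have h1 : a * A₂.prod = b * B₂.prod := by
        rw [← Multiset.prod_cons, ← Multiset.prod_cons, ← hA₂, ← hB₂]; exact hprodAB
      rw [← huu] at h1
      apply mul_left_cancel₀ ha0
      calc a * A₂.prod = a * ↑uu * B₂.prod := h1
        _ = a * ((uu : D) * B₂.prod) := by ring
    have hcA : Multiset.card A = Multiset.card A₂ + 1 := by
      rw [hA₂, Multiset.card_cons]
    have hcB : Multiset.card B = Multiset.card B₂ + 1 := by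
      rw [hB₂, Multiset.card_cons]
    have hB₂ne : B₂ ≠ 0 := by
      intro h'
      rw [h', Multiset.card_zero] at hcB
      omega
    have hB₂atoms : ∀ x ∈ B₂, Irreducible x := fun x hx =>
      hB x (by rw [hB₂]; exact Multiset.mem_cons_of_mem hx)
    obtain ⟨B₃, hB₃atoms, hB₃prod, hB₃card, -, -⟩ := absorb_unit uu.isUnit hB₂ne hB₂atoms
    have hA₂atoms : ∀ x ∈ A₂, Irreducible x := fun x hx =>
      hA x (by rw [hA₂]; exact Multiset.mem_cons_of_mem hx)
    refine htmin (Nat.find hBad2 - 1) (by omega)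
      ⟨A₂, B₃, hA₂atoms, hB₃atoms, ?_, by omega, by omega⟩
    rw [hB₃prod, hprod2]
  -- pick atoms α ∈ A, β ∈ B
  have hAne : A ≠ 0 := by
    intro h'; rw [h', Multiset.card_zero] at hcardA; omega
  have hBne : B ≠ 0 := by
    intro h'; rw [h', Multiset.card_zero] at hcardB; omega
  obtain ⟨α, hαA⟩ := Multiset.exists_mem_of_ne_zero hAne
  obtain ⟨β, hβB⟩ := Multiset.exists_mem_of_ne_zero hBne
  obtain ⟨A', hA'⟩ := Multiset.exists_cons_of_mem hαA
  obtain ⟨B', hB'⟩ := Multiset.exists_cons_of_mem hβB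
  have hαirr : Irreducible α := hA α hαA
  have hβirr : Irreducible β := hB β hβB
  have hαβ : ¬ Associated α β := hcross α hαA β hβB
  have hz1 : A.prod = α * A'.prod := by rw [hA', Multiset.prod_cons]
  have hz2 : A.prod = β * B'.prod := by
    rw [hprodAB, hB', Multiset.prod_cons]
  have hzne : A.prod ≠ 0 := atoms_prod_ne_zero hA
  have hkey : (α + β) * A.prod = α * β * (A'.prod + B'.prod) := by
    linear_combination α * hz2 + β * hz1
  have hcne : α + β ≠ 0 := by
    intro h'
    apply hαβ
    refine ⟨⟨-1, -1, by ring, by ring⟩, ?_⟩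
    show α * (-1 : D) = β
    linear_combination -h'
  have hwne : A'.prod + B'.prod ≠ 0 := by
    intro h'
    rw [h', mul_zero] at hkey
    rcases mul_eq_zero.1 hkey with h | h
    · exact hcne h
    · exact hzne h
  -- factor c = α + β and w = A'.prod + B'.prod up to units
  obtain ⟨u, Γ, hu, hΓ, hcfac⟩ := factor_up_to_unit hD (α + β) hcne
  obtain ⟨v, Δ, hv, hΔ, hwfac⟩ := factor_up_to_unit hD (A'.prod + B'.prod) hwne
  -- the three factorizations of E = (α+β) * A.prod
  obtain ⟨A₁, hA₁atoms, hA₁prod, hA₁card, hA₁count, -⟩ := absorb_unit hu hAne hA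
  obtain ⟨B₁, hB₁atoms, hB₁prod, hB₁card, hB₁count, -⟩ := absorb_unit hu hBne hB
  have hvβassoc : Associated β (v * β) := ⟨hv.unit, by rw [IsUnit.unit_spec]; ring⟩
  have hG1atoms : ∀ x ∈ Γ + A₁, Irreducible x := by
    intro x hx; rcases Multiset.mem_add.1 hx with h | h
    exacts [hΓ x h, hA₁atoms x h]
  have hG2atoms : ∀ x ∈ Γ + B₁, Irreducible x := by
    intro x hx; rcases Multiset.mem_add.1 hx with h | h
    exacts [hΓ x h, hB₁atoms x h]
  have hG3atoms : ∀ x ∈ α ::ₘ (v * β) ::ₘ Δ, Irreducible x := by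
    intro x hx
    rcases Multiset.mem_cons.1 hx with rfl | hx
    · exact hαirr
    rcases Multiset.mem_cons.1 hx with rfl | hx
    · exact hvβassoc.irreducible hβirr
    · exact hΔ x hx
  have hG1prod : (Γ + A₁).prod = (α + β) * A.prod := by
    rw [Multiset.prod_add, hA₁prod, hcfac]; ring
  have hG2prod : (Γ + B₁).prod = (α + β) * A.prod := by
    rw [Multiset.prod_add, hB₁prod, hcfac, hprodAB]; ring
  have hG3prod : (α ::ₘ (v * β) ::ₘ Δ).prod = (α + β) * A.prod := by
    rw [Multiset.prod_cons, Multiset.prod_cons, hkey, hwfac]; ring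
  -- counting facts
  have hΓnoβ : ∀ g ∈ Γ, ¬ Associated β g := by
    intro g hg hassoc
    have hβdvdc : β ∣ α + β :=
      dvd_trans hassoc.dvd (dvd_trans (Multiset.dvd_prod hg) ⟨u, by rw [hcfac]; ring⟩)
    have hβdvdα : β ∣ α := by
      simpa using dvd_sub hβdvdc (dvd_refl β)
    exact hαβ (hβirr.associated_of_dvd hαirr hβdvdα).symm
  have hΓnoα : ∀ g ∈ Γ, ¬ Associated α g := by
    intro g hg hassoc
    have hαdvdc : α ∣ α + β :=
      dvd_trans hassoc.dvd (dvd_trans (Multiset.dvd_prod hg) ⟨u, by rw [hcfac]; ring⟩)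
    have hαdvdβ : α ∣ β := by
      simpa using dvd_sub hαdvdc (dvd_refl α)
    exact hαβ (hαirr.associated_of_dvd hβirr hαdvdβ)
  have hβG1 : (Γ + A₁).countP (fun x => Associated β x) = 0 := by
    rw [Multiset.countP_add, hA₁count β]
    have h1 : Γ.countP (fun x => Associated β x) = 0 :=
      Multiset.countP_eq_zero.2 hΓnoβ
    have h2 : A.countP (fun x => Associated β x) = 0 :=
      Multiset.countP_eq_zero.2 (fun a ha hass => hcross a ha β hβB hass.symm)
    rw [h1, h2]
  have hαG2 : (Γ + B₁).countP (fun x => Associated α x) = 0 := by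
    rw [Multiset.countP_add, hB₁count α]
    have h1 : Γ.countP (fun x => Associated α x) = 0 :=
      Multiset.countP_eq_zero.2 hΓnoα
    have h2 : B.countP (fun x => Associated α x) = 0 :=
      Multiset.countP_eq_zero.2 (fun b hb hass => hcross α hαA b hb hass)
    rw [h1, h2]
  have hβG3 : 0 < (α ::ₘ (v * β) ::ₘ Δ).countP (fun x => Associated β x) := by
    refine Multiset.countP_pos.2 ⟨v * β, ?_, hvβassoc⟩
    exact Multiset.mem_cons_of_mem (Multiset.mem_cons_self _ _)
  have hαG3 : 0 < (α ::ₘ (v * β) ::ₘ Δ).countP (fun x => Associated α x) := by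
    exact Multiset.countP_pos.2 ⟨α, Multiset.mem_cons_self _ _, Associated.refl α⟩
  -- lengths
  have hn2n1 : Multiset.card (Γ + B₁) = Multiset.card (Γ + A₁) + Nat.find hBad := by
    simp only [Multiset.card_add, hA₁card, hB₁card]
    omega
  have harith1 : ∀ n3 n1 n2 a dd : ℕ, n1 = n3 + a → n2 = n1 + dd →
      (a + dd) * n1 = a * n2 + dd * n3 := by
    intro n3 n1 n2 a dd h1 h2; subst h2; subst h1; ring
  have harith2 : ∀ n3 n1 n2 a dd : ℕ, n3 = n2 + a → n2 = n1 + dd →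
      a * n1 + dd * n3 = (a + dd) * n2 := by
    intro n3 n1 n2 a dd h1 h2; subst h1; subst h2; ring
  rcases lt_trichotomy (Multiset.card (α ::ₘ (v * β) ::ₘ Δ)) (Multiset.card (Γ + A₁))
    with hlt | heq | hgt
  · -- n3 < n1 : compare (a+d)•G1 with a•G2 + d•G3
    obtain ⟨a, ha⟩ : ∃ a, Multiset.card (Γ + A₁) =
        Multiset.card (α ::ₘ (v * β) ::ₘ Δ) + a :=
      ⟨Multiset.card (Γ + A₁) - Multiset.card (α ::ₘ (v * β) ::ₘ Δ), by omega⟩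
    have hrel := hLF ((a + Nat.find hBad) • (Γ + A₁))
      (a • (Γ + B₁) + Nat.find hBad • (α ::ₘ (v * β) ::ₘ Δ))
      (fun x hx => hG1atoms x ((Multiset.mem_nsmul.1 hx).2))
      (by intro x hx
          rcases Multiset.mem_add.1 hx with h | h
          · exact hG2atoms x ((Multiset.mem_nsmul.1 h).2)
          · exact hG3atoms x ((Multiset.mem_nsmul.1 h).2))
      (by rw [Multiset.prod_add, Multiset.prod_nsmul, Multiset.prod_nsmul,
            Multiset.prod_nsmul, hG1prod, hG2prod, hG3prod, ← pow_add])
      (by rw [Multiset.card_add, Multiset.card_nsmul, Multiset.card_nsmul,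
            Multiset.card_nsmul]
          exact harith1 _ _ _ _ _ ha hn2n1)
    have hcount := countP_eq_of_rel hrel β
    rw [Multiset.countP_nsmul, hβG1, Multiset.countP_add, Multiset.countP_nsmul,
      Multiset.countP_nsmul] at hcount
    have hpos : 0 < Nat.find hBad * (α ::ₘ (v * β) ::ₘ Δ).countP (fun x => Associated β x) :=
      Nat.mul_pos hdpos hβG3
    omega
  · -- n3 = n1 : direct LF comparison of G1 and G3
    have hrel := hLF (Γ + A₁) (α ::ₘ (v * β) ::ₘ Δ) hG1atoms hG3atoms
      (by rw [hG1prod, hG3prod]) (by omega)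
    have hcount := countP_eq_of_rel hrel β
    omega
  · rcases lt_trichotomy (Multiset.card (α ::ₘ (v * β) ::ₘ Δ)) (Multiset.card (Γ + B₁))
      with hlt2 | heq2 | hgt2
    · -- n1 < n3 < n2 : smaller difference counterexample
      refine hdmin (Multiset.card (α ::ₘ (v * β) ::ₘ Δ) - Multiset.card (Γ + A₁)) (by omega)
        ⟨by omega, Γ + A₁, α ::ₘ (v * β) ::ₘ Δ, hG1atoms, hG3atoms,
          by rw [hG1prod, hG3prod], by omega⟩
    · -- n3 = n2
      have hrel := hLF (Γ + B₁) (α ::ₘ (v * β) ::ₘ Δ) hG2atoms hG3atoms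
        (by rw [hG2prod, hG3prod]) (by omega)
      have hcount := countP_eq_of_rel hrel α
      omega
    · -- n2 < n3 : compare a•G1 + d•G3 with (a+d)•G2
      obtain ⟨a, ha⟩ : ∃ a, Multiset.card (α ::ₘ (v * β) ::ₘ Δ) =
          Multiset.card (Γ + B₁) + a :=
        ⟨Multiset.card (α ::ₘ (v * β) ::ₘ Δ) - Multiset.card (Γ + B₁), by omega⟩
      have hrel := hLF (a • (Γ + A₁) + Nat.find hBad • (α ::ₘ (v * β) ::ₘ Δ))
        ((a + Nat.find hBad) • (Γ + B₁))
        (by intro x hx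
            rcases Multiset.mem_add.1 hx with h | h
            · exact hG1atoms x ((Multiset.mem_nsmul.1 h).2)
            · exact hG3atoms x ((Multiset.mem_nsmul.1 h).2))
        (fun x hx => hG2atoms x ((Multiset.mem_nsmul.1 hx).2))
        (by rw [Multiset.prod_add, Multiset.prod_nsmul, Multiset.prod_nsmul,
              Multiset.prod_nsmul, hG1prod, hG2prod, hG3prod, ← pow_add])
        (by rw [Multiset.card_add, Multiset.card_nsmul, Multiset.card_nsmul,
              Multiset.card_nsmul]
            exact harith2 _ _ _ _ _ ha hn2n1)
      have hcount := countP_eq_of_rel hrel α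
      rw [Multiset.countP_add, Multiset.countP_nsmul, Multiset.countP_nsmul,
        Multiset.countP_nsmul, hαG2] at hcount
      have hpos : 0 < Nat.find hBad * (α ::ₘ (v * β) ::ₘ Δ).countP (fun x => Associated α x) :=
        Nat.mul_pos hdpos hαG3
      omega

end Aux

/-- An atomic integral domain is a unique factorization domain if and only if it is
length-factorial. -/
theorem ufd_iff_lengthFactorial (D : Type*) [CommRing D] [IsDomain D]
    (hD : IsAtomicDomain D) :
    UniqueFactorizationMonoid D ↔ IsLengthFactorialDomain D := by
  constructor
  · intro hUFD s t hs ht hprod _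
    exact UniqueFactorizationMonoid.factors_unique hs ht (by rw [hprod]; exact Associated.refl _)
  · intro hLF
    apply UniqueFactorizationMonoid.of_existsUnique_irreducible_factors
    · intro a ha
      by_cases hu : IsUnit a
      · exact ⟨0, by simp, by simpa using (associated_one_iff_isUnit.2 hu).symm⟩
      · obtain ⟨s, hs, hprod⟩ := hD a ha hu
        exact ⟨s, hs, hprod ▸ Associated.refl _⟩
    · intro f g hf hg hfg
      obtain ⟨uu, huu⟩ := hfg
      by_cases hf0 : f = 0
      · subst hf0
        have hgu : IsUnit g.prod := by
          rw [Multiset.prod_zero, one_mul] at huu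
          exact huu ▸ uu.isUnit
        by_cases hg0 : g = 0
        · subst hg0; exact Multiset.Rel.zero
        · exact absurd hgu (atoms_prod_not_unit hg0 hg)
      · obtain ⟨f₁, hf₁atoms, hf₁prod, hf₁card, -, hrelf⟩ := absorb_unit uu.isUnit hf0 hf
        have hprod : f₁.prod = g.prod := by rw [hf₁prod, ← huu]; ring
        have hcard : Multiset.card f₁ = Multiset.card g :=
          half_factorial hD hLF f₁ g hf₁atoms hg hprod
        exact Multiset.Rel.trans _ hrelf (hLF f₁ g hf₁atoms hg hprod hcard)
end

section
/- Let M be an atomic commutative cancellative monoid that is length-factorial but not factorial. Then M has only finitely many nonprime irreducible elements up to associates; that is, M is a generalized Cohen–Kaplansky monoid. -/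
/-- A commutative cancellative monoid is *atomic* if every nonunit can be written as a
finite product of irreducible elements. -/
def IsAtomicMonoid (M : Type*) [CancelCommMonoid M] : Prop :=
  ∀ x : M, ¬IsUnit x → ∃ s : Multiset M, (∀ a ∈ s, Irreducible a) ∧ s.prod = x

/-- `M` is *length-factorial* if whenever `x₁ ⋯ xₙ = y₁ ⋯ yₙ` with all `xᵢ` and `yⱼ`
irreducible, then there is a permutation matching each `xᵢ` with an associated `yⱼ`. -/
def IsLengthFactorialMonoid (M : Type*) [CancelCommMonoid M] : Prop :=
  ∀ s t : Multiset M, (∀ a ∈ s, Irreducible a) → (∀ a ∈ t, Irreducible a) →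
    s.prod = t.prod → Multiset.card s = Multiset.card t →
    Multiset.Rel Associated s t

/-- `M` is *factorial* if it is atomic and any two irreducible factorizations of an
element have the same length and agree up to associates and a permutation. -/
def IsFactorialMonoid (M : Type*) [CancelCommMonoid M] : Prop :=
  IsAtomicMonoid M ∧
    ∀ s t : Multiset M, (∀ a ∈ s, Irreducible a) → (∀ a ∈ t, Irreducible a) →
      s.prod = t.prod → Multiset.card s = Multiset.card t ∧ Multiset.Rel Associated s t

/-- An element of a commutative monoid is *prime* if it is not a unit and whenever it
divides a product it divides one of the factors. -/
def IsPrimeElem {M : Type*} [CommMonoid M] (p : M) : Prop :=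
  ¬IsUnit p ∧ ∀ a b : M, p ∣ a * b → p ∣ a ∨ p ∣ b

section Aux

variable {M : Type*} [CancelCommMonoid M]

/-- There exist two irreducible factorizations of a common element whose lengths
differ by `k`. -/
def RelDiff (M : Type*) [CancelCommMonoid M] (k : ℕ) : Prop :=
  ∃ s t : Multiset M, (∀ a ∈ s, Irreducible a) ∧ (∀ a ∈ t, Irreducible a) ∧
    s.prod = t.prod ∧ Multiset.card t = Multiset.card s + k

lemma relDiff_zero : RelDiff M 0 :=
  ⟨0, 0, by simp, by simp, rfl, rfl⟩

lemma rel_exists_mem {R : M → M → Prop} {s t : Multiset M} (h : Multiset.Rel R s t) :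
    ∀ a ∈ s, ∃ b ∈ t, R a b := by
  induction h with
  | zero => intro a ha; simp at ha
  | @cons x y s' t' hxy h ih =>
      intro a ha
      rcases Multiset.mem_cons.mp ha with rfl | ha
      · exact ⟨y, Multiset.mem_cons_self _ _, hxy⟩
      · rcases ih a ha with ⟨b, hb, hR⟩
        exact ⟨b, Multiset.mem_cons_of_mem hb, hR⟩

lemma relDiff_sub {k₁ k₂ : ℕ} (h₁ : RelDiff M k₁) (h₂ : RelDiff M k₂) :
    RelDiff M (k₁ - k₂) := by
  rcases le_or_gt k₁ k₂ with h | h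
  · rw [Nat.sub_eq_zero_of_le h]; exact relDiff_zero
  obtain ⟨s₁, t₁, hs₁, ht₁, hp₁, hc₁⟩ := h₁
  obtain ⟨s₂, t₂, hs₂, ht₂, hp₂, hc₂⟩ := h₂
  refine ⟨s₁ + t₂, t₁ + s₂, ?_, ?_, ?_, ?_⟩
  · intro a ha; rcases Multiset.mem_add.mp ha with h' | h'
    · exact hs₁ a h'
    · exact ht₂ a h'
  · intro a ha; rcases Multiset.mem_add.mp ha with h' | h'
    · exact ht₁ a h'
    · exact hs₂ a h'
  · simp only [Multiset.prod_add]
    rw [hp₁, ← hp₂]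
  · simp only [Multiset.card_add]
    omega

lemma min_dvd_relDiff {d : ℕ} (hd : RelDiff M d) (hdpos : 0 < d)
    (hmin : ∀ j, j < d → 0 < j → ¬ RelDiff M j) :
    ∀ k, RelDiff M k → d ∣ k := by
  intro k
  induction k using Nat.strong_induction_on with
  | _ k ih =>
    intro hk
    rcases Nat.eq_zero_or_pos k with rfl | hkpos
    · exact dvd_zero d
    rcases lt_trichotomy k d with h | h | h
    · exact absurd hk (hmin k h hkpos)
    · exact h ▸ dvd_refl d
    · have hsub : RelDiff M (k - d) := relDiff_sub hk hd
      obtain ⟨q, hq⟩ := ih (k - d) (by omega) hsub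
      exact ⟨q + 1, by rw [Nat.mul_add, Nat.mul_one]; omega⟩

/-- Key lemma: if `c` is an atom not associated to any atom of a minimal-difference
relation `S₀, T₀`, then `c` divides a product of atoms only if it is associated to one
of them. -/
lemma atom_dvd_prod_assoc (hlf : IsLengthFactorialMonoid M) (hat : IsAtomicMonoid M)
    {d : ℕ} (hdpos : 0 < d) (hdvd : ∀ k, RelDiff M k → d ∣ k)
    {S₀ T₀ : Multiset M} (hS₀ : ∀ a ∈ S₀, Irreducible a) (hT₀ : ∀ a ∈ T₀, Irreducible a)
    (hp₀ : S₀.prod = T₀.prod) (hc₀ : Multiset.card T₀ = Multiset.card S₀ + d)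
    {c : M} (hc : Irreducible c) (hcn : ∀ x ∈ S₀ + T₀, ¬ Associated c x)
    {D : Multiset M} (hD : ∀ a ∈ D, Irreducible a) (hdv : c ∣ D.prod) :
    ∃ x ∈ D, Associated c x := by
  obtain ⟨w, hw⟩ := hdv
  by_cases hwu : IsUnit w
  · -- D.prod is associated to c, hence irreducible; so D is a singleton
    have hirr : Irreducible (D.prod) := by
      have : Associated c D.prod := ⟨hwu.unit, hw.symm⟩
      exact this.irreducible hc
    rcases D.empty_or_exists_mem with rfl | ⟨y, hy⟩
    · simp at hirr
    obtain ⟨D', rfl⟩ := Multiset.exists_cons_of_mem hy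
    rcases D'.empty_or_exists_mem with rfl | ⟨z, hz⟩
    · refine ⟨y, Multiset.mem_cons_self _ _, ?_⟩
      refine ⟨hwu.unit, ?_⟩
      simpa using hw.symm
    · exfalso
      have hyD : y ∈ y ::ₘ D' := Multiset.mem_cons_self _ _
      have := hirr.2 (a := y) (b := D'.prod) (by simp)
      rcases this with h | h
      · exact (hD y hyD).not_isUnit h
      · exact (hD z (Multiset.mem_cons_of_mem hz)).not_isUnit (isUnit_of_dvd_unit
          (Multiset.dvd_prod hz) h)
  · -- factor w into atoms
    obtain ⟨W, hW, hWp⟩ := hat w hwu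
    set C : Multiset M := c ::ₘ W with hCdef
    have hCatoms : ∀ a ∈ C, Irreducible a := by
      intro a ha
      rcases Multiset.mem_cons.mp ha with rfl | ha
      · exact hc
      · exact hW a ha
    have hCp : C.prod = D.prod := by
      rw [hCdef, Multiset.prod_cons, hWp, ← hw]
    -- padding argument
    have key : ∀ (r : ℕ) (P Q : Multiset M), (∀ a ∈ P, Irreducible a) →
        (∀ a ∈ Q, Irreducible a) → P.prod = Q.prod →
        Multiset.card C + r * Multiset.card P = Multiset.card D + r * Multiset.card Q →
        (∀ x ∈ Q, ¬ Associated c x) → ∃ x ∈ D, Associated c x := by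
      intro r P Q hP hQ hPQ hcard hQn
      have hrel := hlf (C + r • P) (D + r • Q) ?_ ?_ ?_ ?_
      · have hmem : c ∈ C + r • P := Multiset.mem_add.mpr (Or.inl (Multiset.mem_cons_self _ _))
        obtain ⟨b, hb, hab⟩ := rel_exists_mem hrel c hmem
        rcases Multiset.mem_add.mp hb with hb | hb
        · exact ⟨b, hb, hab⟩
        · exact absurd hab (hQn b (Multiset.mem_of_mem_nsmul hb))
      · intro a ha
        rcases Multiset.mem_add.mp ha with h | h
        · exact hCatoms a h
        · exact hP a (Multiset.mem_of_mem_nsmul h)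
      · intro a ha
        rcases Multiset.mem_add.mp ha with h | h
        · exact hD a h
        · exact hQ a (Multiset.mem_of_mem_nsmul h)
      · simp only [Multiset.prod_add, Multiset.prod_nsmul, hCp, hPQ]
      · simp only [Multiset.card_add, Multiset.card_nsmul]
        exact hcard
    rcases lt_trichotomy (Multiset.card C) (Multiset.card D) with h | h | h
    · -- pad C with copies of T₀ and D with copies of S₀
      have hk : RelDiff M (Multiset.card D - Multiset.card C) :=
        ⟨C, D, hCatoms, hD, hCp, by omega⟩
      obtain ⟨r, hr⟩ := hdvd _ hk
      refine key r T₀ S₀ hT₀ hS₀ hp₀.symm ?_ ?_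
      · have h2 : r * Multiset.card T₀ = r * Multiset.card S₀ + d * r := by
          rw [hc₀]; ring
        omega
      intro x hx
      exact hcn x (Multiset.mem_add.mpr (Or.inl hx))
    · -- equal lengths
      refine key 0 0 0 (by simp) (by simp) rfl (by omega) (by simp)
    · -- pad C with copies of S₀ and D with copies of T₀
      have hk : RelDiff M (Multiset.card C - Multiset.card D) :=
        ⟨D, C, hD, hCatoms, hCp.symm, by omega⟩
      obtain ⟨r, hr⟩ := hdvd _ hk
      refine key r S₀ T₀ hS₀ hT₀ hp₀ ?_ ?_
      · have h2 : r * Multiset.card T₀ = r * Multiset.card S₀ + d * r := by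
          rw [hc₀]; ring
        omega
      intro x hx
      exact hcn x (Multiset.mem_add.mpr (Or.inr hx))

end Aux

/-- An atomic, length-factorial, non-factorial commutative cancellative monoid has only
finitely many nonprime irreducible elements up to associates, i.e., it is a generalized
Cohen–Kaplansky monoid. -/
theorem generalized_CK_of_lengthFactorial_not_factorial (M : Type*) [CancelCommMonoid M]
    (hat : IsAtomicMonoid M) (hlf : IsLengthFactorialMonoid M)
    (hnf : ¬IsFactorialMonoid M) :
    ∃ F : Finset M, ∀ a : M, Irreducible a → ¬IsPrimeElem a → ∃ b ∈ F, Associated a b := by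
  classical
  -- extract an unbalanced relation
  have hΔ : ∃ k, 0 < k ∧ RelDiff M k := by
    have h : ¬ ∀ s t : Multiset M, (∀ a ∈ s, Irreducible a) → (∀ a ∈ t, Irreducible a) →
        s.prod = t.prod → Multiset.card s = Multiset.card t ∧ Multiset.Rel Associated s t :=
      fun h => hnf ⟨hat, h⟩
    push_neg at h
    obtain ⟨s, t, hs, ht, hp, hbad⟩ := h
    have hne : Multiset.card s ≠ Multiset.card t := by
      intro hcard
      exact hbad hcard (hlf s t hs ht hp hcard)
    rcases Nat.lt_or_ge (Multiset.card s) (Multiset.card t) with h' | h'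
    · exact ⟨Multiset.card t - Multiset.card s, by omega, s, t, hs, ht, hp, by omega⟩
    · exact ⟨Multiset.card s - Multiset.card t, by omega, t, s, ht, hs, hp.symm, by omega⟩
  -- minimal positive difference
  let d := Nat.find hΔ
  have hdspec : 0 < d ∧ RelDiff M d := Nat.find_spec hΔ
  have hmin : ∀ j, j < d → 0 < j → ¬ RelDiff M j := by
    intro j hj hjpos hR
    exact Nat.find_min hΔ hj ⟨hjpos, hR⟩
  have hdvd : ∀ k, RelDiff M k → d ∣ k :=
    min_dvd_relDiff hdspec.2 hdspec.1 hmin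
  obtain ⟨S₀, T₀, hS₀, hT₀, hp₀, hc₀⟩ := hdspec.2
  refine ⟨(S₀ + T₀).toFinset, ?_⟩
  intro a ha hnp
  by_contra hno
  push_neg at hno
  apply hnp
  have hcn : ∀ x ∈ S₀ + T₀, ¬ Associated a x := by
    intro x hx
    exact hno x (Multiset.mem_toFinset.mpr hx)
  refine ⟨ha.not_isUnit, ?_⟩
  intro u v huv
  by_cases hu : IsUnit u
  · right
    obtain ⟨e, he⟩ := hu.exists_left_inv
    have hv' : v = e * (u * v) := by rw [← mul_assoc, he, one_mul]
    rw [hv']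
    exact huv.mul_left e
  by_cases hv : IsUnit v
  · left
    obtain ⟨e, he⟩ := hv.exists_left_inv
    have hu' : u = e * (u * v) := by rw [mul_comm u v, ← mul_assoc, he, one_mul]
    rw [hu']
    exact huv.mul_left e
  obtain ⟨A, hA, hAp⟩ := hat u hu
  obtain ⟨B, hB, hBp⟩ := hat v hv
  have hABatoms : ∀ x ∈ A + B, Irreducible x := by
    intro x hx
    rcases Multiset.mem_add.mp hx with h | h
    · exact hA x h
    · exact hB x h
  have hdvAB : a ∣ (A + B).prod := by
    rw [Multiset.prod_add, hAp, hBp]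
    exact huv
  obtain ⟨x, hx, hax⟩ := atom_dvd_prod_assoc hlf hat hdspec.1 hdvd hS₀ hT₀ hp₀ hc₀ ha hcn
    hABatoms hdvAB
  rcases Multiset.mem_add.mp hx with h | h
  · left
    exact hax.dvd.trans (hAp ▸ Multiset.dvd_prod h)
  · right
    exact hax.dvd.trans (hBp ▸ Multiset.dvd_prod h)
end

section
/- Let D be an atomic integral domain that is not a unique factorization domain. Then there exist an integer n ≥ 2 and irreducible elements α₁, …, αₙ, β₁, …, βₙ of D such that α₁⋯αₙ = β₁⋯βₙ and no αᵢ is associated to any βⱼ. -/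
set_option linter.unusedSectionVars false
set_option maxHeartbeats 1000000

section AuxNondeg

variable {D : Type*} [CommRing D] [IsDomain D]

/-- number of elements of `s` associated to `z` -/
noncomputable def acnt (z : D) (s : Multiset D) : ℕ :=
  @Multiset.countP D (fun w => Associated z w) (Classical.decPred _) s

lemma acnt_zero (z : D) : acnt z 0 = 0 := rfl

lemma acnt_cons_of_assoc {z a : D} (s : Multiset D) (h : Associated z a) :
    acnt z (a ::ₘ s) = acnt z s + 1 := by
  unfold acnt
  rw [Multiset.countP_cons, if_pos h]

lemma acnt_cons_of_not_assoc {z a : D} (s : Multiset D) (h : ¬ Associated z a) :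
    acnt z (a ::ₘ s) = acnt z s := by
  unfold acnt
  rw [Multiset.countP_cons, if_neg h, Nat.add_zero]

lemma acnt_add (z : D) (s t : Multiset D) : acnt z (s + t) = acnt z s + acnt z t := by
  unfold acnt; rw [Multiset.countP_add]

lemma acnt_nsmul (z : D) (s : Multiset D) (n : ℕ) : acnt z (n • s) = n * acnt z s := by
  unfold acnt; rw [Multiset.countP_nsmul]

lemma acnt_eq_zero {z : D} {s : Multiset D} (h : ∀ w ∈ s, ¬ Associated z w) : acnt z s = 0 :=
  (@Multiset.countP_eq_zero D (fun w => Associated z w) (Classical.decPred _) s).mpr h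

lemma acnt_pos_of_mem {z w : D} {s : Multiset D} (hw : w ∈ s) (h : Associated z w) :
    0 < acnt z s :=
  @Multiset.countP_pos_of_mem D (fun w => Associated z w) (Classical.decPred _) s w hw h

lemma acnt_eq_card {z : D} {s : Multiset D} (h : ∀ w ∈ s, Associated z w) :
    acnt z s = Multiset.card s :=
  (@Multiset.countP_eq_card D (fun w => Associated z w) (Classical.decPred _) s).mpr h

lemma rel_acnt {s t : Multiset D} (h : Multiset.Rel Associated s t) (z : D) :
    acnt z s = acnt z t := by
  induction h with
  | zero => rfl
  | @cons a b as bs hab _ ih =>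
      by_cases hz : Associated z a
      · rw [acnt_cons_of_assoc _ hz, acnt_cons_of_assoc _ (hz.trans hab), ih]
      · rw [acnt_cons_of_not_assoc _ hz,
          acnt_cons_of_not_assoc _ (fun hz' => hz (hz'.trans hab.symm)), ih]

lemma prod_nonunit_of_irred {s : Multiset D} (hs : s ≠ 0) (hi : ∀ a ∈ s, Irreducible a) :
    ¬ IsUnit s.prod := by
  intro h
  obtain ⟨a, ha⟩ := Multiset.exists_mem_of_ne_zero hs
  exact (hi a ha).not_isUnit (isUnit_of_dvd_unit (Multiset.dvd_prod ha) h)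

lemma prod_ne_zero_of_irred {s : Multiset D} (hi : ∀ a ∈ s, Irreducible a) :
    s.prod ≠ 0 :=
  Multiset.prod_ne_zero (fun h0 => not_irreducible_zero (hi 0 h0))

/-- Cancel associated pairs in an equal-length non-associated pair of factorizations. -/
lemma cancel_to_nondegenerate :
    ∀ (n : ℕ) (f g : Multiset D), Multiset.card f = n → Multiset.card g = n →
      (∀ a ∈ f, Irreducible a) → (∀ a ∈ g, Irreducible a) → f.prod = g.prod →
      ¬ Multiset.Rel Associated f g →
      ∃ f' g' : Multiset D, 2 ≤ Multiset.card f' ∧ Multiset.card f' = Multiset.card g' ∧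
        (∀ a ∈ f', Irreducible a) ∧ (∀ a ∈ g', Irreducible a) ∧ f'.prod = g'.prod ∧
        ∀ a ∈ f', ∀ b ∈ g', ¬ Associated a b := by
  classical
  intro n
  induction n using Nat.strong_induction_on with
  | _ n ih =>
  intro f g hf hg hfi hgi hp hrel
  by_cases hnd : ∀ a ∈ f, ∀ b ∈ g, ¬ Associated a b
  · refine ⟨f, g, ?_, by rw [hf, hg], hfi, hgi, hp, hnd⟩
    rw [hf]
    by_contra hlt
    push_neg at hlt
    interval_cases n
    · apply hrel
      rw [Multiset.card_eq_zero.mp hf, Multiset.card_eq_zero.mp hg]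
      exact Multiset.Rel.zero
    · obtain ⟨a, rfl⟩ := Multiset.card_eq_one.mp hf
      obtain ⟨b, rfl⟩ := Multiset.card_eq_one.mp hg
      simp only [Multiset.prod_singleton] at hp
      exact hnd a (Multiset.mem_singleton_self a) b (Multiset.mem_singleton_self b)
        (hp ▸ Associated.refl a)
  · push_neg at hnd
    obtain ⟨a, ha, b, hb, hab⟩ := hnd
    obtain ⟨u, hu⟩ := hab
    have ha0 : a ≠ 0 := (hfi a ha).ne_zero
    have hfc : a ::ₘ f.erase a = f := Multiset.cons_erase ha
    have hgc : b ::ₘ g.erase b = g := Multiset.cons_erase hb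
    have hp₁ : (f.erase a).prod = ↑u * (g.erase b).prod := by
      have h1 : a * (f.erase a).prod = f.prod := by rw [← hfc, Multiset.prod_cons, hfc]
      have h2 : b * (g.erase b).prod = g.prod := by rw [← hgc, Multiset.prod_cons, hgc]
      apply mul_left_cancel₀ ha0
      rw [h1, hp, ← h2, ← hu]; ring
    rcases n with _ | m
    · rw [Multiset.card_eq_zero.mp hf] at ha
      exact absurd ha (Multiset.notMem_zero a)
    have hcf : Multiset.card (f.erase a) = m := by
      rw [Multiset.card_erase_of_mem ha, hf]; rfl
    have hcg : Multiset.card (g.erase b) = m := by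
      rw [Multiset.card_erase_of_mem hb, hg]; rfl
    rcases Nat.eq_zero_or_pos m with hm | hm
    · apply absurd hrel
      have hf0 : f.erase a = 0 := Multiset.card_eq_zero.mp (by omega)
      have hg0 : g.erase b = 0 := Multiset.card_eq_zero.mp (by omega)
      rw [not_not, ← hfc, ← hgc, hf0, hg0]
      exact Multiset.Rel.cons ⟨u, hu⟩ Multiset.Rel.zero
    obtain ⟨c, hc⟩ := Multiset.exists_mem_of_ne_zero (s := g.erase b)
      (fun h0 => by rw [h0] at hcg; simp at hcg; omega)
    have hcg' : c ::ₘ (g.erase b).erase c = g.erase b := Multiset.cons_erase hc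
    have hcirr : Irreducible c := hgi c (Multiset.mem_of_mem_erase hc)
    have hucirr : Irreducible (↑u * c) :=
      (show Associated c (↑u * c) from ⟨u, by ring⟩).irreducible hcirr
    set g₂ : Multiset D := (↑u * c) ::ₘ (g.erase b).erase c with hg₂
    have hg₂p : g₂.prod = ↑u * (g.erase b).prod := by
      rw [hg₂, Multiset.prod_cons, ← hcg', Multiset.prod_cons, hcg']
      ring
    have hg₂c : Multiset.card g₂ = m := by
      rw [hg₂, Multiset.card_cons, Multiset.card_erase_of_mem hc, hcg]
      simpa using Nat.succ_pred_eq_of_pos hm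
    have hg₂i : ∀ x ∈ g₂, Irreducible x := by
      intro x hx
      rcases Multiset.mem_cons.mp hx with rfl | hx
      · exact hucirr
      · exact hgi x (Multiset.mem_of_mem_erase (Multiset.mem_of_mem_erase hx))
    have hrel₂ : ¬ Multiset.Rel Associated (f.erase a) g₂ := by
      intro hR
      rw [hg₂] at hR
      obtain ⟨a', f₂, haa', hR₂, hf₂⟩ := Multiset.rel_cons_right.mp hR
      apply hrel
      rw [← hfc, ← hgc, ← hcg', hf₂]
      refine Multiset.Rel.cons ⟨u, hu⟩ (Multiset.Rel.cons ?_ hR₂)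
      exact haa'.trans ⟨u⁻¹, by rw [mul_comm (↑u : D) c, mul_assoc, Units.mul_inv, mul_one]⟩
    exact ih m (by omega) (f.erase a) g₂ hcf hg₂c
      (fun x hx => hfi x (Multiset.mem_of_mem_erase hx)) hg₂i
      (by rw [hp₁, hg₂p]) hrel₂

end AuxNondeg

section MainAux

variable {D : Type*} [CommRing D] [IsDomain D]

lemma comb_count
    (E : ∀ f g : Multiset D, (∀ a ∈ f, Irreducible a) → (∀ a ∈ g, Irreducible a) →
      f.prod = g.prod → Multiset.card f = Multiset.card g → Multiset.Rel Associated f g)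
    {G₁ H₁ G₂ H₂ : Multiset D} (e₁ e₂ : ℕ)
    (i₁ : ∀ a ∈ G₁, Irreducible a) (i₂ : ∀ a ∈ H₁, Irreducible a)
    (i₃ : ∀ a ∈ G₂, Irreducible a) (i₄ : ∀ a ∈ H₂, Irreducible a)
    (p₁ : G₁.prod = H₁.prod) (p₂ : G₂.prod = H₂.prod)
    (c₁ : Multiset.card G₁ = Multiset.card H₁ + e₁)
    (c₂ : Multiset.card G₂ = Multiset.card H₂ + e₂) (z : D) :
    e₂ * acnt z G₁ + e₁ * acnt z H₂ = e₂ * acnt z H₁ + e₁ * acnt z G₂ := by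
  have hirr₁ : ∀ a ∈ e₂ • G₁ + e₁ • H₂, Irreducible a := by
    intro a ha
    rcases Multiset.mem_add.mp ha with h | h
    · exact i₁ a (Multiset.mem_nsmul.mp h).2
    · exact i₄ a (Multiset.mem_nsmul.mp h).2
  have hirr₂ : ∀ a ∈ e₂ • H₁ + e₁ • G₂, Irreducible a := by
    intro a ha
    rcases Multiset.mem_add.mp ha with h | h
    · exact i₂ a (Multiset.mem_nsmul.mp h).2
    · exact i₃ a (Multiset.mem_nsmul.mp h).2
  have hprod : (e₂ • G₁ + e₁ • H₂).prod = (e₂ • H₁ + e₁ • G₂).prod := by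
    rw [Multiset.prod_add, Multiset.prod_add, Multiset.prod_nsmul, Multiset.prod_nsmul,
      Multiset.prod_nsmul, Multiset.prod_nsmul, p₁, p₂]
  have hcard : Multiset.card (e₂ • G₁ + e₁ • H₂) = Multiset.card (e₂ • H₁ + e₁ • G₂) := by
    rw [Multiset.card_add, Multiset.card_add, Multiset.card_nsmul, Multiset.card_nsmul,
      Multiset.card_nsmul, Multiset.card_nsmul, c₁, c₂]
    ring
  have h := rel_acnt (E _ _ hirr₁ hirr₂ hprod hcard) z
  rw [acnt_add, acnt_add, acnt_nsmul, acnt_nsmul, acnt_nsmul, acnt_nsmul] at h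
  exact h

lemma exists_irred_not_prime (hD : IsAtomicDomain D) (hnot : ¬UniqueFactorizationMonoid D) :
    ∃ π : D, Irreducible π ∧ ¬ Prime π := by
  by_contra h
  push_neg at h
  apply hnot
  refine UniqueFactorizationMonoid.of_existsUnique_irreducible_factors ?_ ?_
  · intro a ha
    by_cases hu : IsUnit a
    · exact ⟨0, by simp, by simpa using (associated_one_iff_isUnit.mpr hu).symm⟩
    · obtain ⟨s, hsi, hsp⟩ := hD a ha hu
      exact ⟨s, hsi, hsp ▸ Associated.refl _⟩
  · intro f g hf hg hfg
    exact prime_factors_unique (fun v hv => h v (hf v hv)) (fun v hv => h v (hg v hv)) hfg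

lemma exists_fin_fun : ∀ (n : ℕ) (s : Multiset D), Multiset.card s = n →
    ∃ γ : Fin n → D, (∀ i, γ i ∈ s) ∧ ∏ i, γ i = s.prod := by
  classical
  intro n
  induction n with
  | zero =>
      intro s hs
      refine ⟨Fin.elim0, fun i => i.elim0, ?_⟩
      rw [Multiset.card_eq_zero.mp hs]
      simp
  | succ m ih =>
      intro s hs
      obtain ⟨a, ha⟩ := Multiset.exists_mem_of_ne_zero
        (s := s) (by intro h0; rw [h0] at hs; simp at hs)
      obtain ⟨γ', hmem, hprod⟩ := ih (s.erase a)
        (by rw [Multiset.card_erase_of_mem ha, hs]; rfl)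
      refine ⟨Fin.cons a γ', ?_, ?_⟩
      · intro i
        refine Fin.cases ?_ ?_ i
        · simpa using ha
        · intro j
          simpa using Multiset.mem_of_mem_erase (hmem j)
      · rw [Fin.prod_cons, hprod, ← Multiset.prod_cons, Multiset.cons_erase ha]

end MainAux

section Main

variable {D : Type*} [CommRing D] [IsDomain D]

lemma E_false (hD : IsAtomicDomain D) (hnot : ¬UniqueFactorizationMonoid D) :
    ¬ (∀ f g : Multiset D, (∀ a ∈ f, Irreducible a) → (∀ a ∈ g, Irreducible a) →
      f.prod = g.prod → Multiset.card f = Multiset.card g → Multiset.Rel Associated f g) := by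
  classical
  intro E
  obtain ⟨π, hπ, hπnp⟩ := exists_irred_not_prime hD hnot
  have h3 : ¬ ∀ a b : D, π ∣ a * b → π ∣ a ∨ π ∣ b :=
    fun hall => hπnp ⟨hπ.ne_zero, hπ.not_isUnit, hall⟩
  push_neg at h3
  obtain ⟨a, b, hdvd, hna, hnb⟩ := h3
  have ha0 : a ≠ 0 := fun h => hna (h ▸ dvd_zero π)
  have hb0 : b ≠ 0 := fun h => hnb (h ▸ dvd_zero π)
  have hau : ¬ IsUnit a := by
    rintro ⟨v, rfl⟩
    exact hnb (dvd_trans hdvd ⟨↑v⁻¹, by rw [mul_right_comm, Units.mul_inv, one_mul]⟩)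
  have hbu : ¬ IsUnit b := by
    rintro ⟨v, rfl⟩
    refine hna (dvd_trans hdvd ⟨↑v⁻¹, ?_⟩)
    rw [mul_assoc, Units.mul_inv, mul_one]
  obtain ⟨A, hAi, hAp⟩ := hD a ha0 hau
  obtain ⟨B, hBi, hBp⟩ := hD b hb0 hbu
  have hU₀dvd : π ∣ (A + B).prod := by rw [Multiset.prod_add, hAp, hBp]; exact hdvd
  have hPex : ∃ n, ∃ V : Multiset D, V ≤ A + B ∧ Multiset.card V = n ∧ π ∣ V.prod :=
    ⟨_, A + B, le_refl _, rfl, hU₀dvd⟩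
  obtain ⟨U, hUle, hUcard, hUdvd⟩ := Nat.find_spec hPex
  have hUmin : ∀ V : Multiset D, V ≤ A + B → π ∣ V.prod → Nat.find hPex ≤ Multiset.card V := by
    intro V hVle hVdvd
    by_contra hlt
    push_neg at hlt
    exact Nat.find_min hPex hlt ⟨V, hVle, rfl, hVdvd⟩
  have hUirr : ∀ u ∈ U, Irreducible u := by
    intro u hu
    rcases Multiset.mem_add.mp (Multiset.mem_of_le hUle hu) with h | h
    · exact hAi u h
    · exact hBi u h
  have hUdvdab : ∀ u ∈ U, u ∣ a ∨ u ∣ b := by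
    intro u hu
    rcases Multiset.mem_add.mp (Multiset.mem_of_le hUle hu) with h | h
    · exact Or.inl (hAp ▸ Multiset.dvd_prod h)
    · exact Or.inr (hBp ▸ Multiset.dvd_prod h)
  have hUnassoc : ∀ u ∈ U, ¬ Associated π u := by
    intro u hu hassoc
    rcases hUdvdab u hu with h | h
    · exact hna (hassoc.dvd.trans h)
    · exact hnb (hassoc.dvd.trans h)
  have hUne : U ≠ 0 := by
    intro h0
    rw [h0] at hUdvd
    exact hπ.not_isUnit (isUnit_of_dvd_one (by simpa using hUdvd))
  have herase : ∀ u ∈ U, ¬ π ∣ (U.erase u).prod := by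
    intro u hu hdv
    have hle' : U.erase u ≤ A + B := le_trans (Multiset.erase_le u U) hUle
    have hmin := hUmin _ hle' hdv
    rw [Multiset.card_erase_of_mem hu, Nat.pred_eq_sub_one] at hmin
    have hpos : 0 < Multiset.card U := Multiset.card_pos.mpr hUne
    omega
  have hk2 : 2 ≤ Multiset.card U := by
    by_contra hlt
    push_neg at hlt
    have : Multiset.card U = 0 ∨ Multiset.card U = 1 := by omega
    rcases this with h | h
    · exact hUne (Multiset.card_eq_zero.mp h)
    · obtain ⟨u, rfl⟩ := Multiset.card_eq_one.mp h
      have hdu : π ∣ u := by simpa using hUdvd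
      exact hUnassoc u (Multiset.mem_singleton_self u)
        (hπ.associated_of_dvd (hUirr u (Multiset.mem_singleton_self u)) hdu)
  obtain ⟨c, hc⟩ := hUdvd
  have hUprod0 : U.prod ≠ 0 := prod_ne_zero_of_irred hUirr
  have hc0 : c ≠ 0 := fun h => hUprod0 (by rw [hc, h, mul_zero])
  obtain ⟨u₁, hu₁⟩ := Multiset.exists_mem_of_ne_zero hUne
  have hu₁irr := hUirr u₁ hu₁
  have hU1prod : u₁ * (U.erase u₁).prod = U.prod := by
    conv_rhs => rw [← Multiset.cons_erase hu₁, Multiset.prod_cons]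
  have herasene : U.erase u₁ ≠ 0 := by
    intro h0
    have hcard1 : Multiset.card U = 1 := by
      rw [← Multiset.cons_erase hu₁, h0]; simp
    omega
  have hcu : ¬ IsUnit c := by
    intro hcu
    have hassoc : Associated π U.prod := by
      rw [hc]; exact ⟨hcu.unit, by rw [IsUnit.unit_spec]⟩
    have hirr : Irreducible U.prod := hassoc.irreducible hπ
    rcases hirr.isUnit_or_isUnit hU1prod.symm with h | h
    · exact hu₁irr.not_isUnit h
    · exact prod_nonunit_of_irred herasene
        (fun w hw => hUirr w (Multiset.mem_of_mem_erase hw)) h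
  obtain ⟨C, hCi, hCp⟩ := hD c hc0 hcu
  have hCne : C ≠ 0 := by
    intro h0
    apply hcu
    rw [← hCp, h0]
    exact isUnit_one
  have hR₁prod : U.prod = (π ::ₘ C).prod := by rw [Multiset.prod_cons, hCp, hc]
  have hπCirr : ∀ w ∈ π ::ₘ C, Irreducible w := by
    intro w hw
    rcases Multiset.mem_cons.mp hw with rfl | hw
    · exact hπ
    · exact hCi w hw
  have hUnotdvdC : ∀ u ∈ U, ¬ u ∣ C.prod := by
    rintro u hu ⟨e, he⟩
    apply herase u hu
    have hu0 : u ≠ 0 := (hUirr u hu).ne_zero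
    have h1 : u * (U.erase u).prod = U.prod := by
      conv_rhs => rw [← Multiset.cons_erase hu, Multiset.prod_cons]
    have h2 : u * (U.erase u).prod = u * (π * e) := by
      rw [h1, hc, ← hCp, he]; ring
    exact ⟨e, mul_left_cancel₀ hu0 h2⟩
  have hcross : ∀ u ∈ U, ∀ w ∈ C, ¬ Associated u w := by
    intro u hu w hw hassoc
    exact hUnotdvdC u hu (hassoc.dvd.trans (Multiset.dvd_prod hw))
  set P' : D := (U.erase u₁).prod with hP'def
  set x : D := π + P' with hxdef
  set y : D := u₁ + C.prod with hydef
  have hkey : P' * u₁ = π * C.prod := by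
    rw [mul_comm, hU1prod, hc, hCp]
  have hxy : x * u₁ = π * y := by
    calc x * u₁ = π * u₁ + P' * u₁ := by rw [hxdef]; ring
    _ = π * u₁ + π * C.prod := by rw [hkey]
    _ = π * y := by rw [hydef]; ring
  have hx0 : x ≠ 0 := by
    intro h0
    apply herase u₁ hu₁
    have hP : P' = -π := eq_neg_of_add_eq_zero_right h0
    exact ⟨-1, show P' = π * -1 by rw [hP]; ring⟩
  have hxu : ¬ IsUnit x := by
    intro hxu
    have hinv : (↑hxu.unit⁻¹ : D) * x = 1 := hxu.val_inv_mul
    have hdu : π ∣ u₁ := by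
      refine ⟨↑hxu.unit⁻¹ * y, ?_⟩
      have h1 : u₁ = (↑hxu.unit⁻¹ : D) * x * u₁ := by rw [hinv, one_mul]
      rw [h1, mul_assoc, hxy]; ring
    exact hUnassoc u₁ hu₁ (hπ.associated_of_dvd hu₁irr hdu)
  have hy0 : y ≠ 0 := by
    intro h0
    apply hUnotdvdC u₁ hu₁
    have hP : C.prod = -u₁ := eq_neg_of_add_eq_zero_right h0
    exact ⟨-1, show C.prod = u₁ * -1 by rw [hP]; ring⟩
  have hyu : ¬ IsUnit y := by
    intro hyu
    have hinv : y * (↑hyu.unit⁻¹ : D) = 1 := hyu.mul_val_inv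
    have hdu : u₁ ∣ π := by
      refine ⟨x * ↑hyu.unit⁻¹, ?_⟩
      have h1 : π = π * y * ↑hyu.unit⁻¹ := by rw [mul_assoc, hinv, mul_one]
      rw [h1, ← hxy]; ring
    exact hUnassoc u₁ hu₁ ((hu₁irr.associated_of_dvd hπ hdu).symm)
  obtain ⟨X, hXi, hXp⟩ := hD x hx0 hxu
  obtain ⟨Y, hYi, hYp⟩ := hD y hy0 hyu
  have hR₂prod : (X + {u₁}).prod = (π ::ₘ Y).prod := by
    rw [Multiset.prod_add, Multiset.prod_singleton, Multiset.prod_cons, hXp, hYp, hxy]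
  have hXuirr : ∀ w ∈ X + {u₁}, Irreducible w := by
    intro w hw
    rcases Multiset.mem_add.mp hw with h | h
    · exact hXi w h
    · rw [Multiset.mem_singleton.mp h]; exact hu₁irr
  have hπYirr : ∀ w ∈ π ::ₘ Y, Irreducible w := by
    intro w hw
    rcases Multiset.mem_cons.mp hw with rfl | h
    · exact hπ
    · exact hYi w h
  have fa : ¬ π ∣ x := by
    intro h
    apply herase u₁ hu₁
    have h2 : π ∣ x - π := dvd_sub h (dvd_refl π)
    have h3 : x - π = P' := by rw [hxdef]; ring
    rwa [h3] at h2
  have fb : ∀ u ∈ U, ¬ Associated u₁ u → ¬ u ∣ x := by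
    intro u hu hne hdvdx
    have hmem : u ∈ U.erase u₁ := by
      rw [Multiset.mem_erase_of_ne (fun h : u = u₁ => hne (by rw [h]))]
      exact hu
    have h1 : u ∣ P' := Multiset.dvd_prod hmem
    have h2 : u ∣ x - P' := dvd_sub hdvdx h1
    have h3 : x - P' = π := by rw [hxdef]; ring
    rw [h3] at h2
    exact hUnassoc u hu (((hUirr u hu).associated_of_dvd hπ h2).symm)
  have fc : ¬ u₁ ∣ y := by
    intro h
    apply hUnotdvdC u₁ hu₁
    have h2 : u₁ ∣ y - u₁ := dvd_sub h (dvd_refl u₁)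
    have h3 : y - u₁ = C.prod := by rw [hydef]; ring
    rwa [h3] at h2
  have fd : ∀ w ∈ C, ¬ w ∣ y := by
    intro w hw hdvdy
    have h1 : w ∣ C.prod := Multiset.dvd_prod hw
    have h2 : w ∣ y - C.prod := dvd_sub hdvdy h1
    have h3 : y - C.prod = u₁ := by rw [hydef]; ring
    rw [h3] at h2
    exact hcross u₁ hu₁ w hw (((hCi w hw).associated_of_dvd hu₁irr h2).symm)
  have cu₁_πC : acnt u₁ (π ::ₘ C) = 0 := acnt_eq_zero (by
    intro w hw
    rcases Multiset.mem_cons.mp hw with rfl | hw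
    · exact fun h => hUnassoc u₁ hu₁ h.symm
    · exact fun h => hUnotdvdC u₁ hu₁ (h.dvd.trans (Multiset.dvd_prod hw)))
  have cu₁_πY : acnt u₁ (π ::ₘ Y) = 0 := acnt_eq_zero (by
    intro w hw
    rcases Multiset.mem_cons.mp hw with rfl | hw
    · exact fun h => hUnassoc u₁ hu₁ h.symm
    · exact fun h => fc (h.dvd.trans (hYp ▸ Multiset.dvd_prod hw)))
  have cu₁_U_pos : 0 < acnt u₁ U := acnt_pos_of_mem hu₁ (Associated.refl u₁)
  have cu₁_Xu_pos : 0 < acnt u₁ (X + {u₁}) :=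
    acnt_pos_of_mem (Multiset.mem_add.mpr (Or.inr (Multiset.mem_singleton_self u₁)))
      (Associated.refl u₁)
  have htpos : 0 < Multiset.card C := Multiset.card_pos.mpr hCne
  have hd₁ : Multiset.card U ≠ 1 + Multiset.card C := by
    intro heq
    have hrel := E U (π ::ₘ C) hUirr hπCirr hR₁prod (by rw [Multiset.card_cons]; omega)
    have h := rel_acnt hrel u₁
    rw [cu₁_πC] at h
    omega
  have hd₂ : Multiset.card X ≠ Multiset.card Y := by
    intro heq
    have hrel := E (X + {u₁}) (π ::ₘ Y) hXuirr hπYirr hR₂prod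
      (by rw [Multiset.card_add, Multiset.card_cons, Multiset.card_singleton]; omega)
    have h := rel_acnt hrel u₁
    rw [cu₁_πY] at h
    omega
  have downstream : ∀ e₁ e₂ : ℕ, 0 < e₁ → 0 < e₂ →
      (∀ z : D, e₂ * acnt z U + e₁ * acnt z (π ::ₘ Y)
        = e₂ * acnt z (π ::ₘ C) + e₁ * acnt z (X + {u₁})) → False := by
    intro e₁ e₂ he₁ he₂ HQ
    have S1 : ∀ u ∈ U, Associated u₁ u := by
      intro u hu
      by_contra hnu
      have h := HQ u
      have c2 : acnt u (π ::ₘ C) = 0 := acnt_eq_zero (by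
        intro w hw
        rcases Multiset.mem_cons.mp hw with rfl | hw
        · exact fun hz => hUnassoc u hu hz.symm
        · exact fun hz => hcross u hu w hw hz)
      have c3 : acnt u (X + {u₁}) = 0 := acnt_eq_zero (by
        intro w hw
        rcases Multiset.mem_add.mp hw with hw | hw
        · exact fun hz => fb u hu hnu (hz.dvd.trans (hXp ▸ Multiset.dvd_prod hw))
        · rw [Multiset.mem_singleton.mp hw]
          exact fun hz => hnu hz.symm)
      have c1 : 0 < acnt u U := acnt_pos_of_mem hu (Associated.refl u)
      rw [c2, c3] at h
      simp only [mul_zero, add_zero] at h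
      have : 0 < e₂ * acnt u U := Nat.mul_pos he₂ c1
      omega
    have S2 : ∀ w ∈ C, Associated π w := by
      intro w hw
      by_contra hnw
      have h := HQ w
      have c1 : acnt w U = 0 := acnt_eq_zero (fun v hv hz => hcross v hv w hw hz.symm)
      have c2 : acnt w (π ::ₘ Y) = 0 := acnt_eq_zero (by
        intro v hv
        rcases Multiset.mem_cons.mp hv with rfl | hv
        · exact fun hz => hnw hz.symm
        · exact fun hz => fd w hw (hz.dvd.trans (hYp ▸ Multiset.dvd_prod hv)))
      have c3 : 0 < acnt w (π ::ₘ C) :=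
        acnt_pos_of_mem (Multiset.mem_cons_of_mem hw) (Associated.refl w)
      rw [c1, c2] at h
      simp only [mul_zero, add_zero] at h
      have : 0 < e₂ * acnt w (π ::ₘ C) := Nat.mul_pos he₂ c3
      omega
    have hπdvdC : π ∣ C.prod := by
      obtain ⟨w, hw⟩ := Multiset.exists_mem_of_ne_zero hCne
      exact (S2 w hw).dvd.trans (Multiset.dvd_prod hw)
    have cπY : acnt π Y = 0 := acnt_eq_zero (by
      intro v hv hz
      have h1 : π ∣ y := hz.dvd.trans (hYp ▸ Multiset.dvd_prod hv)
      have h2 : π ∣ y - C.prod := dvd_sub h1 hπdvdC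
      have h3 : y - C.prod = u₁ := by rw [hydef]; ring
      rw [h3] at h2
      exact hUnassoc u₁ hu₁ (hπ.associated_of_dvd hu₁irr h2))
    have hπeq := HQ π
    have d1 : acnt π U = 0 := acnt_eq_zero (fun v hv hz => hUnassoc v hv hz)
    have d2 : acnt π (π ::ₘ Y) = 1 := by
      rw [acnt_cons_of_assoc _ (Associated.refl π), cπY]
    have d3 : acnt π (π ::ₘ C) = Multiset.card C + 1 := by
      rw [acnt_cons_of_assoc _ (Associated.refl π), acnt_eq_card S2]
    have d4 : acnt π (X + {u₁}) = 0 := by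
      rw [acnt_add]
      have e1 : acnt π X = 0 := acnt_eq_zero
        (fun v hv hz => fa (hz.dvd.trans (hXp ▸ Multiset.dvd_prod hv)))
      have e2 : acnt π ({u₁} : Multiset D) = 0 := acnt_eq_zero (by
        intro v hv
        rw [Multiset.mem_singleton.mp hv]
        exact fun hz => hUnassoc u₁ hu₁ hz)
      rw [e1, e2]
    rw [d1, d2, d3, d4] at hπeq
    simp only [mul_zero, mul_one, zero_add, add_zero] at hπeq
    have hu₁eq := HQ u₁
    have f1 : acnt u₁ U = Multiset.card U := acnt_eq_card S1
    have f4 : acnt u₁ (X + {u₁}) = 1 := by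
      rw [acnt_add]
      have g1 : acnt u₁ X = 0 := acnt_eq_zero (by
        intro v hv hz
        have h1 : u₁ ∣ x := hz.dvd.trans (hXp ▸ Multiset.dvd_prod hv)
        obtain ⟨u₂, hu₂⟩ := Multiset.exists_mem_of_ne_zero herasene
        have h2 : u₁ ∣ P' :=
          ((S1 u₂ (Multiset.mem_of_mem_erase hu₂)).dvd).trans (Multiset.dvd_prod hu₂)
        have h3 : u₁ ∣ x - P' := dvd_sub h1 h2
        have h4 : x - P' = π := by rw [hxdef]; ring
        rw [h4] at h3
        exact hUnassoc u₁ hu₁ ((hu₁irr.associated_of_dvd hπ h3).symm))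
      have g2 : acnt u₁ ({u₁} : Multiset D) = 1 := by
        rw [show ({u₁} : Multiset D) = u₁ ::ₘ 0 from rfl,
          acnt_cons_of_assoc _ (Associated.refl u₁), acnt_zero]
      rw [g1, g2]
    rw [f1, cu₁_πY, cu₁_πC, f4] at hu₁eq
    simp only [mul_zero, mul_one, zero_add, add_zero] at hu₁eq
    -- hπeq : e₁ = e₂ * (Multiset.card C + 1), hu₁eq : e₂ * Multiset.card U = e₁
    apply hd₁
    have hfin : e₂ * Multiset.card U = e₂ * (1 + Multiset.card C) := by
      rw [hu₁eq, hπeq]; ring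
    exact Nat.eq_of_mul_eq_mul_left he₂ hfin
  rcases lt_or_gt_of_ne hd₁ with hk | hk
  · rcases lt_or_gt_of_ne hd₂ with hx2 | hx2
    · -- card U < 1 + card C, card X < card Y : aligned (case B)
      refine downstream (1 + Multiset.card C - Multiset.card U)
        (Multiset.card Y - Multiset.card X) (by omega) (by omega) (fun z => ?_)
      exact (comb_count E _ _ hπCirr hUirr hπYirr hXuirr hR₁prod.symm hR₂prod.symm
        (by rw [Multiset.card_cons]; omega)
        (by rw [Multiset.card_add, Multiset.card_cons, Multiset.card_singleton]; omega) z).symm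
    · -- card U < 1 + card C, card X > card Y : misaligned
      have HQ := comb_count E (1 + Multiset.card C - Multiset.card U)
        (Multiset.card X - Multiset.card Y) hπCirr hUirr hXuirr hπYirr
        hR₁prod.symm hR₂prod
        (by rw [Multiset.card_cons]; omega)
        (by rw [Multiset.card_add, Multiset.card_cons, Multiset.card_singleton]; omega) u₁
      rw [cu₁_πC, cu₁_πY] at HQ
      simp only [mul_zero, add_zero, zero_add] at HQ
      have hpos : 0 < (Multiset.card X - Multiset.card Y) * acnt u₁ U +
          (1 + Multiset.card C - Multiset.card U) * acnt u₁ (X + {u₁}) :=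
        Nat.add_pos_left (Nat.mul_pos (by omega) cu₁_U_pos) _
      exact hpos.ne' HQ.symm
  · rcases lt_or_gt_of_ne hd₂ with hx2 | hx2
    · -- card U > 1 + card C, card X < card Y : misaligned
      have HQ := comb_count E (Multiset.card U - (1 + Multiset.card C))
        (Multiset.card Y - Multiset.card X) hUirr hπCirr hπYirr hXuirr
        hR₁prod hR₂prod.symm
        (by rw [Multiset.card_cons]; omega)
        (by rw [Multiset.card_add, Multiset.card_cons, Multiset.card_singleton]; omega) u₁
      rw [cu₁_πC, cu₁_πY] at HQ
      simp only [mul_zero, add_zero, zero_add] at HQ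
      have hpos : 0 < (Multiset.card Y - Multiset.card X) * acnt u₁ U +
          (Multiset.card U - (1 + Multiset.card C)) * acnt u₁ (X + {u₁}) :=
        Nat.add_pos_left (Nat.mul_pos (by omega) cu₁_U_pos) _
      exact hpos.ne' HQ
    · -- card U > 1 + card C, card X > card Y : aligned (case A)
      refine downstream (Multiset.card U - (1 + Multiset.card C))
        (Multiset.card X - Multiset.card Y) (by omega) (by omega) (fun z => ?_)
      exact comb_count E _ _ hUirr hπCirr hXuirr hπYirr hR₁prod hR₂prod
        (by rw [Multiset.card_cons]; omega)
        (by rw [Multiset.card_add, Multiset.card_cons, Multiset.card_singleton]; omega) z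



end Main

/-- In an atomic integral domain that is not a UFD, there is a nondegenerate irreducible
factorization of equal length: `α₁ ⋯ αₙ = β₁ ⋯ βₙ` with `n ≥ 2` and no `αᵢ` associated
to any `βⱼ`. -/
theorem exists_nondegenerate_equal_length_factorization (D : Type*) [CommRing D] [IsDomain D]
    (hD : IsAtomicDomain D) (hnot : ¬UniqueFactorizationMonoid D) :
    ∃ n : ℕ, 2 ≤ n ∧ ∃ α β : Fin n → D,
      (∀ i, Irreducible (α i)) ∧ (∀ j, Irreducible (β j)) ∧
      (∏ i, α i) = (∏ j, β j) ∧ (∀ i j, ¬Associated (α i) (β j)) := by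
  classical
  have hE := E_false hD hnot
  push_neg at hE
  obtain ⟨f, g, hfi, hgi, hp, hcard, hnrel⟩ := hE
  obtain ⟨f', g', h2, hc', hfi', hgi', hp', hnd⟩ :=
    cancel_to_nondegenerate (Multiset.card f) f g rfl hcard.symm hfi hgi hp hnrel
  obtain ⟨α, hαmem, hαprod⟩ := exists_fin_fun (Multiset.card f') f' rfl
  obtain ⟨β, hβmem, hβprod⟩ := exists_fin_fun (Multiset.card f') g' hc'.symm
  exact ⟨Multiset.card f', h2, α, β, fun i => hfi' _ (hαmem i), fun j => hgi' _ (hβmem j),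
    by rw [hαprod, hβprod, hp'], fun i j => hnd _ (hαmem i) _ (hβmem j)⟩
end

section
/- Let M be a reduced atomic commutative cancellative monoid (its only unit is the identity). Then M is length-factorial and not factorial if and only if there exist nonempty finite multisets A and B of irreducible elements of M such that the product of A equals the product of B, no element of A equals an element of B, the cardinality of A is strictly greater than the cardinality of B, and for every pair of nonempty finite multisets C and D of irreducible elements with product of C equal to product of D and no element of C equal to an element of D, there exists n ≥ 1 with {C, D} = {n•A, n•B} as an unordered pair (where n•A denotes the multiset sum of n copies of A). -/
/-- A monoid is *reduced* if its only unit is the identity. -/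
def IsReducedMonoid (M : Type*) [CancelCommMonoid M] : Prop :=
  ∀ u : M, IsUnit u → u = 1

/-- A reduced monoid is *length-factorial* if any two irreducible factorizations of the
same element having the same length agree up to permutation (i.e., as multisets). -/
def IsLengthFactorialRed (M : Type*) [CancelCommMonoid M] : Prop :=
  ∀ s t : Multiset M, (∀ a ∈ s, Irreducible a) → (∀ a ∈ t, Irreducible a) →
    s.prod = t.prod → Multiset.card s = Multiset.card t → s = t

/-- A reduced monoid is *factorial* if it is atomic and any two irreducible
factorizations of an element agree up to permutation (i.e., as multisets). -/
def IsFactorialRed (M : Type*) [CancelCommMonoid M] : Prop :=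
  IsAtomicMonoid M ∧
    ∀ s t : Multiset M, (∀ a ∈ s, Irreducible a) → (∀ a ∈ t, Irreducible a) →
      s.prod = t.prod → s = t

namespace MasterAux

variable {M : Type*} [CancelCommMonoid M]

/-- A nondegenerate pair of irreducible factorizations. -/
def Nondeg (C D : Multiset M) : Prop :=
  C ≠ 0 ∧ D ≠ 0 ∧ (∀ c ∈ C, Irreducible c) ∧ (∀ d ∈ D, Irreducible d) ∧
    C.prod = D.prod ∧ ∀ c ∈ C, c ∉ D

lemma Nondeg.symm {C D : Multiset M} (h : Nondeg C D) : Nondeg D C := by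
  obtain ⟨h1, h2, h3, h4, h5, h6⟩ := h
  exact ⟨h2, h1, h4, h3, h5.symm, fun d hd hc => h6 d hc hd⟩

lemma prod_ne_one {s : Multiset M} (hs : s ≠ 0) (h : ∀ a ∈ s, Irreducible a) :
    s.prod ≠ 1 := by
  obtain ⟨a, ha⟩ := Multiset.exists_mem_of_ne_zero hs
  intro hp
  exact (h a ha).not_isUnit (isUnit_of_dvd_one (hp ▸ Multiset.dvd_prod ha))

variable [DecidableEq M]

lemma reduce_prod {s t : Multiset M} (h : s.prod = t.prod) :
    (s - s ∩ t).prod = (t - s ∩ t).prod := by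
  have hs : s - s ∩ t + s ∩ t = s := tsub_add_cancel_of_le ((Multiset.inter_le_left : s ∩ t ≤ s))
  have ht : t - s ∩ t + s ∩ t = t := tsub_add_cancel_of_le ((Multiset.inter_le_right : s ∩ t ≤ t))
  have h2 : (s - s ∩ t + s ∩ t).prod = (t - s ∩ t + s ∩ t).prod := by rw [hs, ht, h]
  rw [Multiset.prod_add, Multiset.prod_add] at h2
  exact mul_right_cancel h2

lemma reduce_disj (s t : Multiset M) : ∀ x ∈ s - s ∩ t, x ∉ t - s ∩ t := by
  intro x hx hx'
  rw [← Multiset.count_pos, Multiset.count_sub, Multiset.count_inter] at hx hx'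
  omega

lemma key_count (cA cB cC cD qa qb : ℕ) (h : cC + qb = cD + qa)
    (h1 : cC = 0 ∨ cD = 0) (h2 : cA = 0 ∨ cB = 0)
    (h3 : cA = 0 → qa = 0) (h4 : cB = 0 → qb = 0) : cC = qa := by
  omega

lemma cards_ne (LF : IsLengthFactorialRed M) {C D : Multiset M} (h : Nondeg C D) :
    Multiset.card C ≠ Multiset.card D := by
  intro hc
  obtain ⟨hC0, hD0, hCi, hDi, hp, hd⟩ := h
  obtain ⟨x, hx⟩ := Multiset.exists_mem_of_ne_zero hC0
  exact hd x hx ((LF C D hCi hDi hp hc) ▸ hx)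

lemma combine (LF : IsLengthFactorialRed M) {A B C D : Multiset M}
    (hAB : Nondeg A B) (hCD : Nondeg C D) (q : ℕ)
    (hcard : Multiset.card C + q * Multiset.card B
      = Multiset.card D + q * Multiset.card A) :
    C = q • A ∧ D = q • B := by
  obtain ⟨hA0, hB0, hAi, hBi, hABp, hABd⟩ := hAB
  obtain ⟨hC0, hD0, hCi, hDi, hCDp, hCDd⟩ := hCD
  have hST : C + q • B = D + q • A := by
    apply LF
    · intro a ha
      rcases Multiset.mem_add.1 ha with h | h
      · exact hCi a h
      · exact hBi a (Multiset.mem_nsmul.1 h).2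
    · intro a ha
      rcases Multiset.mem_add.1 ha with h | h
      · exact hDi a h
      · exact hAi a (Multiset.mem_nsmul.1 h).2
    · rw [Multiset.prod_add, Multiset.prod_add, Multiset.prod_nsmul, Multiset.prod_nsmul,
        hCDp, hABp]
    · simp only [Multiset.card_add, Multiset.card_nsmul]
      exact hcard
  have hcnt : ∀ x, C.count x + q * B.count x = D.count x + q * A.count x := by
    intro x
    have h := congrArg (Multiset.count x) hST
    simpa [Multiset.count_nsmul] using h
  have hd1 : ∀ x, C.count x = 0 ∨ D.count x = 0 := by
    intro x
    by_contra h
    push_neg at h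
    exact hCDd x (Multiset.count_pos.1 (Nat.pos_of_ne_zero h.1))
      (Multiset.count_pos.1 (Nat.pos_of_ne_zero h.2))
  have hd2 : ∀ x, A.count x = 0 ∨ B.count x = 0 := by
    intro x
    by_contra h
    push_neg at h
    exact hABd x (Multiset.count_pos.1 (Nat.pos_of_ne_zero h.1))
      (Multiset.count_pos.1 (Nat.pos_of_ne_zero h.2))
  constructor
  · ext x
    rw [Multiset.count_nsmul]
    exact key_count (A.count x) (B.count x) (C.count x) (D.count x) _ _ (hcnt x)
      (hd1 x) (hd2 x) (fun h => by rw [h, Nat.mul_zero]) (fun h => by rw [h, Nat.mul_zero])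
  · ext x
    rw [Multiset.count_nsmul]
    exact key_count (B.count x) (A.count x) (D.count x) (C.count x) _ _ (hcnt x).symm
      (hd1 x).symm (hd2 x).symm (fun h => by rw [h, Nat.mul_zero])
      (fun h => by rw [h, Nat.mul_zero])

lemma master_step (LF : IsLengthFactorialRed M) {A B : Multiset M} {e : ℕ}
    (he : 0 < e) (hAB : Nondeg A B) (hcardA : Multiset.card A = Multiset.card B + e)
    (hmin : ∀ r, 0 < r → r < e → ∀ C D : Multiset M, Nondeg C D →
        Multiset.card C ≠ Multiset.card D + r)
    {C D : Multiset M} (hCD : Nondeg C D)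
    (hlt : Multiset.card D < Multiset.card C) :
    ∃ q, 1 ≤ q ∧ C = q • A ∧ D = q • B := by
  set f := Multiset.card C - Multiset.card D with hfdef
  have hf1 : Multiset.card C = Multiset.card D + f := by omega
  have hfpos : 0 < f := by omega
  have hef : e ≤ f := by
    by_contra h
    push_neg at h
    exact hmin f hfpos h C D hCD hf1
  rcases Nat.eq_zero_or_pos (f % e) with h0 | hpos
  · obtain ⟨q, hq⟩ := Nat.dvd_of_mod_eq_zero h0
    have hq1 : 1 ≤ q := by
      rcases Nat.eq_zero_or_pos q with h | h
      · subst h; simp at hq; omega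
      · exact h
    have h1 : q * Multiset.card A = q * Multiset.card B + q * e := by
      rw [hcardA, Nat.mul_add]
    have h2 : q * e = f := by rw [Nat.mul_comm, ← hq]
    have hcard : Multiset.card C + q * Multiset.card B
        = Multiset.card D + q * Multiset.card A := by
      rw [h1, h2]
      generalize q * Multiset.card B = u
      omega
    obtain ⟨hC, hD⟩ := combine LF hAB hCD q hcard
    exact ⟨q, hq1, hC, hD⟩
  · exfalso
    set q := f / e with hqdef
    set r := f % e with hrdef
    have hre : r < e := Nat.mod_lt _ he
    have hqe : q * e + r = f := by
      rw [hqdef, hrdef, Nat.mul_comm]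
      exact Nat.div_add_mod f e
    set S := C + q • B with hSdef
    set T := D + q • A with hTdef
    have hprod : S.prod = T.prod := by
      rw [hSdef, hTdef, Multiset.prod_add, Multiset.prod_add, Multiset.prod_nsmul,
        Multiset.prod_nsmul, hCD.2.2.2.2.1, hAB.2.2.2.2.1]
    have hSi : ∀ a ∈ S, Irreducible a := by
      intro a ha
      rcases Multiset.mem_add.1 ha with h | h
      · exact hCD.2.2.1 a h
      · exact hAB.2.2.2.1 a (Multiset.mem_nsmul.1 h).2
    have hTi : ∀ a ∈ T, Irreducible a := by
      intro a ha
      rcases Multiset.mem_add.1 ha with h | h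
      · exact hCD.2.2.2.1 a h
      · exact hAB.2.2.1 a (Multiset.mem_nsmul.1 h).2
    have hT : Multiset.card T = Multiset.card D + q * Multiset.card B + q * e := by
      simp only [hTdef, Multiset.card_add, Multiset.card_nsmul, hcardA]
      ring
    have hS : Multiset.card S = Multiset.card C + q * Multiset.card B := by
      simp only [hSdef, Multiset.card_add, Multiset.card_nsmul]
    have hcardST : Multiset.card S = Multiset.card T + r := by
      rw [hS, hT]
      generalize q * Multiset.card B = u at *
      generalize q * e = v at *
      omega
    set S0 := S - S ∩ T with hS0def
    set T0 := T - S ∩ T with hT0def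
    have hprod0 : S0.prod = T0.prod := reduce_prod hprod
    have hdisj0 : ∀ x ∈ S0, x ∉ T0 := reduce_disj S T
    have hS0i : ∀ a ∈ S0, Irreducible a :=
      fun a ha => hSi a (Multiset.mem_of_le tsub_le_self ha)
    have hT0i : ∀ a ∈ T0, Irreducible a :=
      fun a ha => hTi a (Multiset.mem_of_le tsub_le_self ha)
    have hcards0 : Multiset.card S0 = Multiset.card T0 + r := by
      rw [hS0def, hT0def, Multiset.card_sub ((Multiset.inter_le_left : S ∩ T ≤ S)),
        Multiset.card_sub ((Multiset.inter_le_right : S ∩ T ≤ T))]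
      have h1 := Multiset.card_le_card ((Multiset.inter_le_left : S ∩ T ≤ S))
      have h2 := Multiset.card_le_card ((Multiset.inter_le_right : S ∩ T ≤ T))
      omega
    have hS0ne : S0 ≠ 0 := by
      intro h
      rw [h] at hcards0
      simp at hcards0
      omega
    have hT0ne : T0 ≠ 0 := by
      intro h
      apply prod_ne_one hS0ne hS0i
      rw [hprod0, h, Multiset.prod_zero]
    exact hmin r hpos hre S0 T0 ⟨hS0ne, hT0ne, hS0i, hT0i, hprod0, hdisj0⟩ hcards0

end MasterAux

/-- A reduced atomic commutative cancellative monoid is length-factorial and not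
factorial if and only if it admits a *master factorization*: a nondegenerate pair of
irreducible factorizations `A`, `B` of distinct lengths such that every nondegenerate
pair of irreducible factorizations is, up to order, of the form `(n • A, n • B)`. -/
theorem lengthFactorial_not_factorial_iff_master_factorization (M : Type*)
    [CancelCommMonoid M] (hred : IsReducedMonoid M) (hat : IsAtomicMonoid M) :
    (IsLengthFactorialRed M ∧ ¬IsFactorialRed M) ↔
      ∃ A B : Multiset M, A ≠ 0 ∧ B ≠ 0 ∧
        (∀ a ∈ A, Irreducible a) ∧ (∀ b ∈ B, Irreducible b) ∧
        A.prod = B.prod ∧ (∀ a ∈ A, a ∉ B) ∧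
        Multiset.card B < Multiset.card A ∧
        ∀ C D : Multiset M, C ≠ 0 → D ≠ 0 →
          (∀ c ∈ C, Irreducible c) → (∀ d ∈ D, Irreducible d) →
          C.prod = D.prod → (∀ c ∈ C, c ∉ D) →
          ∃ n : ℕ, 1 ≤ n ∧ ((C = n • A ∧ D = n • B) ∨ (C = n • B ∧ D = n • A)) := by
  classical
  constructor
  · rintro ⟨LF, hnf⟩
    have hex : ∃ e, 0 < e ∧ ∃ A B : Multiset M, MasterAux.Nondeg A B ∧
        Multiset.card A = Multiset.card B + e := by
      rw [IsFactorialRed] at hnf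
      push_neg at hnf
      obtain ⟨s, t, hsi, hti, hp, hst⟩ := hnf hat
      set A0 := s - s ∩ t with hA0def
      set B0 := t - s ∩ t with hB0def
      have hprod0 : A0.prod = B0.prod := MasterAux.reduce_prod hp
      have hdisj : ∀ x ∈ A0, x ∉ B0 := MasterAux.reduce_disj s t
      have hA0i : ∀ a ∈ A0, Irreducible a :=
        fun a ha => hsi a (Multiset.mem_of_le tsub_le_self ha)
      have hB0i : ∀ a ∈ B0, Irreducible a :=
        fun a ha => hti a (Multiset.mem_of_le tsub_le_self ha)
      have himp1 : A0 = 0 → B0 = 0 := by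
        intro h
        by_contra h'
        exact MasterAux.prod_ne_one h' hB0i (by rw [← hprod0, h, Multiset.prod_zero])
      have himp2 : B0 = 0 → A0 = 0 := by
        intro h
        by_contra h'
        exact MasterAux.prod_ne_one h' hA0i (by rw [hprod0, h, Multiset.prod_zero])
      have hne : ¬(A0 = 0) := by
        intro h1
        have h2 := himp1 h1
        apply hst
        have hs' : s = s ∩ t :=
          le_antisymm (tsub_eq_zero_iff_le.1 h1) ((Multiset.inter_le_left : s ∩ t ≤ s))
        have ht' : t = s ∩ t :=
          le_antisymm (tsub_eq_zero_iff_le.1 h2) ((Multiset.inter_le_right : s ∩ t ≤ t))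
        exact hs'.trans ht'.symm
      have hne' : ¬(B0 = 0) := fun h => hne (himp2 h)
      have hnd : MasterAux.Nondeg A0 B0 := ⟨hne, hne', hA0i, hB0i, hprod0, hdisj⟩
      have hcne := MasterAux.cards_ne LF hnd
      rcases Nat.lt_or_ge (Multiset.card B0) (Multiset.card A0) with h | h
      · exact ⟨Multiset.card A0 - Multiset.card B0, by omega, A0, B0, hnd, by omega⟩
      · exact ⟨Multiset.card B0 - Multiset.card A0, by omega, B0, A0, hnd.symm, by omega⟩
    obtain ⟨he, A, B, hAB, hcardA⟩ := Nat.find_spec hex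
    have hmin : ∀ r, 0 < r → r < Nat.find hex → ∀ C D : Multiset M, MasterAux.Nondeg C D →
        Multiset.card C ≠ Multiset.card D + r := by
      intro r hr hre C D hCD hc
      exact Nat.find_min hex hre ⟨hr, C, D, hCD, hc⟩
    obtain ⟨hA0, hB0, hAi, hBi, hABp, hABd⟩ := id hAB
    refine ⟨A, B, hA0, hB0, hAi, hBi, hABp, hABd, by omega, ?_⟩
    intro C D hC0 hD0 hCi hDi hp hd
    have hCD : MasterAux.Nondeg C D := ⟨hC0, hD0, hCi, hDi, hp, hd⟩
    have hcne := MasterAux.cards_ne LF hCD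
    rcases Nat.lt_or_ge (Multiset.card D) (Multiset.card C) with h | h
    · obtain ⟨q, hq1, hC, hD⟩ := MasterAux.master_step LF he hAB hcardA hmin hCD h
      exact ⟨q, hq1, Or.inl ⟨hC, hD⟩⟩
    · obtain ⟨q, hq1, hD', hC'⟩ :=
        MasterAux.master_step LF he hAB hcardA hmin hCD.symm (by omega)
      exact ⟨q, hq1, Or.inr ⟨hC', hD'⟩⟩
  · rintro ⟨A, B, hA0, hB0, hAi, hBi, hABp, hABd, hcard, hmaster⟩
    constructor
    · intro s t hsi hti hp hc
      set C := s - s ∩ t with hCdef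
      set D := t - s ∩ t with hDdef
      have hprod0 : C.prod = D.prod := MasterAux.reduce_prod hp
      have hdisj : ∀ x ∈ C, x ∉ D := MasterAux.reduce_disj s t
      have hCi : ∀ a ∈ C, Irreducible a :=
        fun a ha => hsi a (Multiset.mem_of_le tsub_le_self ha)
      have hDi : ∀ a ∈ D, Irreducible a :=
        fun a ha => hti a (Multiset.mem_of_le tsub_le_self ha)
      have hcc : Multiset.card C = Multiset.card D := by
        rw [hCdef, hDdef, Multiset.card_sub ((Multiset.inter_le_left : s ∩ t ≤ s)),
          Multiset.card_sub ((Multiset.inter_le_right : s ∩ t ≤ t))]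
        have h1 := Multiset.card_le_card ((Multiset.inter_le_left : s ∩ t ≤ s))
        have h2 := Multiset.card_le_card ((Multiset.inter_le_right : s ∩ t ≤ t))
        omega
      by_cases hC : C = 0
      · have hD : D = 0 := by
          have h : Multiset.card D = 0 := by rw [← hcc, hC]; simp
          exact Multiset.card_eq_zero.1 h
        have hs' : s = s ∩ t :=
          le_antisymm (tsub_eq_zero_iff_le.1 hC) ((Multiset.inter_le_left : s ∩ t ≤ s))
        have ht' : t = s ∩ t :=
          le_antisymm (tsub_eq_zero_iff_le.1 hD) ((Multiset.inter_le_right : s ∩ t ≤ t))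
        exact hs'.trans ht'.symm
      · have hD : D ≠ 0 := by
          intro h
          apply hC
          apply Multiset.card_eq_zero.1
          rw [hcc, h, Multiset.card_zero]
        obtain ⟨n, hn, hcase⟩ := hmaster C D hC hD hCi hDi hprod0 hdisj
        exfalso
        rcases hcase with ⟨h1, h2⟩ | ⟨h1, h2⟩ <;>
        · rw [h1, h2, Multiset.card_nsmul, Multiset.card_nsmul] at hcc
          have := Nat.eq_of_mul_eq_mul_left (by omega : 0 < n) hcc
          omega
    · rintro ⟨_, hfac⟩
      have h := hfac A B hAi hBi hABp
      rw [h] at hcard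
      exact lt_irrefl _ hcard
end

section
/- Let M be a reduced atomic commutative cancellative monoid. For a nonidentity element b of M, let Z(b) denote the set of finite multisets of irreducible elements of M whose product is b, and let the Betti graph ∇_b be the simple graph with vertex set Z(b) having an edge between distinct factorizations z and z' precisely when z and z' share an atom; b is a Betti element if ∇_b is disconnected. Then M is length-factorial and not factorial if and only if M has exactly one Betti element x, and x has exactly two factorizations into irreducibles, and these two factorizations have different lengths. -/
/-- The *Betti graph* of an element `b`: vertices are the irreducible factorizations of
`b` (multisets of atoms with product `b`), with an edge between two distinct
factorizations precisely when they share an atom. -/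
def BettiGraph (M : Type*) [CancelCommMonoid M] (b : M) :
    SimpleGraph {z : Multiset M // (∀ a ∈ z, Irreducible a) ∧ z.prod = b} where
  Adj z z' := z ≠ z' ∧ ∃ a : M, a ∈ z.val ∧ a ∈ z'.val
  symm := ⟨fun z z' ⟨hne, a, h1, h2⟩ => ⟨hne.symm, a, h2, h1⟩⟩
  loopless := ⟨fun z ⟨hne, _⟩ => hne rfl⟩

/-- A nonidentity element `b` is a *Betti element* if its Betti graph is disconnected. -/
def IsBettiElement (M : Type*) [CancelCommMonoid M] (b : M) : Prop :=
  b ≠ 1 ∧ ¬(BettiGraph M b).Connected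

section BettiAux

variable {M : Type*} [CancelCommMonoid M] [DecidableEq M]

private lemma eq_zero_of_prod_eq_one {s : Multiset M} (hs : ∀ a ∈ s, Irreducible a)
    (h : s.prod = 1) : s = 0 := by
  by_contra h0
  obtain ⟨a, ha⟩ := Multiset.exists_mem_of_ne_zero h0
  have hc : a ::ₘ s.erase a = s := Multiset.cons_erase ha
  have hprod : a * (s.erase a).prod = 1 := by
    rw [← Multiset.prod_cons, hc, h]
  exact (hs a ha).not_isUnit (IsUnit.of_mul_eq_one _ hprod)

/-- Key recursion for the converse direction: if every non-Betti element other than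
`x` has a connected Betti graph and `Z(x) ⊆ {z₁, z₂}`, then every factorization that is
"ambiguous" (there is another factorization of the same element) contains `z₁` or `z₂`. -/
private lemma lemF {x : M} {z₁ z₂ : Multiset M}
    (hbetti : ∀ b : M, IsBettiElement M b ↔ b = x)
    (huniq : ∀ z : Multiset M, (∀ a ∈ z, Irreducible a) → z.prod = x → z = z₁ ∨ z = z₂) :
    ∀ n (p q : Multiset M), Multiset.card p ≤ n →
      (∀ a ∈ p, Irreducible a) → (∀ a ∈ q, Irreducible a) →
      p ≠ q → p.prod = q.prod → z₁ ≤ p ∨ z₂ ≤ p := by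
  intro n
  induction n with
  | zero =>
    intro p q hcard hp hq hne hprod
    have hp0 : p = 0 := Multiset.card_eq_zero.mp (Nat.le_zero.mp hcard)
    subst hp0
    have hq1 : q.prod = 1 := by simpa using hprod.symm
    exact absurd (eq_zero_of_prod_eq_one hq hq1).symm hne
  | succ n ih =>
    intro p q hcard hp hq hne hprod
    by_cases hpx : p.prod = x
    · rcases huniq p hp hpx with h | h
      · exact Or.inl (le_of_eq h.symm)
      · exact Or.inr (le_of_eq h.symm)
    · have hp0 : p ≠ 0 := by
        rintro rfl
        have hq1 : q.prod = 1 := by simpa using hprod.symm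
        exact hne (eq_zero_of_prod_eq_one hq hq1).symm
      have hρ1 : p.prod ≠ 1 := fun h => hp0 (eq_zero_of_prod_eq_one hp h)
      have hconn : (BettiGraph M p.prod).Connected := by
        by_contra hnc
        exact hpx ((hbetti p.prod).mp ⟨hρ1, hnc⟩)
      set P : {z : Multiset M // (∀ a ∈ z, Irreducible a) ∧ z.prod = p.prod} :=
        ⟨p, hp, rfl⟩ with hPdef
      set Q : {z : Multiset M // (∀ a ∈ z, Irreducible a) ∧ z.prod = p.prod} :=
        ⟨q, hq, hprod.symm⟩ with hQdef
      have hPQ : P ≠ Q := fun h => hne (congrArg Subtype.val h)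
      obtain ⟨w⟩ := hconn.preconnected P Q
      have hwn : ¬ w.Nil := SimpleGraph.Walk.not_nil_of_ne hPQ
      obtain ⟨V, hadj, -, -⟩ := SimpleGraph.Walk.not_nil_iff.mp hwn
      obtain ⟨hPV, a, hap, hav⟩ : P ≠ V ∧ ∃ a : M, a ∈ P.val ∧ a ∈ V.val := hadj
      have hap' : a ∈ p := hap
      set c := p ∩ V.val with hcdef
      have hcne : a ∈ c := Multiset.mem_inter.mpr ⟨hap', hav⟩
      have hclep : c ≤ p := Multiset.inter_le_left
      have hclev : c ≤ V.val := Multiset.inter_le_right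
      set p' := p - c with hp'def
      set v' := V.val - c with hv'def
      have hpp : p' + c = p := tsub_add_cancel_of_le hclep
      have hvv : v' + c = V.val := tsub_add_cancel_of_le hclev
      have hcardp' : Multiset.card p' ≤ n := by
        have h1 : Multiset.card p' + Multiset.card c = Multiset.card p := by
          rw [← Multiset.card_add, hpp]
        have h2 : 0 < Multiset.card c :=
          Multiset.card_pos.mpr (fun h => by rw [h] at hcne; simp at hcne)
        omega
      have hip' : ∀ b ∈ p', Irreducible b :=
        fun b hb => hp b (Multiset.mem_of_le tsub_le_self hb)
      have hiv' : ∀ b ∈ v', Irreducible b :=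
        fun b hb => V.2.1 b (Multiset.mem_of_le tsub_le_self hb)
      have hne' : p' ≠ v' := by
        intro h
        apply hPV
        apply Subtype.ext
        show p = V.val
        exact (hpp.symm.trans (by rw [h] : p' + c = v' + c)).trans hvv
      have hprod' : p'.prod = v'.prod := by
        have h1 : p'.prod * c.prod = p.prod := by rw [← Multiset.prod_add, hpp]
        have h2 : v'.prod * c.prod = p.prod := by rw [← Multiset.prod_add, hvv]; exact V.2.2
        exact mul_right_cancel (h1.trans h2.symm)
      rcases ih p' v' hcardp' hip' hiv' hne' hprod' with h | h
      · exact Or.inl (h.trans tsub_le_self)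
      · exact Or.inr (h.trans tsub_le_self)

private lemma grow_contra {x : M} {w₁ w₂ : Multiset M}
    (hp₁ : w₁.prod = x) (hp₂ : w₂.prod = x) (hw₁0 : w₁ ≠ 0) (hw₂0 : w₂ ≠ 0)
    (hcw : Multiset.card w₁ ≠ Multiset.card w₂)
    (hF : ∀ p q : Multiset M, (∀ a ∈ p, Irreducible a) → (∀ a ∈ q, Irreducible a) →
      p ≠ q → p.prod = q.prod → w₁ ≤ p ∨ w₂ ≤ p)
    {s t : Multiset M} (hs : ∀ a ∈ s, Irreducible a) (ht : ∀ a ∈ t, Irreducible a)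
    (hd : s ∩ t = 0) (hps : s.prod = t.prod) (hcs : Multiset.card s = Multiset.card t)
    (hs0 : s ≠ 0) (h1 : w₁ ≤ s) (h2 : w₂ ≤ t) : False := by
  have key : ∀ k : ℕ, k • w₁ ≤ s ∧ k • w₂ ≤ t := by
    intro k
    induction k with
    | zero => simp
    | succ k ih =>
      obtain ⟨ihs, iht⟩ := ih
      set A := s - k • w₁ with hAdef
      set B := t - k • w₂ with hBdef
      have hAa : A + k • w₁ = s := tsub_add_cancel_of_le ihs
      have hBb : B + k • w₂ = t := tsub_add_cancel_of_le iht
      have hpA : A.prod * x ^ k = s.prod := by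
        rw [← hp₁, ← Multiset.prod_nsmul, ← Multiset.prod_add, hAa]
      have hpB : B.prod * x ^ k = t.prod := by
        rw [← hp₂, ← Multiset.prod_nsmul, ← Multiset.prod_add, hBb]
      have hpAB : A.prod = B.prod := mul_right_cancel (by rw [hpA, hpB, hps])
      have hiA : ∀ a ∈ A, Irreducible a :=
        fun a ha => hs a (Multiset.mem_of_le tsub_le_self ha)
      have hiB : ∀ a ∈ B, Irreducible a :=
        fun a ha => ht a (Multiset.mem_of_le tsub_le_self ha)
      have hAB : A ≠ B := by
        intro h
        have hA0 : A = 0 := by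
          have hle : A ≤ s ∩ t := Multiset.le_inter tsub_le_self (h ▸ tsub_le_self)
          rw [hd] at hle
          exact Multiset.le_zero.mp hle
        have hB0 : B = 0 := h ▸ hA0
        have hs_eq : s = k • w₁ := le_antisymm (tsub_eq_zero_iff_le.mp hA0) ihs
        have ht_eq : t = k • w₂ := le_antisymm (tsub_eq_zero_iff_le.mp hB0) iht
        rcases Nat.eq_zero_or_pos k with hk | hk
        · subst hk; simp at hs_eq; exact hs0 hs_eq
        · apply hcw
          have := hcs
          rw [hs_eq, ht_eq, Multiset.card_nsmul, Multiset.card_nsmul] at this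
          exact Nat.eq_of_mul_eq_mul_left hk this
      constructor
      · rcases hF A B hiA hiB hAB hpAB with h | h
        · rw [succ_nsmul]
          have := (le_tsub_iff_right ihs).mp h
          rwa [add_comm] at this
        · exfalso
          have hle : w₂ ≤ s ∩ t := Multiset.le_inter (h.trans tsub_le_self) h2
          rw [hd] at hle
          exact hw₂0 (Multiset.le_zero.mp hle)
      · rcases hF B A hiB hiA hAB.symm hpAB.symm with h | h
        · exfalso
          have hle : w₁ ≤ s ∩ t := Multiset.le_inter h1 (h.trans tsub_le_self)
          rw [hd] at hle
          exact hw₁0 (Multiset.le_zero.mp hle)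
        · rw [succ_nsmul]
          have := (le_tsub_iff_right iht).mp h
          rwa [add_comm] at this
  have hk := (key (Multiset.card s + 1)).1
  have hcard := Multiset.card_le_card hk
  rw [Multiset.card_nsmul] at hcard
  have hw : 0 < Multiset.card w₁ := Multiset.card_pos.mpr hw₁0
  have : Multiset.card s + 1 ≤ (Multiset.card s + 1) * Multiset.card w₁ :=
    Nat.le_mul_of_pos_right _ hw
  omega

/-- Structure lemma (forward direction): in a length-factorial monoid, a disjoint pair
of distinct factorizations of a common element is proportional to the minimal pair. -/
private lemma lemSL {z₁ z₂ : Multiset M} (hlf : IsLengthFactorialRed M)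
    (hz1 : ∀ a ∈ z₁, Irreducible a) (hz2 : ∀ a ∈ z₂, Irreducible a)
    (hzp : z₁.prod = z₂.prod) (hlt : Multiset.card z₁ < Multiset.card z₂)
    (hdisj : z₁ ∩ z₂ = 0)
    {s t : Multiset M} (hs : ∀ a ∈ s, Irreducible a) (ht : ∀ a ∈ t, Irreducible a)
    (hst : s ∩ t = 0) (hprodst : s.prod = t.prod)
    (hcst : Multiset.card s < Multiset.card t) :
    (Multiset.card z₂ - Multiset.card z₁) • s = (Multiset.card t - Multiset.card s) • z₁ ∧
    (Multiset.card z₂ - Multiset.card z₁) • t = (Multiset.card t - Multiset.card s) • z₂ := by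
  set d := Multiset.card z₂ - Multiset.card z₁ with hddef
  set e := Multiset.card t - Multiset.card s with hedef
  have hd : 0 < d := by omega
  have he : 0 < e := by omega
  set U := e • z₂ + d • s with hUdef
  set V := e • z₁ + d • t with hVdef
  have hU : ∀ a ∈ U, Irreducible a := by
    intro a ha
    rcases Multiset.mem_add.mp ha with h | h
    · exact hz2 a (Multiset.mem_of_mem_nsmul h)
    · exact hs a (Multiset.mem_of_mem_nsmul h)
  have hV : ∀ a ∈ V, Irreducible a := by
    intro a ha
    rcases Multiset.mem_add.mp ha with h | h
    · exact hz1 a (Multiset.mem_of_mem_nsmul h)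
    · exact ht a (Multiset.mem_of_mem_nsmul h)
  have hpUV : U.prod = V.prod := by
    rw [hUdef, hVdef, Multiset.prod_add, Multiset.prod_add, Multiset.prod_nsmul,
      Multiset.prod_nsmul, Multiset.prod_nsmul, Multiset.prod_nsmul, hzp, hprodst]
  have hcUV : Multiset.card U = Multiset.card V := by
    rw [hUdef, hVdef, Multiset.card_add, Multiset.card_add, Multiset.card_nsmul,
      Multiset.card_nsmul, Multiset.card_nsmul, Multiset.card_nsmul]
    have h2 : Multiset.card z₂ = Multiset.card z₁ + d := by omega
    have h4 : Multiset.card t = Multiset.card s + e := by omega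
    rw [h2, h4]; ring
  have hUV : U = V := hlf U V hU hV hpUV hcUV
  have key : ∀ a : M, d * Multiset.count a s = e * Multiset.count a z₁ ∧
      d * Multiset.count a t = e * Multiset.count a z₂ := by
    intro a
    have hcnt := congrArg (Multiset.count a) hUV
    simp only [hUdef, hVdef, Multiset.count_add, Multiset.count_nsmul] at hcnt
    have h12 : Multiset.count a z₁ = 0 ∨ Multiset.count a z₂ = 0 := by
      have := congrArg (Multiset.count a) hdisj
      simp only [Multiset.count_inter, Multiset.count_zero] at this
      omega
    have hst2 : Multiset.count a s = 0 ∨ Multiset.count a t = 0 := by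
      have := congrArg (Multiset.count a) hst
      simp only [Multiset.count_inter, Multiset.count_zero] at this
      omega
    rcases h12 with h1 | h1 <;> rcases hst2 with h2 | h2 <;>
      rw [h1, h2] at hcnt ⊢ <;>
      simp only [Nat.mul_zero, Nat.zero_add, Nat.add_zero] at hcnt ⊢
    · exact ⟨trivial, hcnt.symm⟩
    · exact ⟨by omega, by omega⟩
    · exact ⟨by omega, by omega⟩
    · exact ⟨hcnt, trivial⟩
  constructor
  · ext a
    rw [Multiset.count_nsmul, Multiset.count_nsmul]
    exact (key a).1
  · ext a
    rw [Multiset.count_nsmul, Multiset.count_nsmul]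
    exact (key a).2

private lemma forward_aux (hred : IsReducedMonoid M) (hat : IsAtomicMonoid M)
    (hlf : IsLengthFactorialRed M) {z₁ z₂ : Multiset M}
    (hz1 : ∀ a ∈ z₁, Irreducible a) (hz2 : ∀ a ∈ z₂, Irreducible a)
    (hzp : z₁.prod = z₂.prod) (hlt : Multiset.card z₁ < Multiset.card z₂)
    (hdisj : z₁ ∩ z₂ = 0)
    (hmin : ∀ s t : Multiset M, (∀ a ∈ s, Irreducible a) → (∀ a ∈ t, Irreducible a) →
      s ≠ t → s.prod = t.prod →
      Multiset.card z₁ + Multiset.card z₂ ≤ Multiset.card s + Multiset.card t) :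
    (∀ b : M, IsBettiElement M b ↔ b = z₁.prod) ∧
    (∀ z : Multiset M, (∀ a ∈ z, Irreducible a) → z.prod = z₁.prod → z = z₁ ∨ z = z₂) := by
  have hz1ne : z₁ ≠ 0 := by
    rintro rfl
    have h0 : z₂ = 0 := eq_zero_of_prod_eq_one hz2 (by simpa using hzp.symm)
    rw [h0] at hlt; simp at hlt
  have hz2ne : z₂ ≠ 0 := by rintro rfl; simp at hlt
  have hz1pos : 0 < Multiset.card z₁ := Multiset.card_pos.mpr hz1ne
  -- minimality gives `d ≤ e` for any disjoint pair
  have hge : ∀ {s t : Multiset M}, (∀ a ∈ s, Irreducible a) → (∀ a ∈ t, Irreducible a) →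
      s ∩ t = 0 → s ≠ 0 → s.prod = t.prod → Multiset.card s < Multiset.card t →
      Multiset.card z₂ - Multiset.card z₁ ≤ Multiset.card t - Multiset.card s := by
    intro s t hs ht hst hs0 hp hc
    obtain ⟨h1, h2⟩ := lemSL hlf hz1 hz2 hzp hlt hdisj hs ht hst hp hc
    have hc1 := congrArg Multiset.card h1
    have hc2 := congrArg Multiset.card h2
    rw [Multiset.card_nsmul, Multiset.card_nsmul] at hc1 hc2
    have hnest : s ≠ t := by
      intro h
      apply hs0
      ext a
      have hh := congrArg (Multiset.count a) hst
      rw [h] at hh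
      simp only [Multiset.count_inter, Multiset.count_zero, Nat.min_self] at hh
      simp [h, hh]
    have hsum := hmin s t hs ht hnest hp
    by_contra hlt2
    push_neg at hlt2
    have heq : (Multiset.card z₂ - Multiset.card z₁) * (Multiset.card s + Multiset.card t)
        = (Multiset.card t - Multiset.card s) * (Multiset.card z₁ + Multiset.card z₂) := by
      rw [Nat.mul_add, Nat.mul_add, hc1, hc2]
    have h3 : (Multiset.card t - Multiset.card s) * (Multiset.card z₁ + Multiset.card z₂)
        < (Multiset.card z₂ - Multiset.card z₁) * (Multiset.card z₁ + Multiset.card z₂) :=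
      (Nat.mul_lt_mul_right (by omega)).mpr hlt2
    have h4 : (Multiset.card z₂ - Multiset.card z₁) * (Multiset.card z₁ + Multiset.card z₂)
        ≤ (Multiset.card z₂ - Multiset.card z₁) * (Multiset.card s + Multiset.card t) :=
      Nat.mul_le_mul_left _ hsum
    have h5 := lt_of_lt_of_le h3 h4
    rw [heq] at h5
    exact lt_irrefl _ h5
  -- uniqueness of factorizations of x
  have huz : ∀ z : Multiset M, (∀ a ∈ z, Irreducible a) → z.prod = z₁.prod →
      z = z₁ ∨ z = z₂ := by
    intro z hz hzpx
    by_cases hzz1 : z = z₁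
    · exact Or.inl hzz1
    right
    set c := z ∩ z₁ with hcdef
    set s0 := z - c with hs0def
    set t0 := z₁ - c with ht0def
    have hcz : c ≤ z := Multiset.inter_le_left
    have hcz1 : c ≤ z₁ := Multiset.inter_le_right
    have hs0z : s0 + c = z := tsub_add_cancel_of_le hcz
    have ht0z : t0 + c = z₁ := tsub_add_cancel_of_le hcz1
    have hdisj0 : s0 ∩ t0 = 0 := by
      ext a
      simp only [hs0def, ht0def, hcdef, Multiset.count_inter, Multiset.count_sub,
        Multiset.count_zero]
      omega
    have hps0 : s0.prod = t0.prod := by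
      have h1 : s0.prod * c.prod = z.prod := by rw [← Multiset.prod_add, hs0z]
      have h2 : t0.prod * c.prod = z₁.prod := by rw [← Multiset.prod_add, ht0z]
      exact mul_right_cancel (h1.trans (hzpx.trans h2.symm))
    have his0 : ∀ a ∈ s0, Irreducible a :=
      fun a ha => hz a (Multiset.mem_of_le tsub_le_self ha)
    have hit0 : ∀ a ∈ t0, Irreducible a :=
      fun a ha => hz1 a (Multiset.mem_of_le tsub_le_self ha)
    have hne0 : s0 ≠ t0 := by
      intro h
      exact hzz1 (by rw [← hs0z, h, ht0z])
    have hs0ne : s0 ≠ 0 := by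
      intro h
      have hp1 : t0.prod = 1 := by rw [← hps0, h, Multiset.prod_zero]
      have ht00 : t0 = 0 := eq_zero_of_prod_eq_one hit0 hp1
      exact hne0 (h.trans ht00.symm)
    have ht0ne : t0 ≠ 0 := by
      intro h
      have hp1 : s0.prod = 1 := by rw [hps0, h, Multiset.prod_zero]
      have hs00 := eq_zero_of_prod_eq_one his0 hp1
      exact hne0 (hs00.trans h.symm)
    have hcne0 : Multiset.card s0 ≠ Multiset.card t0 :=
      fun h => hne0 (hlf s0 t0 his0 hit0 hps0 h)
    have hdisj0' : t0 ∩ s0 = 0 := by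
      ext a
      have := congrArg (Multiset.count a) hdisj0
      simp only [Multiset.count_inter, Multiset.count_zero] at this ⊢
      omega
    rcases hcne0.lt_or_gt with hcc | hcc
    · -- card s0 < card t0 : impossible since t0 ⊆ z₁ while supp t0 would be in z₂
      exfalso
      obtain ⟨h1, h2⟩ := lemSL hlf hz1 hz2 hzp hlt hdisj his0 hit0 hdisj0 hps0 hcc
      obtain ⟨a, ha⟩ := Multiset.exists_mem_of_ne_zero ht0ne
      have hcnt := congrArg (Multiset.count a) h2
      rw [Multiset.count_nsmul, Multiset.count_nsmul] at hcnt
      have h3 : 0 < Multiset.count a t0 := Multiset.count_pos.mpr ha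
      have hdd : 0 < Multiset.card z₂ - Multiset.card z₁ := by omega
      have h4 : 0 < Multiset.count a z₂ := by
        rcases Nat.eq_zero_or_pos (Multiset.count a z₂) with h0 | h0
        · rw [h0, Nat.mul_zero] at hcnt
          rcases Nat.mul_eq_zero.mp hcnt with h | h <;> omega
        · exact h0
      have ha1 : 0 < Multiset.count a z₁ :=
        lt_of_lt_of_le h3 (Multiset.le_iff_count.mp (tsub_le_self : t0 ≤ z₁) a)
      have hdc := congrArg (Multiset.count a) hdisj
      simp only [Multiset.count_inter, Multiset.count_zero] at hdc
      omega
    · -- card t0 < card s0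
      obtain ⟨h1, h2⟩ := lemSL hlf hz1 hz2 hzp hlt hdisj hit0 his0 hdisj0' hps0.symm hcc
      have hele : Multiset.card s0 - Multiset.card t0 ≤ Multiset.card z₂ - Multiset.card z₁ := by
        obtain ⟨a, ha⟩ := Multiset.exists_mem_of_ne_zero hz1ne
        have hcnt := congrArg (Multiset.count a) h1
        rw [Multiset.count_nsmul, Multiset.count_nsmul] at hcnt
        have hle : Multiset.count a t0 ≤ Multiset.count a z₁ :=
          Multiset.le_iff_count.mp (tsub_le_self : t0 ≤ z₁) a
        have hx : 0 < Multiset.count a z₁ := Multiset.count_pos.mpr ha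
        have hmul : (Multiset.card s0 - Multiset.card t0) * Multiset.count a z₁
            ≤ (Multiset.card z₂ - Multiset.card z₁) * Multiset.count a z₁ := by
          rw [← hcnt]
          exact Nat.mul_le_mul_left _ hle
        rw [Nat.mul_comm (Multiset.card s0 - Multiset.card t0) _,
          Nat.mul_comm (Multiset.card z₂ - Multiset.card z₁) _] at hmul
        exact Nat.le_of_mul_le_mul_left hmul hx
      have hgee := hge hit0 his0 hdisj0' ht0ne hps0.symm hcc
      have hede : Multiset.card s0 - Multiset.card t0 = Multiset.card z₂ - Multiset.card z₁ :=
        le_antisymm hele hgee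
      have hdd : 0 < Multiset.card z₂ - Multiset.card z₁ := by omega
      have ht0z1 : t0 = z₁ := by
        ext a
        have hcnt := congrArg (Multiset.count a) h1
        rw [Multiset.count_nsmul, Multiset.count_nsmul, hede] at hcnt
        exact Nat.eq_of_mul_eq_mul_left hdd hcnt
      have hc0 : c = 0 := by
        have h5 : z₁ + c = z₁ := by nth_rewrite 1 [← ht0z1]; exact ht0z
        have h6 := congrArg Multiset.card h5
        rw [Multiset.card_add] at h6
        exact Multiset.card_eq_zero.mp (by omega)
      ext a
      have hcnt := congrArg (Multiset.count a) h2
      rw [Multiset.count_nsmul, Multiset.count_nsmul, hede] at hcnt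
      have h7 : Multiset.count a s0 = Multiset.count a z₂ := Nat.eq_of_mul_eq_mul_left hdd hcnt
      have h8 : Multiset.count a s0 = Multiset.count a z := by
        rw [hs0def, hc0, tsub_zero]
      rw [← h8, h7]
  -- connectivity of all other Betti graphs
  have hconn : ∀ b : M, b ≠ 1 → b ≠ z₁.prod → (BettiGraph M b).Connected := by
    intro b hb1 hbx
    rw [SimpleGraph.connected_iff]
    have hbunit : ¬ IsUnit b := fun h => hb1 (hred b h)
    obtain ⟨sb, hsb, hsbp⟩ := hat b hbunit
    refine ⟨?_, ⟨⟨sb, hsb, hsbp⟩⟩⟩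
    have main : ∀ (U V : {z : Multiset M // (∀ a ∈ z, Irreducible a) ∧ z.prod = b}),
        U.val ∩ V.val = 0 → Multiset.card U.val < Multiset.card V.val →
        (BettiGraph M b).Reachable U V := by
      intro U V hUV hcUV
      have hU0 : U.val ≠ 0 := by
        intro h
        exact hb1 (by rw [← U.2.2, h, Multiset.prod_zero])
      have hpUV : U.val.prod = V.val.prod := U.2.2.trans V.2.2.symm
      obtain ⟨h1, h2⟩ := lemSL hlf hz1 hz2 hzp hlt hdisj U.2.1 V.2.1 hUV hpUV hcUV
      have hdpos : 0 < Multiset.card z₂ - Multiset.card z₁ := by omega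
      have hepos : 0 < Multiset.card V.val - Multiset.card U.val := by omega
      have hed : Multiset.card z₂ - Multiset.card z₁
          ≤ Multiset.card V.val - Multiset.card U.val :=
        hge U.2.1 V.2.1 hUV hU0 hpUV hcUV
      have hedne : Multiset.card z₂ - Multiset.card z₁
          ≠ Multiset.card V.val - Multiset.card U.val := by
        intro hde
        have hUz1 : U.val = z₁ := by
          ext a
          have hcnt := congrArg (Multiset.count a) h1
          rw [Multiset.count_nsmul, Multiset.count_nsmul, ← hde] at hcnt
          exact Nat.eq_of_mul_eq_mul_left hdpos hcnt
        exact hbx (by rw [← U.2.2, hUz1])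
      have helt : Multiset.card z₂ - Multiset.card z₁
          < Multiset.card V.val - Multiset.card U.val := lt_of_le_of_ne hed hedne
      have hz1leU : z₁ ≤ U.val := by
        rw [Multiset.le_iff_count]
        intro a
        have hcnt := congrArg (Multiset.count a) h1
        rw [Multiset.count_nsmul, Multiset.count_nsmul] at hcnt
        have hmul : (Multiset.card z₂ - Multiset.card z₁) * Multiset.count a z₁
            ≤ (Multiset.card z₂ - Multiset.card z₁) * Multiset.count a U.val := by
          rw [hcnt, Nat.mul_comm (Multiset.card z₂ - Multiset.card z₁) _,
            Nat.mul_comm (Multiset.card V.val - Multiset.card U.val) _]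
          exact Nat.mul_le_mul_left _ hed
        exact Nat.le_of_mul_le_mul_left hmul hdpos
      have hcardU : Multiset.card z₁ < Multiset.card U.val := by
        have hc1 := congrArg Multiset.card h1
        rw [Multiset.card_nsmul, Multiset.card_nsmul] at hc1
        have hml : (Multiset.card z₂ - Multiset.card z₁) * Multiset.card z₁
            < (Multiset.card V.val - Multiset.card U.val) * Multiset.card z₁ :=
          (Nat.mul_lt_mul_right hz1pos).mpr helt
        rw [← hc1] at hml
        exact Nat.lt_of_mul_lt_mul_left hml
      have hsupU : ∀ a : M, 0 < Multiset.count a U.val → 0 < Multiset.count a z₁ := by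
        intro a hcpos
        have hcnt := congrArg (Multiset.count a) h1
        rw [Multiset.count_nsmul, Multiset.count_nsmul] at hcnt
        rcases Nat.eq_zero_or_pos (Multiset.count a z₁) with h0 | h0
        · rw [h0, Nat.mul_zero] at hcnt
          rcases Nat.mul_eq_zero.mp hcnt with h | h <;> omega
        · exact h0
      have hsupV : ∀ a : M, 0 < Multiset.count a V.val → 0 < Multiset.count a z₂ := by
        intro a hcpos
        have hcnt := congrArg (Multiset.count a) h2
        rw [Multiset.count_nsmul, Multiset.count_nsmul] at hcnt
        rcases Nat.eq_zero_or_pos (Multiset.count a z₂) with h0 | h0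
        · rw [h0, Nat.mul_zero] at hcnt
          rcases Nat.mul_eq_zero.mp hcnt with h | h <;> omega
        · exact h0
      set w := (U.val - z₁) + z₂ with hwdef
      have hiw : ∀ a ∈ w, Irreducible a := by
        intro a ha
        rcases Multiset.mem_add.mp ha with h | h
        · exact U.2.1 a (Multiset.mem_of_le tsub_le_self h)
        · exact hz2 a h
      have hpw : w.prod = b := by
        have hsplit : (U.val - z₁).prod * z₁.prod = U.val.prod := by
          rw [← Multiset.prod_add, tsub_add_cancel_of_le hz1leU]
        rw [hwdef, Multiset.prod_add, ← hzp, hsplit, U.2.2]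
      set W : {z : Multiset M // (∀ a ∈ z, Irreducible a) ∧ z.prod = b} := ⟨w, hiw, hpw⟩
        with hWdef
      have hU1ne0 : U.val - z₁ ≠ 0 := by
        intro h
        have hle := tsub_eq_zero_iff_le.mp h
        have := Multiset.card_le_card hle
        omega
      obtain ⟨a₀, ha₀⟩ := Multiset.exists_mem_of_ne_zero hU1ne0
      obtain ⟨a₂, ha₂⟩ := Multiset.exists_mem_of_ne_zero hz2ne
      have hdisjcnt : ∀ a : M, Multiset.count a z₁ = 0 ∨ Multiset.count a z₂ = 0 := by
        intro a
        have := congrArg (Multiset.count a) hdisj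
        simp only [Multiset.count_inter, Multiset.count_zero] at this
        omega
      have hUa₂ : Multiset.count a₂ U.val = 0 := by
        rcases Nat.eq_zero_or_pos (Multiset.count a₂ U.val) with h0 | h0
        · exact h0
        · have := hsupU a₂ h0
          have h2' := Multiset.count_pos.mpr ha₂
          rcases hdisjcnt a₂ with h | h <;> omega
      have hwa₂ : 0 < Multiset.count a₂ w := by
        rw [hwdef, Multiset.count_add]
        have := Multiset.count_pos.mpr ha₂
        omega
      have ha₀U : a₀ ∈ U.val := Multiset.mem_of_le tsub_le_self ha₀
      have hVa₀ : Multiset.count a₀ V.val = 0 := by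
        have h0 : 0 < Multiset.count a₀ z₁ := hsupU a₀ (Multiset.count_pos.mpr ha₀U)
        have hz2a₀ : Multiset.count a₀ z₂ = 0 := by rcases hdisjcnt a₀ with h | h <;> omega
        have hcnt := congrArg (Multiset.count a₀) h2
        rw [Multiset.count_nsmul, Multiset.count_nsmul, hz2a₀, Nat.mul_zero] at hcnt
        rcases Nat.mul_eq_zero.mp hcnt with h | h <;> omega
      have hwa₀ : 0 < Multiset.count a₀ w := by
        rw [hwdef, Multiset.count_add]
        have := Multiset.count_pos.mpr ha₀
        omega
      have hVa₂ : 0 < Multiset.count a₂ V.val := by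
        have hcnt := congrArg (Multiset.count a₂) h2
        rw [Multiset.count_nsmul, Multiset.count_nsmul] at hcnt
        rcases Nat.eq_zero_or_pos (Multiset.count a₂ V.val) with h0 | h0
        · rw [h0, Nat.mul_zero] at hcnt
          have := Multiset.count_pos.mpr ha₂
          rcases Nat.mul_eq_zero.mp hcnt.symm with h | h <;> omega
        · exact h0
      have hUW : (BettiGraph M b).Adj U W := by
        refine (⟨?_, a₀, ha₀U, Multiset.mem_add.mpr (Or.inl ha₀)⟩ : U ≠ W ∧ ∃ a : M, a ∈ U.val ∧ a ∈ W.val)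
        intro h
        have hval : U.val = w := congrArg Subtype.val h
        rw [← hval] at hwa₂
        omega
      have hWV : (BettiGraph M b).Adj W V := by
        refine (⟨?_, a₂, Multiset.mem_add.mpr (Or.inr ha₂), Multiset.count_pos.mp hVa₂⟩ :
          W ≠ V ∧ ∃ a : M, a ∈ W.val ∧ a ∈ V.val)
        intro h
        have hval : w = V.val := congrArg Subtype.val h
        rw [hval] at hwa₀
        omega
      exact hUW.reachable.trans hWV.reachable
    intro U V
    by_cases hUVeq : U = V
    · exact hUVeq ▸ SimpleGraph.Reachable.refl U
    have hvals : U.val ≠ V.val := fun h => hUVeq (Subtype.ext h)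
    by_cases hdj : U.val ∩ V.val = 0
    · have hcne : Multiset.card U.val ≠ Multiset.card V.val :=
        fun h => hvals (hlf _ _ U.2.1 V.2.1 (U.2.2.trans V.2.2.symm) h)
      rcases hcne.lt_or_gt with h | h
      · exact main U V hdj h
      · have hdj' : V.val ∩ U.val = 0 := by
          ext a
          have := congrArg (Multiset.count a) hdj
          simp only [Multiset.count_inter, Multiset.count_zero] at this ⊢
          omega
        exact (main V U hdj' h).symm
    · obtain ⟨a, ha⟩ := Multiset.exists_mem_of_ne_zero hdj
      obtain ⟨ha1, ha2⟩ := Multiset.mem_inter.mp ha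
      exact (SimpleGraph.Adj.reachable (G := BettiGraph M b)
        (⟨hUVeq, a, ha1, ha2⟩ : U ≠ V ∧ ∃ a : M, a ∈ U.val ∧ a ∈ V.val))
  -- x is a Betti element
  have hz12ne : z₁ ≠ z₂ := by
    intro h
    rw [h] at hlt
    exact lt_irrefl _ hlt
  have hbettix : IsBettiElement M z₁.prod := by
    constructor
    · intro h
      exact hz1ne (eq_zero_of_prod_eq_one hz1 h)
    · intro hconnx
      set P1 : {z : Multiset M // (∀ a ∈ z, Irreducible a) ∧ z.prod = z₁.prod} :=
        ⟨z₁, hz1, rfl⟩ with hP1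
      set P2 : {z : Multiset M // (∀ a ∈ z, Irreducible a) ∧ z.prod = z₁.prod} :=
        ⟨z₂, hz2, hzp.symm⟩ with hP2
      have hP12 : P1 ≠ P2 := fun h => hz12ne (congrArg Subtype.val h)
      obtain ⟨wk⟩ := hconnx.preconnected P1 P2
      have hwn : ¬ wk.Nil := SimpleGraph.Walk.not_nil_of_ne hP12
      obtain ⟨V, hadj, -, -⟩ := SimpleGraph.Walk.not_nil_iff.mp hwn
      obtain ⟨hne', a, ha1, hav⟩ : P1 ≠ V ∧ ∃ a : M, a ∈ P1.val ∧ a ∈ V.val := hadj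
      rcases huz V.val V.2.1 V.2.2 with h | h
      · exact hne' (Subtype.ext h.symm)
      · have hdc := congrArg (Multiset.count a) hdisj
        simp only [Multiset.count_inter, Multiset.count_zero] at hdc
        have hc1 : 0 < Multiset.count a z₁ := Multiset.count_pos.mpr ha1
        have hc2 : 0 < Multiset.count a z₂ := Multiset.count_pos.mpr (h ▸ hav)
        omega
  refine ⟨?_, huz⟩
  intro b
  constructor
  · intro hb
    by_contra hbne
    exact hb.2 (hconn b hb.1 hbne)
  · intro h
    rw [h]
    exact hbettix

end BettiAux

/-- A reduced atomic commutative cancellative monoid is length-factorial and not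
factorial if and only if it has exactly one Betti element `x`, and `x` has exactly two
irreducible factorizations, and these have different lengths. -/
theorem lengthFactorial_not_factorial_iff_unique_Betti (M : Type*) [CancelCommMonoid M]
    (hred : IsReducedMonoid M) (hat : IsAtomicMonoid M) :
    (IsLengthFactorialRed M ∧ ¬IsFactorialRed M) ↔
      ∃ x : M, (∀ b : M, IsBettiElement M b ↔ b = x) ∧
        ∃ z₁ z₂ : Multiset M, z₁ ≠ z₂ ∧
          (∀ a ∈ z₁, Irreducible a) ∧ z₁.prod = x ∧
          (∀ a ∈ z₂, Irreducible a) ∧ z₂.prod = x ∧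
          Multiset.card z₁ ≠ Multiset.card z₂ ∧
          (∀ z : Multiset M, (∀ a ∈ z, Irreducible a) → z.prod = x → z = z₁ ∨ z = z₂) := by
  classical
  constructor
  · rintro ⟨hlf, hnf⟩
    have hex : ∃ s t : Multiset M, (∀ a ∈ s, Irreducible a) ∧ (∀ a ∈ t, Irreducible a) ∧
        s.prod = t.prod ∧ s ≠ t := by
      by_contra h
      push_neg at h
      exact hnf ⟨hat, fun s t hs ht hp => h s t hs ht hp⟩
    obtain ⟨s0, t0, hs0, ht0, hp0, hne0⟩ := hex
    have hPex : ∃ n : ℕ, ∃ s t : Multiset M, (∀ a ∈ s, Irreducible a) ∧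
        (∀ a ∈ t, Irreducible a) ∧ s.prod = t.prod ∧ s ≠ t ∧
        Multiset.card s + Multiset.card t = n :=
      ⟨_, s0, t0, hs0, ht0, hp0, hne0, rfl⟩
    obtain ⟨z₁, z₂, hz1, hz2, hzp, hzne, hzcard⟩ := Nat.find_spec hPex
    have hminN : ∀ s t : Multiset M, (∀ a ∈ s, Irreducible a) → (∀ a ∈ t, Irreducible a) →
        s ≠ t → s.prod = t.prod →
        Multiset.card z₁ + Multiset.card z₂ ≤ Multiset.card s + Multiset.card t := by
      intro s t hs ht hne hp
      rw [hzcard]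
      exact Nat.find_min' hPex ⟨s, t, hs, ht, hp, hne, rfl⟩
    have hdisj : z₁ ∩ z₂ = 0 := by
      by_contra hd
      obtain ⟨a, ha⟩ := Multiset.exists_mem_of_ne_zero hd
      obtain ⟨ha1, ha2⟩ := Multiset.mem_inter.mp ha
      have e1 : a ::ₘ z₁.erase a = z₁ := Multiset.cons_erase ha1
      have e2 : a ::ₘ z₂.erase a = z₂ := Multiset.cons_erase ha2
      have hpe : (z₁.erase a).prod = (z₂.erase a).prod := by
        have h : a * (z₁.erase a).prod = a * (z₂.erase a).prod := by
          rw [← Multiset.prod_cons, ← Multiset.prod_cons, e1, e2]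
          exact hzp
        exact mul_left_cancel h
      have hnee : z₁.erase a ≠ z₂.erase a := fun h => hzne (by rw [← e1, ← e2, h])
      have hmm := hminN _ _ (fun b hb => hz1 b (Multiset.mem_of_mem_erase hb))
        (fun b hb => hz2 b (Multiset.mem_of_mem_erase hb)) hnee hpe
      have c1 : Multiset.card (z₁.erase a) = Multiset.card z₁ - 1 :=
        Multiset.card_erase_of_mem ha1
      have c2 : Multiset.card (z₂.erase a) = Multiset.card z₂ - 1 :=
        Multiset.card_erase_of_mem ha2
      have hp1' : 0 < Multiset.card z₁ := Multiset.card_pos.mpr (fun h => by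
        rw [h] at ha1; simp at ha1)
      have hp2' : 0 < Multiset.card z₂ := Multiset.card_pos.mpr (fun h => by
        rw [h] at ha2; simp at ha2)
      omega
    have hcne : Multiset.card z₁ ≠ Multiset.card z₂ :=
      fun h => hzne (hlf _ _ hz1 hz2 hzp h)
    rcases hcne.lt_or_gt with hltc | hltc
    · obtain ⟨hbi, huzz⟩ := forward_aux hred hat hlf hz1 hz2 hzp hltc hdisj hminN
      exact ⟨z₁.prod, hbi, z₁, z₂, hzne, hz1, rfl, hz2, hzp.symm, hcne, huzz⟩
    · have hdisj' : z₂ ∩ z₁ = 0 := by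
        ext a
        have := congrArg (Multiset.count a) hdisj
        simp only [Multiset.count_inter, Multiset.count_zero] at this ⊢
        omega
      have hminN' : ∀ s t : Multiset M, (∀ a ∈ s, Irreducible a) → (∀ a ∈ t, Irreducible a) →
          s ≠ t → s.prod = t.prod →
          Multiset.card z₂ + Multiset.card z₁ ≤ Multiset.card s + Multiset.card t := by
        intro s t hs ht hne hp
        have := hminN s t hs ht hne hp
        omega
      obtain ⟨hbi, huzz⟩ := forward_aux hred hat hlf hz2 hz1 hzp.symm hltc hdisj' hminN'
      refine ⟨z₂.prod, hbi, z₁, z₂, hzne, hz1, hzp, hz2, rfl, hcne, ?_⟩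
      intro z hz hzx
      exact (huzz z hz hzx).symm
  · rintro ⟨x, hbetti, z₁, z₂, hzne, hz1, hp1, hz2, hp2, hcne, huniq⟩
    obtain ⟨hx1, hxdisc⟩ := (hbetti x).mpr rfl
    have hz1ne0 : z₁ ≠ 0 := by
      rintro rfl
      exact hx1 (by simpa using hp1.symm)
    have hz2ne0 : z₂ ≠ 0 := by
      rintro rfl
      exact hx1 (by simpa using hp2.symm)
    have hF : ∀ p q : Multiset M, (∀ a ∈ p, Irreducible a) → (∀ a ∈ q, Irreducible a) →
        p ≠ q → p.prod = q.prod → z₁ ≤ p ∨ z₂ ≤ p := by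
      intro p q hp hq hne hprod
      exact lemF hbetti huniq (Multiset.card p) p q le_rfl hp hq hne hprod
    constructor
    · -- length-factorial
      intro s t hs ht hprodst hcardst
      by_contra hstne
      set c := s ∩ t with hcdef
      set s' := s - c with hs'def
      set t' := t - c with ht'def
      have hcs : c ≤ s := Multiset.inter_le_left
      have hct : c ≤ t := Multiset.inter_le_right
      have hss : s' + c = s := tsub_add_cancel_of_le hcs
      have htt : t' + c = t := tsub_add_cancel_of_le hct
      have hdisj' : s' ∩ t' = 0 := by
        ext a
        simp only [hs'def, ht'def, hcdef, Multiset.count_inter, Multiset.count_sub,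
          Multiset.count_zero]
        omega
      have hps' : s'.prod = t'.prod := by
        have h1 : s'.prod * c.prod = s.prod := by rw [← Multiset.prod_add, hss]
        have h2 : t'.prod * c.prod = t.prod := by rw [← Multiset.prod_add, htt]
        exact mul_right_cancel (h1.trans (hprodst.trans h2.symm))
      have hcs' : Multiset.card s' = Multiset.card t' := by
        have h1 := congrArg Multiset.card hss
        have h2 := congrArg Multiset.card htt
        rw [Multiset.card_add] at h1 h2
        omega
      have his' : ∀ a ∈ s', Irreducible a :=
        fun a ha => hs a (Multiset.mem_of_le tsub_le_self ha)
      have hit' : ∀ a ∈ t', Irreducible a :=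
        fun a ha => ht a (Multiset.mem_of_le tsub_le_self ha)
      have hne' : s' ≠ t' := by
        intro h
        exact hstne (by rw [← hss, h, htt])
      have hs'0 : s' ≠ 0 := by
        intro h
        have ht'0 : t' = 0 := Multiset.card_eq_zero.mp (by rw [← hcs', h]; simp)
        exact hne' (h.trans ht'0.symm)
      rcases hF s' t' his' hit' hne' hps' with hA | hA <;>
        rcases hF t' s' hit' his' hne'.symm hps'.symm with hB | hB
      · have hle : z₁ ≤ s' ∩ t' := Multiset.le_inter hA hB
        rw [hdisj'] at hle
        exact hz1ne0 (Multiset.le_zero.mp hle)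
      · exact grow_contra hp1 hp2 hz1ne0 hz2ne0 hcne hF his' hit' hdisj' hps' hcs' hs'0 hA hB
      · have hF' : ∀ p q : Multiset M, (∀ a ∈ p, Irreducible a) → (∀ a ∈ q, Irreducible a) →
            p ≠ q → p.prod = q.prod → z₂ ≤ p ∨ z₁ ≤ p := by
          intro p q hp hq hne hprod
          exact (hF p q hp hq hne hprod).symm
        exact grow_contra hp2 hp1 hz2ne0 hz1ne0 (Ne.symm hcne) hF' his' hit' hdisj' hps'
          hcs' hs'0 hA hB
      · have hle : z₂ ≤ s' ∩ t' := Multiset.le_inter hA hB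
        rw [hdisj'] at hle
        exact hz2ne0 (Multiset.le_zero.mp hle)
    · rintro ⟨-, hfac⟩
      exact hzne (hfac z₁ z₂ hz1 hz2 (hp1.trans hp2.symm))
end

section
/- Let R be a local atomic integral domain with only finitely many irreducible elements up to associates (a local Cohen–Kaplansky domain). If R is length-factorial, then R is a unique factorization domain. -/
section Aux

open Multiset

theorem LFaux.rel_exists_left {α : Type*} {r : α → α → Prop} {s t : Multiset α}
    (h : Multiset.Rel r s t) : ∀ {a}, a ∈ s → ∃ b ∈ t, r a b := by
  induction h with
  | zero => intro a ha; simp at ha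
  | @cons x y s' t' hxy hst ih =>
    intro a ha
    rw [Multiset.mem_cons] at ha
    rcases ha with rfl | ha
    · exact ⟨y, Multiset.mem_cons_self _ _, hxy⟩
    · obtain ⟨b, hb, hrb⟩ := ih ha
      exact ⟨b, Multiset.mem_cons_of_mem hb, hrb⟩

theorem LFaux.rel_exists_right {α : Type*} {r : α → α → Prop} {s t : Multiset α}
    (h : Multiset.Rel r s t) : ∀ {b}, b ∈ t → ∃ a ∈ s, r a b := by
  have h' : Multiset.Rel (flip r) t s := Multiset.rel_flip.mpr h
  intro b hb
  obtain ⟨a, ha, hr⟩ := LFaux.rel_exists_left h' hb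
  exact ⟨a, ha, hr⟩

theorem LFaux.rel_countP {α : Type*} {r : α → α → Prop} {P : α → Prop} [DecidablePred P]
    (hP : ∀ a b, r a b → (P a ↔ P b)) {s t : Multiset α} (h : Multiset.Rel r s t) :
    Multiset.countP P s = Multiset.countP P t := by
  induction h with
  | zero => rfl
  | @cons x y s' t' hxy hst ih =>
    rw [Multiset.countP_cons, Multiset.countP_cons, ih]
    congr 1
    by_cases hx : P x
    · simp [hx, (hP _ _ hxy).mp hx]
    · have hy : ¬ P y := fun hy => hx ((hP _ _ hxy).mpr hy)
      simp [hx, hy]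

end Aux
set_option linter.unusedSectionVars false
set_option linter.unusedVariables false

section Counts

open Multiset

variable {R : Type*} [CommRing R] [IsDomain R]

noncomputable def LFaux.acount (γ : R) (s : Multiset R) : ℕ :=
  @Multiset.countP R (fun x => Associated γ x) (Classical.decPred _) s

namespace LFaux

theorem acount_rel_eq {γ : R} {s t : Multiset R} (h : Multiset.Rel Associated s t) :
    acount γ s = acount γ t :=
  @LFaux.rel_countP R Associated (fun x => Associated γ x) (Classical.decPred _)
    (fun _ _ hab => ⟨fun h' => h'.trans hab, fun h' => h'.trans hab.symm⟩) s t h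

theorem acount_add (γ : R) (s t : Multiset R) :
    acount γ (s + t) = acount γ s + acount γ t :=
  @Multiset.countP_add R (fun x => Associated γ x) (Classical.decPred _) s t

theorem acount_nsmul (γ : R) (s : Multiset R) (n : ℕ) :
    acount γ (n • s) = n * acount γ s := by
  induction n with
  | zero => simp [acount]
  | succ n ih =>
    rw [succ_nsmul, acount_add, ih]
    ring

theorem acount_comb (γ : R) (a b : ℕ) (s t : Multiset R) :
    acount γ (a • s + b • t) = a * acount γ s + b * acount γ t := by
  rw [acount_add, acount_nsmul, acount_nsmul]

theorem acount_cons_pos {γ x : R} (s : Multiset R) (h : Associated γ x) :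
    acount γ (x ::ₘ s) = acount γ s + 1 :=
  @Multiset.countP_cons_of_pos R (fun y => Associated γ y) (Classical.decPred _) x s h

theorem acount_cons_neg {γ x : R} (s : Multiset R) (h : ¬ Associated γ x) :
    acount γ (x ::ₘ s) = acount γ s :=
  @Multiset.countP_cons_of_neg R (fun y => Associated γ y) (Classical.decPred _) x s h

theorem acount_eq_zero {γ : R} {s : Multiset R} (h : ∀ x ∈ s, ¬ Associated γ x) :
    acount γ s = 0 :=
  (@Multiset.countP_eq_zero R (fun x => Associated γ x) (Classical.decPred _) s).mpr h

theorem acount_eq_card {γ : R} {s : Multiset R} (h : ∀ x ∈ s, Associated γ x) :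
    acount γ s = Multiset.card s :=
  (@Multiset.countP_eq_card R (fun x => Associated γ x) (Classical.decPred _) s).mpr h

theorem acount_replicate_pos {γ x : R} (n : ℕ) (h : Associated γ x) :
    acount γ (Multiset.replicate n x) = n := by
  rw [acount_eq_card (fun y hy => (Multiset.eq_of_mem_replicate hy) ▸ h),
    Multiset.card_replicate]

theorem acount_replicate_neg {γ x : R} (n : ℕ) (h : ¬ Associated γ x) :
    acount γ (Multiset.replicate n x) = 0 :=
  acount_eq_zero (fun y hy => (Multiset.eq_of_mem_replicate hy) ▸ h)

/- basic atom helpers -/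

theorem atoms_cons {x : R} {s : Multiset R} (hx : Irreducible x)
    (hs : ∀ y ∈ s, Irreducible y) : ∀ y ∈ x ::ₘ s, Irreducible y := by
  intro y hy
  rw [Multiset.mem_cons] at hy
  rcases hy with rfl | hy
  · exact hx
  · exact hs y hy

theorem atoms_replicate {x : R} {n : ℕ} (hx : Irreducible x) :
    ∀ y ∈ Multiset.replicate n x, Irreducible y := by
  intro y hy
  rw [Multiset.eq_of_mem_replicate hy]
  exact hx

theorem forall_mem_nsmul {P : R → Prop} {s : Multiset R} {n : ℕ}
    (h : ∀ x ∈ s, P x) : ∀ x ∈ n • s, P x := fun x hx =>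
  h x (Multiset.mem_of_mem_nsmul hx)

theorem atoms_comb {P : R → Prop} {a b : ℕ} {s t : Multiset R}
    (hs : ∀ x ∈ s, P x) (ht : ∀ x ∈ t, P x) : ∀ x ∈ a • s + b • t, P x := by
  intro x hx
  rcases Multiset.mem_add.mp hx with hx | hx
  · exact forall_mem_nsmul hs x hx
  · exact forall_mem_nsmul ht x hx

theorem pow_not_unit {β : R} (hβ : ¬ IsUnit β) {n : ℕ} (hn : n ≠ 0) : ¬ IsUnit (β ^ n) := by
  intro h
  obtain ⟨m, rfl⟩ := Nat.exists_eq_succ_of_ne_zero hn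
  rw [pow_succ] at h
  exact hβ (isUnit_of_mul_isUnit_right h)

theorem irred_unit_mul (u : Rˣ) {a : R} (ha : Irreducible a) : Irreducible ((u : R) * a) := by
  have : Associated a ((u : R) * a) := ⟨u, mul_comm a u⟩
  exact this.irreducible ha

theorem mult_single {α : R} : ∀ {s : Multiset R}, (∀ t ∈ s, Associated α t) →
    ∃ w : Rˣ, s.prod = (w : R) * α ^ Multiset.card s := by
  intro s
  induction s using Multiset.induction_on with
  | empty => intro _; exact ⟨1, by simp⟩
  | cons x s ih =>
    intro h
    obtain ⟨w, hw⟩ := ih (fun t ht => h t (Multiset.mem_cons_of_mem ht))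
    obtain ⟨v, hv⟩ := h x (Multiset.mem_cons_self _ _)
    refine ⟨v * w, ?_⟩
    rw [Multiset.prod_cons, hw, ← hv, Multiset.card_cons, pow_succ]
    push_cast
    ring

theorem mult_double {α β : R} : ∀ {s : Multiset R},
    (∀ t ∈ s, Associated α t ∨ Associated β t) →
    ∃ (w : Rˣ) (a b : ℕ), a + b = Multiset.card s ∧
      s.prod = (w : R) * α ^ a * β ^ b := by
  intro s
  induction s using Multiset.induction_on with
  | empty => intro _; exact ⟨1, 0, 0, by simp, by simp⟩
  | cons x s ih =>
    intro h
    obtain ⟨w, a, b, hab, hw⟩ := ih (fun t ht => h t (Multiset.mem_cons_of_mem ht))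
    rcases h x (Multiset.mem_cons_self _ _) with ⟨v, hv⟩ | ⟨v, hv⟩
    · refine ⟨v * w, a + 1, b, by rw [Multiset.card_cons]; omega, ?_⟩
      rw [Multiset.prod_cons, hw, ← hv, pow_succ]
      push_cast
      ring
    · refine ⟨v * w, a, b + 1, by rw [Multiset.card_cons]; omega, ?_⟩
      rw [Multiset.prod_cons, hw, ← hv, pow_succ]
      push_cast
      ring

end LFaux

end Counts
section Machinery

open Multiset

namespace LFaux

variable {R : Type*} [CommRing R] [IsDomain R]

theorem atoms_prod_not_unit {s : Multiset R} (hs : ∀ x ∈ s, Irreducible x)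
    (hne : s ≠ 0) : ¬ IsUnit s.prod := by
  obtain ⟨a, ha⟩ := Multiset.exists_mem_of_ne_zero hne
  intro hu
  exact (hs a ha).not_isUnit (isUnit_of_dvd_unit (Multiset.dvd_prod ha) hu)

theorem factor (hat : IsAtomicDomain R) {x : R} (hx0 : x ≠ 0) (hxu : ¬ IsUnit x) :
    ∃ s : Multiset R, s ≠ 0 ∧ (∀ a ∈ s, Irreducible a) ∧ s.prod = x := by
  obtain ⟨s, hs, hprod⟩ := hat x hx0 hxu
  refine ⟨s, ?_, hs, hprod⟩
  rintro rfl
  rw [Multiset.prod_zero] at hprod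
  exact hxu (hprod ▸ isUnit_one)

theorem exists_atom_dvd (hat : IsAtomicDomain R) {x : R} (hx0 : x ≠ 0) (hxu : ¬ IsUnit x) :
    ∃ q : R, Irreducible q ∧ q ∣ x := by
  obtain ⟨s, hne, hs, hprod⟩ := factor hat hx0 hxu
  obtain ⟨a, ha⟩ := Multiset.exists_mem_of_ne_zero hne
  exact ⟨a, hs a ha, hprod ▸ Multiset.dvd_prod ha⟩

/-- The main length-factoriality workhorse: combining two factorization relations
with positive length drift produces a `Multiset.Rel Associated`. -/
theorem lf_pair (hlf : IsLengthFactorialDomain R) {F₁ G₁ F₂ G₂ : Multiset R}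
    (hF₁ : ∀ x ∈ F₁, Irreducible x) (hG₁ : ∀ x ∈ G₁, Irreducible x)
    (hF₂ : ∀ x ∈ F₂, Irreducible x) (hG₂ : ∀ x ∈ G₂, Irreducible x)
    (h₁ : F₁.prod = G₁.prod) (h₂ : F₂.prod = G₂.prod)
    (hc₁ : Multiset.card F₁ < Multiset.card G₁)
    (hc₂ : Multiset.card F₂ < Multiset.card G₂) :
    Multiset.Rel Associated
      ((Multiset.card G₂ - Multiset.card F₂) • F₁ + (Multiset.card G₁ - Multiset.card F₁) • G₂)
      ((Multiset.card G₂ - Multiset.card F₂) • G₁ + (Multiset.card G₁ - Multiset.card F₁) • F₂) := by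
  apply hlf
  · exact atoms_comb hF₁ hG₂
  · exact atoms_comb hG₁ hF₂
  · rw [Multiset.prod_add, Multiset.prod_add, Multiset.prod_nsmul, Multiset.prod_nsmul,
      Multiset.prod_nsmul, Multiset.prod_nsmul, h₁, h₂]
  · rw [Multiset.card_add, Multiset.card_add, Multiset.card_nsmul, Multiset.card_nsmul,
      Multiset.card_nsmul, Multiset.card_nsmul]
    zify [hc₁.le, hc₂.le]
    ring

variable [IsLocalRing R]

theorem nonunit_add {a b : R} (ha : ¬ IsUnit a) (hb : ¬ IsUnit b) : ¬ IsUnit (a + b) :=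
  mem_nonunits_iff.mp
    (IsLocalRing.nonunits_add (mem_nonunits_iff.mpr ha) (mem_nonunits_iff.mpr hb))

theorem unit_pow_sub_one {β : R} (hβ : ¬ IsUnit β) {n : ℕ} (hn : n ≠ 0) :
    IsUnit (β ^ n - 1) := by
  have h1 : IsUnit (1 - β ^ n) :=
    IsLocalRing.isUnit_one_sub_self_of_mem_nonunits _
      (mem_nonunits_iff.mpr (pow_not_unit hβ hn))
  have : β ^ n - 1 = -(1 - β ^ n) := by ring
  rw [this]
  exact h1.neg

/-- Pigeonhole (using finitely many atoms up to associates): any atom divides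
some positive power of any other atom. -/
theorem exists_pow_dvd (hat : IsAtomicDomain R)
    (hCK : ∃ F : Finset R, ∀ a : R, Irreducible a → ∃ b ∈ F, Associated a b)
    {α β : R} (hα : Irreducible α) (hβ : Irreducible β) (hne : ¬ Associated α β) :
    ∃ n : ℕ, n ≠ 0 ∧ α ∣ β ^ n := by
  classical
  obtain ⟨F, hF⟩ := hCK
  have hv : ∀ i : ℕ, ∃ q : R, Irreducible q ∧ q ∣ α + β ^ (i + 1) := by
    intro i
    have hz : α + β ^ (i + 1) ≠ 0 := by
      intro h0
      have hαeq : α = -(β ^ (i + 1)) := eq_neg_of_add_eq_zero_left h0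
      rcases Nat.eq_zero_or_pos i with rfl | hi
      · exact hne ⟨-1, by rw [hαeq]; push_cast; ring⟩
      · have heq : α = (-β) * β ^ i := by
          rw [hαeq, pow_succ']; ring
        rcases hα.isUnit_or_isUnit heq with h | h
        · exact hβ.not_isUnit (((IsUnit.neg_iff _).mp h))
        · exact pow_not_unit hβ.not_isUnit (by omega) h
    have hnu : ¬ IsUnit (α + β ^ (i + 1)) :=
      nonunit_add hα.not_isUnit (pow_not_unit hβ.not_isUnit (by omega))
    exact exists_atom_dvd hat hz hnu
  choose q hqirr hqdvd using hv
  have hb : ∀ i : ℕ, ∃ b, b ∈ F ∧ Associated (q i) b := by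
    intro i
    obtain ⟨b, hbF, hbq⟩ := hF _ (hqirr i)
    exact ⟨b, hbF, hbq⟩
  choose b hbF hbassoc using hb
  have hcard : F.card < (Finset.range (F.card + 1)).card := by simp
  obtain ⟨i, hi, i', hi', hne', heq⟩ :=
    Finset.exists_ne_map_eq_of_card_lt_of_maps_to hcard (fun i _ => hbF i)
  -- symmetrize: prove the key claim for i < i'
  have key : ∀ i i' : ℕ, i < i' → b i = b i' → ∃ n : ℕ, n ≠ 0 ∧ α ∣ β ^ n := by
    intro i i' hlt hbeq
    have hq' : Associated (q i) (q i') := (hbassoc i).trans (hbeq ▸ (hbassoc i').symm)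
    have hd1 : q i ∣ α + β ^ (i + 1) := hqdvd i
    have hd2 : q i ∣ α + β ^ (i' + 1) := hq'.dvd.trans (hqdvd i')
    have hdiff : q i ∣ β ^ (i + 1) * (β ^ (i' - i) - 1) := by
      have heq2 : β ^ (i + 1) * (β ^ (i' - i) - 1) =
          (α + β ^ (i' + 1)) - (α + β ^ (i + 1)) := by
        have hee : i + 1 + (i' - i) = i' + 1 := by omega
        rw [mul_sub, mul_one, ← pow_add, hee]
        ring
      rw [heq2]
      exact dvd_sub hd2 hd1
    obtain ⟨w, hw⟩ := unit_pow_sub_one hβ.not_isUnit (n := i' - i) (by omega)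
    have hdvdpow : q i ∣ β ^ (i + 1) := by
      rw [← hw] at hdiff
      exact (Units.dvd_mul_right).mp hdiff
    have hdvdα : q i ∣ α := by
      have : α = (α + β ^ (i + 1)) - β ^ (i + 1) := by ring
      rw [this]
      exact dvd_sub hd1 hdvdpow
    have hqα : Associated (q i) α := (hqirr i).associated_of_dvd hα hdvdα
    exact ⟨i + 1, by omega, hqα.symm.dvd.trans hdvdpow⟩
  rcases lt_or_gt_of_ne hne' with h | h
  · exact key i i' h heq
  · exact key i' i h heq.symm

end LFaux

end Machinery
section PRsec

open Multiset

namespace LFaux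

variable {R : Type*} [CommRing R] [IsDomain R]

/-- A power relation between two atoms. -/
def PRrel (α β : R) (p q : ℕ) : Prop :=
  1 ≤ p ∧ 1 ≤ q ∧ ∃ u : Rˣ, α ^ p = (u : R) * β ^ q

theorem PRrel.swap {α β : R} {p q : ℕ} (h : PRrel α β p q) : PRrel β α q p := by
  obtain ⟨hp, hq, u, hu⟩ := h
  refine ⟨hq, hp, u⁻¹, ?_⟩
  rw [hu, ← mul_assoc, Units.inv_mul, one_mul]

theorem PRrel.not_one {α β : R} (hα : Irreducible α) (hβ : Irreducible β)
    (hne : ¬ Associated α β) {q : ℕ} : ¬ PRrel α β 1 q := by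
  rintro ⟨-, hq, u, hu⟩
  rw [pow_one] at hu
  rcases Nat.lt_or_ge q 2 with h2 | h2
  · have hq1 : q = 1 := by omega
    subst hq1
    rw [pow_one] at hu
    refine hne ⟨u⁻¹, ?_⟩
    rw [hu, mul_comm ((u : R)) β, mul_assoc, Units.mul_inv, mul_one]
  · have heq : α = ((u : R) * β) * β ^ (q - 1) := by
      rw [hu, mul_assoc, ← pow_succ']
      congr 2
      omega
    rcases hα.isUnit_or_isUnit heq with h | h
    · exact hβ.not_isUnit (isUnit_of_mul_isUnit_right h)
    · exact pow_not_unit hβ.not_isUnit (by omega) h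

theorem PRrel.two_le {α β : R} {p q : ℕ} (hα : Irreducible α) (hβ : Irreducible β)
    (hne : ¬ Associated α β) (h : PRrel α β p q) : 2 ≤ p ∧ 2 ≤ q := by
  constructor
  · by_contra hlt
    have hp1 : p = 1 := by have := h.1; omega
    exact PRrel.not_one hα hβ hne (hp1 ▸ h)
  · by_contra hlt
    have hq1 : q = 1 := by have := h.2.1; omega
    exact PRrel.not_one hβ hα (fun h' => hne h'.symm) (hq1 ▸ h.swap)

theorem PR_G {α β : R} {p q : ℕ} (hβ : Irreducible β) (h : PRrel α β p q) :
    ∃ G : Multiset R, (∀ x ∈ G, Irreducible x) ∧ (∀ x ∈ G, Associated β x) ∧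
      Multiset.card G = q ∧ G.prod = α ^ p := by
  obtain ⟨hp, hq, u, hu⟩ := h
  refine ⟨((u : R) * β) ::ₘ Multiset.replicate (q - 1) β, ?_, ?_, ?_, ?_⟩
  · exact atoms_cons (irred_unit_mul u hβ) (atoms_replicate hβ)
  · intro x hx
    rw [Multiset.mem_cons] at hx
    rcases hx with rfl | hx
    · exact ⟨u, mul_comm β u⟩
    · rw [Multiset.eq_of_mem_replicate hx]
  · rw [Multiset.card_cons, Multiset.card_replicate]; omega
  · rw [Multiset.prod_cons, Multiset.prod_replicate, mul_assoc, ← pow_succ']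
    have he : q - 1 + 1 = q := by omega
    rw [he, hu]

theorem PR_ne (hlf : IsLengthFactorialDomain R) {α β : R} {p q : ℕ}
    (hα : Irreducible α) (hβ : Irreducible β) (hne : ¬ Associated α β)
    (h : PRrel α β p q) : p ≠ q := by
  intro hpq
  obtain ⟨G, hGat, hGas, hGc, hGp⟩ := PR_G hβ h
  have hrel := hlf (Multiset.replicate p α) G (atoms_replicate hα) hGat
    (by rw [Multiset.prod_replicate, hGp]) (by rw [Multiset.card_replicate, hGc, hpq])
  have hmem : α ∈ Multiset.replicate p α := by
    rw [Multiset.mem_replicate]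
    exact ⟨by have := h.1; omega, rfl⟩
  obtain ⟨y, hy, hass⟩ := rel_exists_left hrel hmem
  exact hne (hass.trans (hGas y hy).symm)

theorem PR_parallel (hlf : IsLengthFactorialDomain R) {α β : R}
    (hα : Irreducible α) (hβ : Irreducible β) (hne : ¬ Associated α β)
    {p q p' q' : ℕ} (h : PRrel α β p q) (h' : PRrel α β p' q') : p * q' = p' * q := by
  obtain ⟨G, hGat, hGas, hGc, hGp⟩ := PR_G hβ h
  obtain ⟨G', hG'at, hG'as, hG'c, hG'p⟩ := PR_G hβ h'
  have hpne : p ≠ q := PR_ne hlf hα hβ hne h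
  have hpne' : p' ≠ q' := PR_ne hlf hα hβ hne h'
  have hαG : acount α G = 0 :=
    acount_eq_zero (fun x hx hc => hne (hc.trans (hGas x hx).symm))
  have hβG : acount β G = q := by rw [acount_eq_card hGas, hGc]
  have hαG' : acount α G' = 0 :=
    acount_eq_zero (fun x hx hc => hne (hc.trans (hG'as x hx).symm))
  have hβG' : acount β G' = q' := by rw [acount_eq_card hG'as, hG'c]
  have hαF : ∀ n : ℕ, acount α (Multiset.replicate n α) = n :=
    fun n => acount_replicate_pos n (Associated.refl α)
  have hβF : ∀ n : ℕ, acount β (Multiset.replicate n α) = 0 :=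
    fun n => acount_replicate_neg n (fun hc => hne hc.symm)
  rcases lt_or_gt_of_ne hpne with h1 | h1 <;> rcases lt_or_gt_of_ne hpne' with h2 | h2
  · -- p < q, p' < q'
    have hrel := lf_pair hlf (atoms_replicate hα) hGat (atoms_replicate hα) hG'at
      (by rw [Multiset.prod_replicate, hGp]) (by rw [Multiset.prod_replicate, hG'p])
      (by rw [Multiset.card_replicate, hGc]; omega)
      (by rw [Multiset.card_replicate, hG'c]; omega)
    have hcα := acount_rel_eq (γ := α) hrel
    have hcβ := acount_rel_eq (γ := β) hrel
    rw [acount_comb, acount_comb, hαF, hαF, hαG, hαG', hGc, hG'c,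
      Multiset.card_replicate, Multiset.card_replicate] at hcα
    rw [acount_comb, acount_comb, hβF, hβF, hβG, hβG', hGc, hG'c,
      Multiset.card_replicate, Multiset.card_replicate] at hcβ
    -- hcα : (q'-p') * p + (q-p) * 0 = (q'-p') * 0 + (q-p) * p'
    -- hcβ : (q'-p') * 0 + (q-p) * q' = (q'-p') * q + (q-p) * 0
    simp only [mul_zero, add_zero, zero_add] at hcα hcβ
    have ha : 0 < q' - p' := by omega
    apply Nat.eq_of_mul_eq_mul_left ha
    calc (q' - p') * (p * q') = ((q' - p') * p) * q' := by ring
    _ = ((q - p) * p') * q' := by rw [hcα]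
    _ = p' * ((q - p) * q') := by ring
    _ = p' * ((q' - p') * q) := by rw [hcβ]
    _ = (q' - p') * (p' * q) := by ring
  · -- p < q, q' < p' : opposite signs, contradiction
    exfalso
    have hrel := lf_pair hlf (atoms_replicate hα) hGat hG'at (atoms_replicate hα)
      (by rw [Multiset.prod_replicate, hGp]) (by rw [Multiset.prod_replicate, hG'p])
      (by rw [Multiset.card_replicate, hGc]; omega)
      (by rw [Multiset.card_replicate, hG'c]; omega)
    -- Rel (a • rep p α + b • rep p' α) (a • G + b • G')
    have hamem : α ∈ (Multiset.card (Multiset.replicate p' α) - Multiset.card G') •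
        Multiset.replicate p α + (Multiset.card G - Multiset.card (Multiset.replicate p α)) •
        Multiset.replicate p' α := by
      refine Multiset.mem_add.mpr (Or.inl ?_)
      rw [Multiset.mem_nsmul_of_ne_zero (by rw [Multiset.card_replicate, hG'c]; omega)]
      rw [Multiset.mem_replicate]
      exact ⟨by have := h.1; omega, rfl⟩
    obtain ⟨y, hy, hass⟩ := rel_exists_left hrel hamem
    rcases Multiset.mem_add.mp hy with hy' | hy'
    · exact hne (hass.trans (hGas y (Multiset.mem_of_mem_nsmul hy')).symm)
    · exact hne (hass.trans (hG'as y (Multiset.mem_of_mem_nsmul hy')).symm)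
  · -- q < p, p' < q' : opposite signs, contradiction
    exfalso
    have hrel := lf_pair hlf hGat (atoms_replicate hα) (atoms_replicate hα) hG'at
      (by rw [Multiset.prod_replicate, hGp]) (by rw [Multiset.prod_replicate, hG'p])
      (by rw [Multiset.card_replicate, hGc]; omega)
      (by rw [Multiset.card_replicate, hG'c]; omega)
    -- Rel (a • G + b • G') (a • rep p α + b • rep p' α)
    have hamem : α ∈ (Multiset.card G' - Multiset.card (Multiset.replicate p' α)) •
        Multiset.replicate p α + (Multiset.card (Multiset.replicate p α) - Multiset.card G) •
        Multiset.replicate p' α := by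
      refine Multiset.mem_add.mpr (Or.inl ?_)
      rw [Multiset.mem_nsmul_of_ne_zero (by rw [Multiset.card_replicate, hG'c]; omega)]
      rw [Multiset.mem_replicate]
      exact ⟨by have := h.1; omega, rfl⟩
    obtain ⟨x, hx, hass⟩ := rel_exists_right hrel hamem
    rcases Multiset.mem_add.mp hx with hx' | hx'
    · exact hne ((hGas x (Multiset.mem_of_mem_nsmul hx')).trans hass).symm
    · exact hne ((hG'as x (Multiset.mem_of_mem_nsmul hx')).trans hass).symm
  · -- q < p, q' < p'
    have hrel := lf_pair hlf hGat (atoms_replicate hα) hG'at (atoms_replicate hα)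
      (by rw [Multiset.prod_replicate, hGp]) (by rw [Multiset.prod_replicate, hG'p])
      (by rw [Multiset.card_replicate, hGc]; omega)
      (by rw [Multiset.card_replicate, hG'c]; omega)
    have hcα := acount_rel_eq (γ := α) hrel
    have hcβ := acount_rel_eq (γ := β) hrel
    rw [acount_comb, acount_comb, hαF, hαF, hαG, hαG', hGc, hG'c,
      Multiset.card_replicate, Multiset.card_replicate] at hcα
    rw [acount_comb, acount_comb, hβF, hβF, hβG, hβG', hGc, hG'c,
      Multiset.card_replicate, Multiset.card_replicate] at hcβ
    -- hcα : (p'-q') * 0 + (p-q) * p' = (p'-q') * p + (p-q) * 0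
    -- hcβ : (p'-q') * q + (p-q) * 0 = (p'-q') * 0 + (p-q) * q'
    simp only [mul_zero, add_zero, zero_add] at hcα hcβ
    have ha : 0 < p' - q' := by omega
    apply Nat.eq_of_mul_eq_mul_left ha
    calc (p' - q') * (p * q') = ((p' - q') * p) * q' := by ring
    _ = ((p - q) * p') * q' := by rw [← hcα]
    _ = p' * ((p - q) * q') := by ring
    _ = p' * ((p' - q') * q) := by rw [← hcβ]
    _ = (p' - q') * (p' * q) := by ring

end LFaux

end PRsec
section Descent

open Multiset

namespace LFaux

variable {R : Type*} [CommRing R] [IsDomain R] [IsLocalRing R]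

theorem descent (hat : IsAtomicDomain R) (hlf : IsLengthFactorialDomain R)
    {α β : R} (hα : Irreducible α) (hβ : Irreducible β) (hne : ¬ Associated α β)
    {p q : ℕ} (h : PRrel α β p q) (hd : β ∣ α ^ (p - 1)) :
    ∃ p' q', PRrel α β p' q' ∧ p' < p := by
  have hp2 : 2 ≤ p := (h.two_le hα hβ hne).1
  have hq2 : 2 ≤ q := (h.two_le hα hβ hne).2
  have hpq : p ≠ q := PR_ne hlf hα hβ hne h
  obtain ⟨E, hE⟩ := hd
  have hE0 : E ≠ 0 := by
    rintro rfl
    rw [mul_zero] at hE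
    exact hα.ne_zero (pow_eq_zero_iff (by omega) |>.mp hE)
  by_cases hEu : IsUnit E
  · refine ⟨p - 1, 1, ⟨by omega, le_refl 1, hEu.unit, ?_⟩, by omega⟩
    rw [pow_one, hE, IsUnit.unit_spec hEu]
    exact mul_comm β E
  · obtain ⟨ℰ, hEne, hEatoms, hEprod⟩ := factor hat hE0 hEu
    have hFEprod : (β ::ₘ ℰ).prod = α ^ (p - 1) := by
      rw [Multiset.prod_cons, hEprod, ← hE]
    obtain ⟨G, hGat, hGas, hGc, hGp⟩ := PR_G hβ h
    -- key step once we know the atoms of ℰ are associated to α or β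
    have key : (∀ t ∈ ℰ, Associated α t ∨ Associated β t) →
        ∃ p' q', PRrel α β p' q' ∧ p' < p := by
      intro hall
      obtain ⟨w, a', b', hab, hwE⟩ := mult_double hall
      have heq : α ^ (p - 1) = (w : R) * α ^ a' * β ^ (b' + 1) := by
        rw [hE, ← hEprod, hwE, pow_succ]
        ring
      rcases le_or_gt a' (p - 1) with hle | hgt
      · have hcancel : (w : R) * β ^ (b' + 1) = α ^ (p - 1 - a') := by
          have h2 : α ^ (p - 1) = α ^ a' * ((w : R) * β ^ (b' + 1)) := by
            rw [heq]; ring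
          have h3 : α ^ (p - 1) = α ^ a' * α ^ (p - 1 - a') := by
            rw [← pow_add]; congr 1; omega
          exact (mul_left_cancel₀ (pow_ne_zero _ hα.ne_zero) (h3.symm.trans h2)).symm
        rcases Nat.eq_zero_or_pos (p - 1 - a') with hz | hpos
        · exfalso
          rw [hz, pow_zero] at hcancel
          have hun : IsUnit ((w : R) * β ^ (b' + 1)) := hcancel ▸ isUnit_one
          exact pow_not_unit hβ.not_isUnit (by omega) (isUnit_of_mul_isUnit_right hun)
        · exact ⟨p - 1 - a', b' + 1, ⟨by omega, by omega, w, hcancel.symm⟩, by omega⟩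
      · exfalso
        have h4 : α ^ (p - 1) * ((w : R) * α ^ (a' - (p - 1)) * β ^ (b' + 1)) =
            α ^ (p - 1) * 1 := by
          rw [mul_one]
          calc α ^ (p - 1) * ((w : R) * α ^ (a' - (p - 1)) * β ^ (b' + 1))
              = (w : R) * (α ^ (p - 1) * α ^ (a' - (p - 1))) * β ^ (b' + 1) := by ring
            _ = (w : R) * α ^ a' * β ^ (b' + 1) := by
                rw [← pow_add]
                congr 3
                omega
            _ = α ^ (p - 1) := heq.symm
        have h5 := mul_left_cancel₀ (pow_ne_zero _ hα.ne_zero) h4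
        have hun : IsUnit ((w : R) * α ^ (a' - (p - 1)) * β ^ (b' + 1)) :=
          h5 ▸ isUnit_one
        exact pow_not_unit hβ.not_isUnit (by omega) (isUnit_of_mul_isUnit_right hun)
    -- case analysis on lengths
    rcases Nat.lt_trichotomy (Multiset.card ℰ + 1) (p - 1) with hcmp | hcmp | hcmp
    · -- drift of (β ::ₘ ℰ, rep (p-1) α) positive
      rcases lt_or_gt_of_ne hpq with h1 | h1
      · -- p < q : pure vs pure contradiction
        exfalso
        have hrel := lf_pair hlf (atoms_replicate hα) hGat
          (atoms_cons hβ hEatoms) (atoms_replicate hα)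
          (by rw [Multiset.prod_replicate, hGp]) (by rw [Multiset.prod_replicate, hFEprod])
          (by rw [Multiset.card_replicate, hGc]; omega)
          (by rw [Multiset.card_cons, Multiset.card_replicate]; omega)
        -- Rel (a • rep p α + b • rep (p-1) α) (a • G + b • (β ::ₘ ℰ))
        have hbmem : β ∈ (Multiset.card (Multiset.replicate (p - 1) α) -
            Multiset.card (β ::ₘ ℰ)) • G +
            (Multiset.card G - Multiset.card (Multiset.replicate p α)) • (β ::ₘ ℰ) := by
          refine Multiset.mem_add.mpr (Or.inr ?_)
          rw [Multiset.mem_nsmul_of_ne_zero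
            (by rw [Multiset.card_replicate, hGc]; omega)]
          exact Multiset.mem_cons_self _ _
        obtain ⟨x, hx, hass⟩ := rel_exists_right hrel hbmem
        rcases Multiset.mem_add.mp hx with hx' | hx' <;>
          · have hxα : x = α := Multiset.eq_of_mem_replicate (Multiset.mem_of_mem_nsmul hx')
            exact hne (hxα ▸ hass)
      · -- q < p : mixed, atoms of ℰ constrained
        have hrel := lf_pair hlf hGat (atoms_replicate hα)
          (atoms_cons hβ hEatoms) (atoms_replicate hα)
          (by rw [Multiset.prod_replicate, hGp]) (by rw [Multiset.prod_replicate, hFEprod])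
          (by rw [Multiset.card_replicate, hGc]; omega)
          (by rw [Multiset.card_cons, Multiset.card_replicate]; omega)
        -- Rel (a • G + b • rep (p-1) α) (a • rep p α + b • (β ::ₘ ℰ))
        apply key
        intro t ht
        have htmem : t ∈ (Multiset.card (Multiset.replicate (p - 1) α) -
            Multiset.card (β ::ₘ ℰ)) • Multiset.replicate p α +
            (Multiset.card (Multiset.replicate p α) - Multiset.card G) • (β ::ₘ ℰ) := by
          refine Multiset.mem_add.mpr (Or.inr ?_)
          rw [Multiset.mem_nsmul_of_ne_zero
            (by rw [Multiset.card_replicate, hGc]; omega)]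
          exact Multiset.mem_cons_of_mem ht
        obtain ⟨x, hx, hass⟩ := rel_exists_right hrel htmem
        rcases Multiset.mem_add.mp hx with hx' | hx'
        · exact Or.inr ((hGas x (Multiset.mem_of_mem_nsmul hx')).trans hass)
        · have hxα : x = α := Multiset.eq_of_mem_replicate (Multiset.mem_of_mem_nsmul hx')
          exact Or.inl (hxα ▸ hass)
    · -- equal lengths : direct LF contradiction
      exfalso
      have hrel := hlf (β ::ₘ ℰ) (Multiset.replicate (p - 1) α)
        (atoms_cons hβ hEatoms) (atoms_replicate hα)
        (by rw [hFEprod, Multiset.prod_replicate])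
        (by rw [Multiset.card_cons, Multiset.card_replicate]; omega)
      obtain ⟨y, hy, hass⟩ := rel_exists_left hrel (Multiset.mem_cons_self β ℰ)
      have hyα : y = α := Multiset.eq_of_mem_replicate hy
      exact hne (hyα ▸ hass).symm
    · -- drift of (rep (p-1) α, β ::ₘ ℰ) positive
      rcases lt_or_gt_of_ne hpq with h1 | h1
      · -- p < q : mixed, atoms of ℰ constrained
        have hrel := lf_pair hlf (atoms_replicate hα) hGat
          (atoms_replicate hα) (atoms_cons hβ hEatoms)
          (by rw [Multiset.prod_replicate, hGp]) (by rw [Multiset.prod_replicate, hFEprod])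
          (by rw [Multiset.card_replicate, hGc]; omega)
          (by rw [Multiset.card_cons, Multiset.card_replicate]; omega)
        -- Rel (a • rep p α + b • (β ::ₘ ℰ)) (a • G + b • rep (p-1) α)
        apply key
        intro t ht
        have htmem : t ∈ (Multiset.card (β ::ₘ ℰ) -
            Multiset.card (Multiset.replicate (p - 1) α)) • Multiset.replicate p α +
            (Multiset.card G - Multiset.card (Multiset.replicate p α)) • (β ::ₘ ℰ) := by
          refine Multiset.mem_add.mpr (Or.inr ?_)
          rw [Multiset.mem_nsmul_of_ne_zero
            (by rw [Multiset.card_replicate, hGc]; omega)]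
          exact Multiset.mem_cons_of_mem ht
        obtain ⟨y, hy, hass⟩ := rel_exists_left hrel htmem
        rcases Multiset.mem_add.mp hy with hy' | hy'
        · exact Or.inr ((hGas y (Multiset.mem_of_mem_nsmul hy')).trans hass.symm)
        · have hyα : y = α := Multiset.eq_of_mem_replicate (Multiset.mem_of_mem_nsmul hy')
          exact Or.inl (hyα ▸ hass).symm
      · -- q < p : pure vs pure contradiction
        exfalso
        have hrel := lf_pair hlf hGat (atoms_replicate hα)
          (atoms_replicate hα) (atoms_cons hβ hEatoms)
          (by rw [Multiset.prod_replicate, hGp]) (by rw [Multiset.prod_replicate, hFEprod])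
          (by rw [Multiset.card_replicate, hGc]; omega)
          (by rw [Multiset.card_cons, Multiset.card_replicate]; omega)
        -- Rel (a • G + b • (β ::ₘ ℰ)) (a • rep p α + b • rep (p-1) α)
        have hbmem : β ∈ (Multiset.card (β ::ₘ ℰ) -
            Multiset.card (Multiset.replicate (p - 1) α)) • G +
            (Multiset.card (Multiset.replicate p α) - Multiset.card G) • (β ::ₘ ℰ) := by
          refine Multiset.mem_add.mpr (Or.inr ?_)
          rw [Multiset.mem_nsmul_of_ne_zero
            (by rw [Multiset.card_replicate, hGc]; omega)]
          exact Multiset.mem_cons_self _ _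
        obtain ⟨y, hy, hass⟩ := rel_exists_left hrel hbmem
        rcases Multiset.mem_add.mp hy with hy' | hy' <;>
          · have hyα : y = α := Multiset.eq_of_mem_replicate (Multiset.mem_of_mem_nsmul hy')
            exact hne (hyα ▸ hass).symm
end LFaux

end Descent
section PRFalse

open Multiset

namespace LFaux

variable {R : Type*} [CommRing R] [IsDomain R] [IsLocalRing R]

theorem PR_false (hat : IsAtomicDomain R) (hlf : IsLengthFactorialDomain R)
    {α β : R} (hα : Irreducible α) (hβ : Irreducible β) (hne : ¬ Associated α β)
    (hex : ∃ p q, PRrel α β p q) : False := by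
  classical
  have hex' : ∃ p, ∃ q, PRrel α β p q := hex
  obtain ⟨q₀, hpr⟩ := Nat.find_spec hex'
  set p₀ := Nat.find hex' with hp₀def
  have hmin : ∀ p' < p₀, ¬ ∃ q', PRrel α β p' q' := fun p' hp' => Nat.find_min hex' hp'
  have hp2 : 2 ≤ p₀ := (hpr.two_le hα hβ hne).1
  have hq2 : 2 ≤ q₀ := (hpr.two_le hα hβ hne).2
  have hpq : p₀ ≠ q₀ := PR_ne hlf hα hβ hne hpr
  have hnd1 : ¬ β ∣ α ^ (p₀ - 1) := by
    intro hd
    obtain ⟨p', q', h', hlt⟩ := descent hat hlf hα hβ hne hpr hd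
    exact hmin p' hlt ⟨q', h'⟩
  have hnd2 : ¬ α ∣ β ^ (q₀ - 1) := by
    intro hd
    obtain ⟨q', p', h', hlt⟩ := descent hat hlf hβ hα (fun h' => hne h'.symm) hpr.swap hd
    have h'' := h'.swap
    have hpar := PR_parallel hlf hα hβ hne hpr h''
    -- hpar : p₀ * q' = p' * q₀ , hlt : q' < q₀
    have hp'lt : p' < p₀ := by
      by_contra hge
      push_neg at hge
      have h1 : p₀ * q' < p₀ * q₀ := mul_lt_mul_of_pos_left hlt (by omega)
      have h2 : p₀ * q₀ ≤ p' * q₀ := Nat.mul_le_mul_right _ hge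
      omega
    exact hmin p' hp'lt ⟨q', h''⟩
  obtain ⟨hp1, hq1, u, hu⟩ := hpr
  set g := β + (↑u⁻¹ : R) * α ^ (p₀ - 1) with hgdef
  set h := α + β ^ (q₀ - 1) with hhdef
  have e1 : α * α ^ (p₀ - 1) = α ^ p₀ := by
    rw [← pow_succ']; congr 1; omega
  have e2 : β * β ^ (q₀ - 1) = β ^ q₀ := by
    rw [← pow_succ']; congr 1; omega
  have hkey : α * g = β * h := by
    rw [hgdef, hhdef]
    calc α * (β + ↑u⁻¹ * α ^ (p₀ - 1)) = α * β + ↑u⁻¹ * (α * α ^ (p₀ - 1)) := by ring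
      _ = α * β + ↑u⁻¹ * α ^ p₀ := by rw [e1]
      _ = α * β + ↑u⁻¹ * ((u : R) * β ^ q₀) := by rw [hu]
      _ = α * β + β ^ q₀ := by rw [← mul_assoc, Units.inv_mul, one_mul]
      _ = α * β + β * β ^ (q₀ - 1) := by rw [e2]
      _ = β * (α + β ^ (q₀ - 1)) := by ring
  have hg0 : g ≠ 0 := by
    intro h0
    have hβeq : β = -((↑u⁻¹ : R) * α ^ (p₀ - 1)) := eq_neg_of_add_eq_zero_left h0
    rcases Nat.lt_or_ge p₀ 3 with h3 | h3
    · have hp2' : p₀ = 2 := by omega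
      apply hne
      refine ⟨-u⁻¹, ?_⟩
      rw [Units.val_neg, hβeq, hp2']
      norm_num
      ring
    · have heq : β = (-(↑u⁻¹ : R) * α) * α ^ (p₀ - 2) := by
        have e3 : α * α ^ (p₀ - 2) = α ^ (p₀ - 1) := by
          rw [← pow_succ']; congr 1; omega
        rw [hβeq, ← e3]; ring
      rcases hβ.isUnit_or_isUnit heq with hun | hun
      · exact hα.not_isUnit (isUnit_of_mul_isUnit_right hun)
      · exact pow_not_unit hα.not_isUnit (by omega) hun
  have hgu : ¬ IsUnit g := by
    rw [hgdef]
    refine nonunit_add hβ.not_isUnit (fun hun => ?_)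
    exact pow_not_unit hα.not_isUnit (by omega) (isUnit_of_mul_isUnit_right hun)
  have hh0 : h ≠ 0 := by
    intro h0
    have hαeq : α = -(β ^ (q₀ - 1)) := eq_neg_of_add_eq_zero_left h0
    rcases Nat.lt_or_ge q₀ 3 with h3 | h3
    · have hq2' : q₀ = 2 := by omega
      apply hne
      refine ⟨-1, ?_⟩
      rw [hαeq, hq2']
      norm_num
    · have heq : α = (-β) * β ^ (q₀ - 2) := by
        have e3 : β * β ^ (q₀ - 2) = β ^ (q₀ - 1) := by
          rw [← pow_succ']; congr 1; omega
        rw [hαeq, ← e3]; ring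
      rcases hα.isUnit_or_isUnit heq with hun | hun
      · exact hβ.not_isUnit ((IsUnit.neg_iff _).mp hun)
      · exact pow_not_unit hβ.not_isUnit (by omega) hun
  have hhu : ¬ IsUnit h := by
    rw [hhdef]
    exact nonunit_add hα.not_isUnit (pow_not_unit hβ.not_isUnit (by omega))
  obtain ⟨𝒢, hGne, hGatoms, hGprod⟩ := factor hat hg0 hgu
  obtain ⟨ℋ, hHne, hHatoms, hHprod⟩ := factor hat hh0 hhu
  have hGcl : ∀ t ∈ 𝒢, ¬ Associated α t ∧ ¬ Associated β t := by
    intro t ht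
    have htd : t ∣ g := hGprod ▸ Multiset.dvd_prod ht
    constructor
    · intro hass
      have hαg : α ∣ g := hass.dvd.trans htd
      have hβeq : β = g - (↑u⁻¹ : R) * α ^ (p₀ - 1) := by rw [hgdef]; ring
      have hαβ : α ∣ β := by
        rw [hβeq]
        exact dvd_sub hαg ((dvd_pow_self α (n := p₀ - 1) (by omega)).mul_left _)
      exact hne (hα.associated_of_dvd hβ hαβ)
    · intro hass
      have hβg : β ∣ g := hass.dvd.trans htd
      have hpoweq : (↑u⁻¹ : R) * α ^ (p₀ - 1) = g - β := by rw [hgdef]; ring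
      have hβpow : β ∣ (↑u⁻¹ : R) * α ^ (p₀ - 1) := by
        rw [hpoweq]; exact dvd_sub hβg dvd_rfl
      exact hnd1 ((Units.dvd_mul_left).mp hβpow)
  have hHcl : ∀ t ∈ ℋ, ¬ Associated α t ∧ ¬ Associated β t := by
    intro t ht
    have htd : t ∣ h := hHprod ▸ Multiset.dvd_prod ht
    constructor
    · intro hass
      have hαh : α ∣ h := hass.dvd.trans htd
      have hpoweq : β ^ (q₀ - 1) = h - α := by rw [hhdef]; ring
      have : α ∣ β ^ (q₀ - 1) := by rw [hpoweq]; exact dvd_sub hαh dvd_rfl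
      exact hnd2 this
    · intro hass
      have hβh : β ∣ h := hass.dvd.trans htd
      have hαeq : α = h - β ^ (q₀ - 1) := by rw [hhdef]; ring
      have hβα : β ∣ α := by
        rw [hαeq]
        exact dvd_sub hβh (dvd_pow_self β (n := q₀ - 1) (by omega))
      exact hne (hβ.associated_of_dvd hα hβα).symm
  have hF4prod : (α ::ₘ 𝒢).prod = (β ::ₘ ℋ).prod := by
    rw [Multiset.prod_cons, Multiset.prod_cons, hGprod, hHprod, hkey]
  obtain ⟨G, hGat, hGas, hGc, hGp⟩ := PR_G hβ (⟨hp1, hq1, u, hu⟩ : PRrel α β p₀ q₀)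
  -- count values
  have cαF : acount α (Multiset.replicate p₀ α) = p₀ :=
    acount_replicate_pos _ (Associated.refl α)
  have cβF : acount β (Multiset.replicate p₀ α) = 0 :=
    acount_replicate_neg _ (fun hc => hne hc.symm)
  have cαG : acount α G = 0 :=
    acount_eq_zero (fun x hx hc => hne (hc.trans (hGas x hx).symm))
  have cβG : acount β G = q₀ := by rw [acount_eq_card hGas, hGc]
  have cαF4 : acount α (α ::ₘ 𝒢) = acount α 𝒢 + 1 := acount_cons_pos _ (Associated.refl α)
  have cα𝒢 : acount α 𝒢 = 0 := acount_eq_zero (fun t ht => (hGcl t ht).1)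
  have cβF4 : acount β (α ::ₘ 𝒢) = 0 := by
    rw [acount_cons_neg _ (fun hc => hne hc.symm), acount_eq_zero (fun t ht => (hGcl t ht).2)]
  have cαG4 : acount α (β ::ₘ ℋ) = 0 := by
    rw [acount_cons_neg _ hne, acount_eq_zero (fun t ht => (hHcl t ht).1)]
  have cβG4 : acount β (β ::ₘ ℋ) = acount β ℋ + 1 := acount_cons_pos _ (Associated.refl β)
  have cβℋ : acount β ℋ = 0 := acount_eq_zero (fun t ht => (hHcl t ht).2)
  rw [cα𝒢] at cαF4
  rw [cβℋ] at cβG4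
  rcases Nat.lt_trichotomy (Multiset.card (α ::ₘ 𝒢)) (Multiset.card (β ::ₘ ℋ)) with hcc | hcc | hcc
  · -- |F4| < |G4|
    rcases lt_or_gt_of_ne hpq with h1 | h1
    · -- p₀ < q₀
      have hrel := lf_pair hlf (atoms_replicate hα) hGat
        (atoms_cons hα hGatoms) (atoms_cons hβ hHatoms)
        (by rw [Multiset.prod_replicate, hGp]) hF4prod
        (by rw [Multiset.card_replicate, hGc]; omega) hcc
      have hcα := acount_rel_eq (γ := α) hrel
      have hcβ := acount_rel_eq (γ := β) hrel
      rw [acount_comb, acount_comb, cαF, cαG, cαF4, cαG4] at hcα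
      rw [acount_comb, acount_comb, cβF, cβG, cβF4, cβG4] at hcβ
      simp only [mul_zero, add_zero, zero_add, mul_one] at hcα hcβ
      -- hcα : a * p₀ = b , hcβ : b = a * q₀
      have ha : 0 < Multiset.card (β ::ₘ ℋ) - Multiset.card (α ::ₘ 𝒢) := by omega
      exact hpq (Nat.eq_of_mul_eq_mul_left ha (hcα.trans hcβ))
    · -- q₀ < p₀
      have hrel := lf_pair hlf hGat (atoms_replicate hα)
        (atoms_cons hα hGatoms) (atoms_cons hβ hHatoms)
        (by rw [Multiset.prod_replicate, hGp]) hF4prod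
        (by rw [Multiset.card_replicate, hGc]; omega) hcc
      have hcα := acount_rel_eq (γ := α) hrel
      rw [acount_comb, acount_comb, cαF, cαG, cαF4, cαG4] at hcα
      simp only [mul_zero, add_zero, zero_add, mul_one] at hcα
      -- hcα : 0 = a * p₀ + b
      have h0 : (Multiset.card (β ::ₘ ℋ) - Multiset.card (α ::ₘ 𝒢)) * p₀ = 0 :=
        Nat.eq_zero_of_add_eq_zero_right hcα.symm
      rcases Nat.mul_eq_zero.mp h0 with h0' | h0'
      · omega
      · omega
  · -- equal lengths
    have hrel := hlf (α ::ₘ 𝒢) (β ::ₘ ℋ) (atoms_cons hα hGatoms) (atoms_cons hβ hHatoms)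
      hF4prod hcc
    obtain ⟨y, hy, hass⟩ := rel_exists_left hrel (Multiset.mem_cons_self α 𝒢)
    rw [Multiset.mem_cons] at hy
    rcases hy with rfl | hy
    · exact hne hass
    · exact (hHcl y hy).1 hass
  · -- |G4| < |F4|
    rcases lt_or_gt_of_ne hpq with h1 | h1
    · -- p₀ < q₀
      have hrel := lf_pair hlf (atoms_replicate hα) hGat
        (atoms_cons hβ hHatoms) (atoms_cons hα hGatoms)
        (by rw [Multiset.prod_replicate, hGp]) hF4prod.symm
        (by rw [Multiset.card_replicate, hGc]; omega) hcc
      have hcβ := acount_rel_eq (γ := β) hrel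
      rw [acount_comb, acount_comb, cβF, cβG, cβF4, cβG4] at hcβ
      simp only [mul_zero, add_zero, zero_add, mul_one] at hcβ
      -- hcβ : 0 = a * q₀ + b
      have h0 : (Multiset.card (α ::ₘ 𝒢) - Multiset.card (β ::ₘ ℋ)) * q₀ = 0 :=
        Nat.eq_zero_of_add_eq_zero_right hcβ.symm
      rcases Nat.mul_eq_zero.mp h0 with h0' | h0'
      · omega
      · omega
    · -- q₀ < p₀
      have hrel := lf_pair hlf hGat (atoms_replicate hα)
        (atoms_cons hβ hHatoms) (atoms_cons hα hGatoms)
        (by rw [Multiset.prod_replicate, hGp]) hF4prod.symm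
        (by rw [Multiset.card_replicate, hGc]; omega) hcc
      have hcα := acount_rel_eq (γ := α) hrel
      have hcβ := acount_rel_eq (γ := β) hrel
      rw [acount_comb, acount_comb, cαF, cαG, cαF4, cαG4] at hcα
      rw [acount_comb, acount_comb, cβF, cβG, cβF4, cβG4] at hcβ
      simp only [mul_zero, add_zero, zero_add, mul_one] at hcα hcβ
      -- hcα : b = a * p₀ , hcβ : a * q₀ = b
      have ha : 0 < Multiset.card (α ::ₘ 𝒢) - Multiset.card (β ::ₘ ℋ) := by omega
      exact hpq (Nat.eq_of_mul_eq_mul_left ha (hcβ.trans hcα)).symm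

end LFaux

end PRFalse
section Main

open Multiset

namespace LFaux

variable {R : Type*} [CommRing R] [IsDomain R] [IsLocalRing R]

theorem atoms_assoc (hat : IsAtomicDomain R)
    (hCK : ∃ F : Finset R, ∀ a : R, Irreducible a → ∃ b ∈ F, Associated a b)
    (hlf : IsLengthFactorialDomain R)
    {α β : R} (hα : Irreducible α) (hβ : Irreducible β) : Associated α β := by
  classical
  by_contra hne
  have hne' : ¬ Associated β α := fun h' => hne h'.symm
  -- minimal j ≥ 2 with α ∣ β^j
  have hex1 : ∃ n : ℕ, n ≠ 0 ∧ α ∣ β ^ n := exists_pow_dvd hat hCK hα hβ hne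
  have hex2 : ∃ n : ℕ, n ≠ 0 ∧ β ∣ α ^ n := exists_pow_dvd hat hCK hβ hα hne'
  set j := Nat.find hex1 with hjdef
  set k := Nat.find hex2 with hkdef
  obtain ⟨hj0, C, hC⟩ := Nat.find_spec hex1
  obtain ⟨hk0, D, hD⟩ := Nat.find_spec hex2
  have hj2 : 2 ≤ j := by
    rcases Nat.lt_or_ge j 2 with hlt | hge
    · exfalso
      have hj1 : j = 1 := by omega
      apply hne
      refine hα.associated_of_dvd hβ ?_
      rw [← pow_one β, ← hj1]
      exact ⟨C, hC⟩
    · exact hge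
  have hk2 : 2 ≤ k := by
    rcases Nat.lt_or_ge k 2 with hlt | hge
    · exfalso
      have hk1 : k = 1 := by omega
      apply hne'
      refine hβ.associated_of_dvd hα ?_
      rw [← pow_one α, ← hk1]
      exact ⟨D, hD⟩
    · exact hge
  have hC0 : C ≠ 0 := by
    rintro rfl
    rw [mul_zero] at hC
    exact hβ.ne_zero (pow_eq_zero_iff (by omega) |>.mp hC)
  have hD0 : D ≠ 0 := by
    rintro rfl
    rw [mul_zero] at hD
    exact hα.ne_zero (pow_eq_zero_iff (by omega) |>.mp hD)
  have hCu : ¬ IsUnit C := by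
    intro hu
    have hass : Associated α (β ^ j) := ⟨hu.unit, by rw [IsUnit.unit_spec]; exact hC.symm⟩
    have hirr : Irreducible (β ^ j) := hass.irreducible hα
    have heq : β ^ j = β * β ^ (j - 1) := by rw [← pow_succ']; congr 1; omega
    rcases hirr.isUnit_or_isUnit heq with hun | hun
    · exact hβ.not_isUnit hun
    · exact pow_not_unit hβ.not_isUnit (by omega) hun
  have hDu : ¬ IsUnit D := by
    intro hu
    have hass : Associated β (α ^ k) := ⟨hu.unit, by rw [IsUnit.unit_spec]; exact hD.symm⟩
    have hirr : Irreducible (α ^ k) := hass.irreducible hβ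
    have heq : α ^ k = α * α ^ (k - 1) := by rw [← pow_succ']; congr 1; omega
    rcases hirr.isUnit_or_isUnit heq with hun | hun
    · exact hα.not_isUnit hun
    · exact pow_not_unit hα.not_isUnit (by omega) hun
  have hβC : ¬ β ∣ C := by
    rintro ⟨C₂, hC₂⟩
    have h1 : β * β ^ (j - 1) = β * (α * C₂) := by
      have e1 : β * β ^ (j - 1) = β ^ j := by rw [← pow_succ']; congr 1; omega
      rw [e1, hC, hC₂]; ring
    have hcancel : β ^ (j - 1) = α * C₂ := mul_left_cancel₀ hβ.ne_zero h1
    exact Nat.find_min hex1 (show j - 1 < j by omega) ⟨by omega, C₂, hcancel⟩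
  have hαD : ¬ α ∣ D := by
    rintro ⟨D₂, hD₂⟩
    have h1 : α * α ^ (k - 1) = α * (β * D₂) := by
      have e1 : α * α ^ (k - 1) = α ^ k := by rw [← pow_succ']; congr 1; omega
      rw [e1, hD, hD₂]; ring
    have hcancel : α ^ (k - 1) = β * D₂ := mul_left_cancel₀ hα.ne_zero h1
    exact Nat.find_min hex2 (show k - 1 < k by omega) ⟨by omega, D₂, hcancel⟩
  obtain ⟨𝒞, h𝒞ne, h𝒞atoms, h𝒞prod⟩ := factor hat hC0 hCu
  obtain ⟨𝒟, h𝒟ne, h𝒟atoms, h𝒟prod⟩ := factor hat hD0 hDu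
  have hCF : (α ::ₘ 𝒞).prod = (Multiset.replicate j β).prod := by
    rw [Multiset.prod_cons, h𝒞prod, Multiset.prod_replicate]; exact hC.symm
  have hDF : (β ::ₘ 𝒟).prod = (Multiset.replicate k α).prod := by
    rw [Multiset.prod_cons, h𝒟prod, Multiset.prod_replicate]; exact hD.symm
  rcases Nat.lt_trichotomy (Multiset.card 𝒞 + 1) j with hc1 | hc1 | hc1
  rotate_left
  · -- equal : direct LF contradiction
    have hrel := hlf (α ::ₘ 𝒞) (Multiset.replicate j β) (atoms_cons hα h𝒞atoms)
      (atoms_replicate hβ) hCF (by rw [Multiset.card_cons, Multiset.card_replicate]; omega)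
    obtain ⟨y, hy, hass⟩ := rel_exists_left hrel (Multiset.mem_cons_self α 𝒞)
    exact hne ((Multiset.eq_of_mem_replicate hy) ▸ hass)
  rotate_left
  -- now hc1 : card 𝒞 + 1 < j  (first goal) and j < card 𝒞 + 1 (second)
  all_goals rcases Nat.lt_trichotomy (Multiset.card 𝒟 + 1) k with hc2 | hc2 | hc2
  · -- (a) both lt
    have hrel := lf_pair hlf (atoms_cons hα h𝒞atoms) (atoms_replicate hβ)
      (atoms_cons hβ h𝒟atoms) (atoms_replicate hα) hCF hDF
      (by rw [Multiset.card_cons, Multiset.card_replicate]; omega)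
      (by rw [Multiset.card_cons, Multiset.card_replicate]; omega)
    -- Rel (a•(α::𝒞) + b•(rep k α)) (a•(rep j β) + b•(β::𝒟))
    have hamem : α ∈ (Multiset.card (Multiset.replicate k α) - Multiset.card (β ::ₘ 𝒟)) •
        (α ::ₘ 𝒞) + (Multiset.card (Multiset.replicate j β) - Multiset.card (α ::ₘ 𝒞)) •
        Multiset.replicate k α := by
      refine Multiset.mem_add.mpr (Or.inl ?_)
      rw [Multiset.mem_nsmul_of_ne_zero
        (by rw [Multiset.card_replicate, Multiset.card_cons]; omega)]
      exact Multiset.mem_cons_self _ _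
    obtain ⟨y, hy, hass⟩ := rel_exists_left hrel hamem
    rcases Multiset.mem_add.mp hy with hy' | hy'
    · exact hne ((Multiset.eq_of_mem_replicate (Multiset.mem_of_mem_nsmul hy')) ▸ hass)
    · have hy'' := Multiset.mem_of_mem_nsmul hy'
      rw [Multiset.mem_cons] at hy''
      rcases hy'' with rfl | hy''
      · exact hne hass
      · exact hαD (hass.dvd.trans ((h𝒟prod ▸ Multiset.dvd_prod hy'') : y ∣ D))
  · -- hc1 lt, hc2 eq : direct LF contradiction on D relation
    have hrel := hlf (β ::ₘ 𝒟) (Multiset.replicate k α) (atoms_cons hβ h𝒟atoms)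
      (atoms_replicate hα) hDF (by rw [Multiset.card_cons, Multiset.card_replicate]; omega)
    obtain ⟨y, hy, hass⟩ := rel_exists_left hrel (Multiset.mem_cons_self β 𝒟)
    exact hne' ((Multiset.eq_of_mem_replicate hy) ▸ hass)
  · -- (c) hc1 lt, hc2 gt : 𝒞 is pure in α, power relation
    have hrel := lf_pair hlf (atoms_cons hα h𝒞atoms) (atoms_replicate hβ)
      (atoms_replicate hα) (atoms_cons hβ h𝒟atoms) hCF hDF.symm
      (by rw [Multiset.card_cons, Multiset.card_replicate]; omega)
      (by rw [Multiset.card_cons, Multiset.card_replicate]; omega)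
    -- Rel (a•(α::𝒞) + b•(β::𝒟)) (a•(rep j β) + b•(rep k α))
    have hall : ∀ t ∈ 𝒞, Associated α t := by
      intro t ht
      have htmem : t ∈ (Multiset.card (β ::ₘ 𝒟) - Multiset.card (Multiset.replicate k α)) •
          (α ::ₘ 𝒞) + (Multiset.card (Multiset.replicate j β) - Multiset.card (α ::ₘ 𝒞)) •
          (β ::ₘ 𝒟) := by
        refine Multiset.mem_add.mpr (Or.inl ?_)
        rw [Multiset.mem_nsmul_of_ne_zero
          (by rw [Multiset.card_replicate, Multiset.card_cons]; omega)]
        exact Multiset.mem_cons_of_mem ht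
      obtain ⟨y, hy, hass⟩ := rel_exists_left hrel htmem
      rcases Multiset.mem_add.mp hy with hy' | hy'
      · exfalso
        have hyβ : y = β := Multiset.eq_of_mem_replicate (Multiset.mem_of_mem_nsmul hy')
        exact hβC ((hyβ ▸ hass).symm.dvd.trans ((h𝒞prod ▸ Multiset.dvd_prod ht) : t ∣ C))
      · have hyα : y = α := Multiset.eq_of_mem_replicate (Multiset.mem_of_mem_nsmul hy')
        exact (hyα ▸ hass).symm
    obtain ⟨w, hw⟩ := mult_single hall
    have hpow : β ^ j = (w : R) * α ^ (Multiset.card 𝒞 + 1) := by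
      rw [hC, ← h𝒞prod, hw, pow_succ]; ring
    refine PR_false hat hlf hα hβ hne ⟨Multiset.card 𝒞 + 1, j, by omega, by omega, w⁻¹, ?_⟩
    rw [hpow, ← mul_assoc, Units.inv_mul, one_mul]
  · -- (d) hc1 gt, hc2 lt : 𝒟 is pure in β, power relation
    have hrel := lf_pair hlf (atoms_replicate hβ) (atoms_cons hα h𝒞atoms)
      (atoms_cons hβ h𝒟atoms) (atoms_replicate hα) hCF.symm hDF
      (by rw [Multiset.card_cons, Multiset.card_replicate]; omega)
      (by rw [Multiset.card_cons, Multiset.card_replicate]; omega)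
    -- Rel (a•(rep j β) + b•(rep k α)) (a•(α::𝒞) + b•(β::𝒟))
    have hall : ∀ t ∈ 𝒟, Associated β t := by
      intro t ht
      have htmem : t ∈ (Multiset.card (Multiset.replicate k α) - Multiset.card (β ::ₘ 𝒟)) •
          (α ::ₘ 𝒞) + (Multiset.card (α ::ₘ 𝒞) - Multiset.card (Multiset.replicate j β)) •
          (β ::ₘ 𝒟) := by
        refine Multiset.mem_add.mpr (Or.inr ?_)
        rw [Multiset.mem_nsmul_of_ne_zero
          (by rw [Multiset.card_replicate, Multiset.card_cons]; omega)]
        exact Multiset.mem_cons_of_mem ht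
      obtain ⟨x, hx, hass⟩ := rel_exists_right hrel htmem
      rcases Multiset.mem_add.mp hx with hx' | hx'
      · have hxβ : x = β := Multiset.eq_of_mem_replicate (Multiset.mem_of_mem_nsmul hx')
        exact hxβ ▸ hass
      · exfalso
        have hxα : x = α := Multiset.eq_of_mem_replicate (Multiset.mem_of_mem_nsmul hx')
        exact hαD ((hxα ▸ hass).dvd.trans ((h𝒟prod ▸ Multiset.dvd_prod ht) : t ∣ D))
    obtain ⟨w, hw⟩ := mult_single hall
    have hpow : α ^ k = (w : R) * β ^ (Multiset.card 𝒟 + 1) := by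
      rw [hD, ← h𝒟prod, hw, pow_succ]; ring
    exact PR_false hat hlf hα hβ hne ⟨k, Multiset.card 𝒟 + 1, by omega, by omega, w, hpow⟩
  · -- hc1 gt, hc2 eq : direct LF contradiction
    have hrel := hlf (β ::ₘ 𝒟) (Multiset.replicate k α) (atoms_cons hβ h𝒟atoms)
      (atoms_replicate hα) hDF (by rw [Multiset.card_cons, Multiset.card_replicate]; omega)
    obtain ⟨y, hy, hass⟩ := rel_exists_left hrel (Multiset.mem_cons_self β 𝒟)
    exact hne' ((Multiset.eq_of_mem_replicate hy) ▸ hass)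
  · -- (b) both gt
    have hrel := lf_pair hlf (atoms_replicate hβ) (atoms_cons hα h𝒞atoms)
      (atoms_replicate hα) (atoms_cons hβ h𝒟atoms) hCF.symm hDF.symm
      (by rw [Multiset.card_cons, Multiset.card_replicate]; omega)
      (by rw [Multiset.card_cons, Multiset.card_replicate]; omega)
    -- Rel (a•(rep j β) + b•(β::𝒟)) (a•(α::𝒞) + b•(rep k α))
    have hbmem : β ∈ (Multiset.card (β ::ₘ 𝒟) - Multiset.card (Multiset.replicate k α)) •
        Multiset.replicate j β + (Multiset.card (α ::ₘ 𝒞) -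
        Multiset.card (Multiset.replicate j β)) • (β ::ₘ 𝒟) := by
      refine Multiset.mem_add.mpr (Or.inr ?_)
      rw [Multiset.mem_nsmul_of_ne_zero
        (by rw [Multiset.card_replicate, Multiset.card_cons]; omega)]
      exact Multiset.mem_cons_self _ _
    obtain ⟨y, hy, hass⟩ := rel_exists_left hrel hbmem
    rcases Multiset.mem_add.mp hy with hy' | hy'
    · have hy'' := Multiset.mem_of_mem_nsmul hy'
      rw [Multiset.mem_cons] at hy''
      rcases hy'' with rfl | hy''
      · exact hne' hass
      · exact hβC (hass.dvd.trans ((h𝒞prod ▸ Multiset.dvd_prod hy'') : y ∣ C))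
    · exact hne' ((Multiset.eq_of_mem_replicate (Multiset.mem_of_mem_nsmul hy')) ▸ hass)

theorem irred_prime (hat : IsAtomicDomain R)
    (hCK : ∃ F : Finset R, ∀ a : R, Irreducible a → ∃ b ∈ F, Associated a b)
    (hlf : IsLengthFactorialDomain R) {p : R} (hp : Irreducible p) : Prime p := by
  refine ⟨hp.ne_zero, hp.not_isUnit, ?_⟩
  intro a b hab
  by_cases ha0 : a = 0
  · left; rw [ha0]; exact dvd_zero p
  by_cases hau : IsUnit a
  · right
    obtain ⟨v, rfl⟩ := hau
    exact (Units.dvd_mul_left).mp hab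
  · left
    obtain ⟨q, hq, hqa⟩ := exists_atom_dvd hat ha0 hau
    exact (atoms_assoc hat hCK hlf hp hq).dvd.trans hqa

end LFaux

end Main
/-- A local atomic domain with only finitely many irreducible elements up to associates
(a local Cohen–Kaplansky domain) which is length-factorial is a unique factorization
domain. -/
theorem local_CK_lengthFactorial_is_UFD (R : Type*) [CommRing R] [IsDomain R]
    [IsLocalRing R] (hat : IsAtomicDomain R)
    (hCK : ∃ F : Finset R, ∀ a : R, Irreducible a → ∃ b ∈ F, Associated a b)
    (hlf : IsLengthFactorialDomain R) :
    UniqueFactorizationMonoid R := by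
  apply UniqueFactorizationMonoid.of_exists_prime_factors
  intro a ha
  by_cases hu : IsUnit a
  · refine ⟨0, by simp, ?_⟩
    rw [Multiset.prod_zero]
    exact (associated_one_iff_isUnit.mpr hu).symm
  · obtain ⟨s, hs, hsp⟩ := hat a ha hu
    exact ⟨s, fun b hb => LFaux.irred_prime hat hCK hlf (hs b hb), hsp ▸ Associated.refl _⟩
end

section
/- Let K be a number field whose class number is 2. Then the ring of integers of K is a half-factorial domain that is not a unique factorization domain. -/
/-- `D` is a *half-factorial domain* if it is atomic and whenever
`x₁ ⋯ xₙ = y₁ ⋯ yₘ` with all `xᵢ` and `yⱼ` irreducible, then `n = m`. -/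
def IsHalfFactorialDomain (D : Type*) [CommRing D] [IsDomain D] : Prop :=
  IsAtomicDomain D ∧
    ∀ s t : Multiset D, (∀ a ∈ s, Irreducible a) → (∀ a ∈ t, Irreducible a) →
      s.prod = t.prod → Multiset.card s = Multiset.card t

open UniqueFactorizationMonoid nonZeroDivisors

section PIDAux
variable {R : Type*} [CommRing R] [IsDomain R] [IsDedekindDomain R]

theorem isPrincipalIdealRing_of_ufm [UniqueFactorizationMonoid R] : IsPrincipalIdealRing R := by
  apply IsPrincipalIdealRing.of_prime
  intro P hP
  rcases eq_or_ne P ⊥ with rfl | hP0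
  · exact ⟨0, by simp [Set.singleton_zero]⟩
  · obtain ⟨x, hxP, hx0⟩ := Submodule.exists_mem_ne_zero_of_ne_bot hP0
    have hprod : Associated (factors x).prod x := factors_prod hx0
    obtain ⟨u, hu⟩ := hprod
    have hmem : (factors x).prod ∈ P := by
      have : (factors x).prod = x * ↑u⁻¹ := (Units.eq_mul_inv_iff_mul_eq u).mpr hu
      rw [this]; exact Ideal.mul_mem_right _ _ hxP
    obtain ⟨p, hpf, hpP⟩ := (hP.multiset_prod_mem_iff_exists_mem _).mp hmem
    have hp : Prime p := prime_of_factor p hpf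
    have hsp : (Ideal.span {p} : Ideal R).IsPrime :=
      (Ideal.span_singleton_prime hp.ne_zero).mpr hp
    have hmax : (Ideal.span {p} : Ideal R).IsMaximal :=
      Ring.DimensionLEOne.maximalOfPrime (by simpa using hp.ne_zero) hsp
    have hle : Ideal.span {p} ≤ P := by simpa [Ideal.span_le] using hpP
    exact ⟨p, (hmax.eq_of_le hP.ne_top hle).symm⟩
end PIDAux

section Carlitz
variable {R : Type*} [CommRing R] [IsDomain R] [IsDedekindDomain R]

open Classical in
/-- Carlitz key lemma: in a Dedekind domain with class group of order 2, the ideal generated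
by an irreducible element has either one prime factor (principal) or two (both nonprincipal);
in both cases `2 * L = N + 2` where `L` is the number of prime factors and `N` the number
of nonprincipal ones. -/
theorem carlitz_key [Fintype (ClassGroup R)] (hcard : Fintype.card (ClassGroup R) = 2)
    {x : R} (hx : Irreducible x) :
    2 * Multiset.card (normalizedFactors (Ideal.span {x} : Ideal R)) =
      Multiset.card ((normalizedFactors (Ideal.span {x} : Ideal R)).filter
        (fun P => ¬Submodule.IsPrincipal P)) + 2 := by
  set I : Ideal R := Ideal.span {x} with hI
  have hI0 : I ≠ 0 := by
    simpa [hI, Ideal.span_singleton_eq_bot] using hx.ne_zero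
  have hIu : ¬IsUnit I := by
    rw [Ideal.isUnit_iff, Ideal.span_singleton_eq_top]
    exact hx.not_isUnit
  have hFprod : (normalizedFactors I).prod = I :=
    associated_iff_eq.mp (prod_normalizedFactors hI0)
  by_cases hall : ∀ P ∈ normalizedFactors I, ¬Submodule.IsPrincipal P
  · -- all factors nonprincipal: exactly two of them
    have hfilter : (normalizedFactors I).filter (fun P => ¬Submodule.IsPrincipal P)
        = normalizedFactors I := Multiset.filter_eq_self.mpr hall
    rw [hfilter]
    suffices hc : Multiset.card (normalizedFactors I) = 2 by rw [hc]
    -- nonempty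
    have hne : normalizedFactors I ≠ 0 := by
      intro h0
      apply hIu
      rw [← hFprod, h0]
      simp
    obtain ⟨P, hP⟩ := Multiset.exists_mem_of_ne_zero hne
    obtain ⟨F₁, hF1⟩ := Multiset.exists_cons_of_mem hP
    rw [hF1] at hFprod ⊢
    have hP0 : P ≠ 0 := (prime_of_normalized_factor P hP).ne_zero
    have hF₁ne : F₁ ≠ 0 := by
      intro h0
      rw [h0] at hFprod
      simp only [Multiset.prod_cons, Multiset.prod_zero, mul_one] at hFprod
      exact hall P hP (hFprod ▸ ⟨x, rfl⟩)
    obtain ⟨Q, hQ'⟩ := Multiset.exists_mem_of_ne_zero hF₁ne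
    obtain ⟨F₂, rfl⟩ := Multiset.exists_cons_of_mem hQ'
    have hQmem : Q ∈ normalizedFactors I := by rw [hF1]; simp
    have hQ0 : Q ≠ 0 := (prime_of_normalized_factor Q hQmem).ne_zero
    -- class group argument: P * Q is principal
    have hPnz : P ∈ (Ideal R)⁰ := mem_nonZeroDivisors_of_ne_zero hP0
    have hQnz : Q ∈ (Ideal R)⁰ := mem_nonZeroDivisors_of_ne_zero hQ0
    have hPne1 : ClassGroup.mk0 ⟨P, hPnz⟩ ≠ 1 := by
      rw [Ne, ClassGroup.mk0_eq_one_iff]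
      exact hall P hP
    have hQne1 : ClassGroup.mk0 ⟨Q, hQnz⟩ ≠ 1 := by
      rw [Ne, ClassGroup.mk0_eq_one_iff]
      exact hall Q hQmem
    have heq : ClassGroup.mk0 ⟨P, hPnz⟩ = ClassGroup.mk0 ⟨Q, hQnz⟩ := by
      by_contra hne'
      have : 3 ≤ Fintype.card (ClassGroup R) := by
        have h3 : ({1, ClassGroup.mk0 ⟨P, hPnz⟩, ClassGroup.mk0 ⟨Q, hQnz⟩} :
            Finset (ClassGroup R)).card = 3 := by
          rw [Finset.card_insert_of_notMem (by simp [Ne.symm hPne1, Ne.symm hQne1]),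
            Finset.card_insert_of_notMem (by simpa using hne'), Finset.card_singleton]
        calc 3 = _ := h3.symm
          _ ≤ Fintype.card (ClassGroup R) := Finset.card_le_univ _
      omega
    have hPQ1 : ClassGroup.mk0 (⟨P, hPnz⟩ * ⟨Q, hQnz⟩) = 1 := by
      rw [MonoidHom.map_mul, heq, ← sq, ← hcard]
      exact pow_card_eq_one
    have hPQprin : Submodule.IsPrincipal (P * Q) :=
      (ClassGroup.mk0_eq_one_iff (Submonoid.mul_mem _ hPnz hQnz)).mp hPQ1
    -- the cofactor is principal too
    have hprodeq : (P * Q) * F₂.prod = I := by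
      rw [← hFprod]; simp [Multiset.prod_cons, mul_assoc]
    have hF₂0 : F₂.prod ≠ 0 := by
      intro h0
      rw [h0, mul_zero] at hprodeq
      exact hI0 hprodeq.symm
    have hF₂nz : F₂.prod ∈ (Ideal R)⁰ := mem_nonZeroDivisors_of_ne_zero hF₂0
    have hJ1 : ClassGroup.mk0 ⟨F₂.prod, hF₂nz⟩ = 1 := by
      have hmul : ClassGroup.mk0 ((⟨P, hPnz⟩ * ⟨Q, hQnz⟩) * ⟨F₂.prod, hF₂nz⟩) = 1 := by
        have : ((⟨P, hPnz⟩ * ⟨Q, hQnz⟩) * ⟨F₂.prod, hF₂nz⟩ : (Ideal R)⁰) =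
            ⟨I, mem_nonZeroDivisors_of_ne_zero hI0⟩ :=
          Subtype.ext (by push_cast; exact hprodeq)
        rw [this, ClassGroup.mk0_eq_one_iff]
        exact ⟨x, rfl⟩
      rw [MonoidHom.map_mul, hPQ1, one_mul] at hmul
      exact hmul
    have hJprin : Submodule.IsPrincipal F₂.prod :=
      (ClassGroup.mk0_eq_one_iff hF₂nz).mp hJ1
    obtain ⟨y, hy⟩ := hPQprin
    obtain ⟨z, hz⟩ := hJprin
    -- x is associated to y * z, hence z spans the unit ideal, hence F₂ = 0
    have hyz : I = Ideal.span {y * z} := by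
      rw [← hprodeq, hy, hz, Ideal.submodule_span_eq, Ideal.submodule_span_eq,
        Ideal.span_singleton_mul_span_singleton]
    have hassoc : Associated x (y * z) := Ideal.span_singleton_eq_span_singleton.mp hyz
    have hyzirr : Irreducible (y * z) := hassoc.irreducible hx
    have hynu : ¬IsUnit y := by
      intro hyu
      have : P * Q = ⊤ := by
        rw [hy, Ideal.submodule_span_eq, Ideal.span_singleton_eq_top]; exact hyu
      have : IsUnit (P * Q) := Ideal.isUnit_iff.mpr this
      exact (prime_of_normalized_factor P hP).not_unit (isUnit_of_mul_isUnit_left this)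
    have hzu : IsUnit z := (hyzirr.isUnit_or_isUnit rfl).resolve_left hynu
    have hF₂unit : IsUnit F₂.prod := by
      rw [hz, Ideal.submodule_span_eq, Ideal.isUnit_iff, Ideal.span_singleton_eq_top]
      exact hzu
    have hF₂empty : F₂ = 0 := by
      by_contra hne'
      obtain ⟨S, hS⟩ := Multiset.exists_mem_of_ne_zero hne'
      have hSmem : S ∈ normalizedFactors I := by rw [hF1]; simp [hS]
      exact (prime_of_normalized_factor S hSmem).not_unit
        (isUnit_of_dvd_unit (Multiset.dvd_prod hS) hF₂unit)
    rw [hF₂empty]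
    simp
  · -- some factor is principal: I is generated by a prime element
    push_neg at hall
    obtain ⟨P, hPmem, hPprin⟩ := hall
    obtain ⟨p, hp⟩ := hPprin
    have hPpr : Prime P := prime_of_normalized_factor P hPmem
    have hp0 : p ≠ 0 := by
      rintro rfl
      exact hPpr.ne_zero (by simpa [Set.singleton_zero] using hp)
    have hpprime : Prime p := by
      rw [← Ideal.span_singleton_prime hp0]
      apply Ideal.isPrime_of_prime
      rwa [hp, Ideal.submodule_span_eq] at hPpr
    have hpdvd : p ∣ x := by
      have := dvd_of_mem_normalizedFactors hPmem
      rw [hp, Ideal.submodule_span_eq] at this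
      rw [hI, Ideal.dvd_span_singleton] at this
      exact Ideal.mem_span_singleton.mp this
    have hassoc : Associated p x := hpprime.irreducible.associated_of_dvd hx hpdvd
    have hIeq : I = P := by
      rw [hp, Ideal.submodule_span_eq, hI, Ideal.span_singleton_eq_span_singleton]
      exact hassoc.symm
    have hIirr : Irreducible I := by
      rw [hIeq]
      exact hPpr.irreducible
    have : normalizedFactors I = {I} := by
      rw [normalizedFactors_irreducible hIirr, normalize_eq]
    rw [this]
    have hIprin : Submodule.IsPrincipal I := ⟨x, rfl⟩
    rw [Multiset.filter_eq_nil.mpr (by simpa using hIprin)]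
    simp
end Carlitz

section CarlitzAux
variable {R : Type*} [CommRing R] [IsDomain R] [IsDedekindDomain R]

theorem carlitz_span_prod (s : Multiset R) (hs : ∀ a ∈ s, a ≠ 0) :
    normalizedFactors (Ideal.span {s.prod} : Ideal R) =
      (s.map (fun a => normalizedFactors (Ideal.span {a} : Ideal R))).sum := by
  induction s using Multiset.induction_on with
  | empty =>
    have h1 : (Ideal.span {(1 : R)} : Ideal R) = 1 := by
      rw [Ideal.one_eq_top, Ideal.span_singleton_one]
    rw [Multiset.prod_zero, h1, normalizedFactors_one, Multiset.map_zero, Multiset.sum_zero]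
  | cons a s ih =>
    have ha : a ≠ 0 := hs a (Multiset.mem_cons_self a s)
    have hs' : ∀ b ∈ s, b ≠ 0 := fun b hb => hs b (Multiset.mem_cons_of_mem hb)
    have hsp : s.prod ≠ 0 := Multiset.prod_ne_zero (fun h0 => hs' 0 h0 rfl)
    have hspan : (Ideal.span {(a ::ₘ s).prod} : Ideal R) =
        Ideal.span {a} * Ideal.span {s.prod} := by
      rw [Multiset.prod_cons, Ideal.span_singleton_mul_span_singleton]
    have ha' : (Ideal.span {a} : Ideal R) ≠ 0 := by
      simpa [Ideal.span_singleton_eq_bot] using ha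
    have hsp' : (Ideal.span {s.prod} : Ideal R) ≠ 0 := by
      simpa [Ideal.span_singleton_eq_bot] using hsp
    rw [hspan, normalizedFactors_mul ha' hsp', ih hs', Multiset.map_cons, Multiset.sum_cons]

open Classical in
theorem carlitz_count [Fintype (ClassGroup R)] (hcard : Fintype.card (ClassGroup R) = 2)
    (s : Multiset R) (hs : ∀ a ∈ s, Irreducible a) :
    2 * Multiset.card (normalizedFactors (Ideal.span {s.prod} : Ideal R)) =
      Multiset.card ((normalizedFactors (Ideal.span {s.prod} : Ideal R)).filter
        (fun P => ¬Submodule.IsPrincipal P)) + 2 * Multiset.card s := by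
  rw [carlitz_span_prod s (fun a ha => (hs a ha).ne_zero)]
  induction s using Multiset.induction_on with
  | empty => simp
  | cons a s ih =>
    have ha : Irreducible a := hs a (Multiset.mem_cons_self a s)
    have hs' : ∀ b ∈ s, Irreducible b := fun b hb => hs b (Multiset.mem_cons_of_mem hb)
    have key := carlitz_key hcard ha
    have ih' := ih hs'
    simp only [Multiset.map_cons, Multiset.sum_cons, Multiset.filter_add,
      Multiset.card_add, Multiset.card_cons] at *
    omega
end CarlitzAux

set_option synthInstance.maxHeartbeats 1000000 in
set_option maxHeartbeats 1000000 in
/-- The ring of integers of a number field of class number 2 is a half-factorial domain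
that is not a unique factorization domain (Carlitz). -/
theorem ringOfIntegers_classNumber_two (K : Type*) [Field K] [NumberField K]
    (h : NumberField.classNumber K = 2) :
    IsHalfFactorialDomain (NumberField.RingOfIntegers K) ∧
      ¬UniqueFactorizationMonoid (NumberField.RingOfIntegers K) := by
  classical
  set O := NumberField.RingOfIntegers K
  have hcard : Fintype.card (ClassGroup O) = 2 := by
    rwa [NumberField.classNumber] at h
  have hwf : WfDvdMonoid O := inferInstance
  refine ⟨⟨?_, ?_⟩, ?_⟩
  · -- atomic
    intro x hx0 hxu
    obtain ⟨f, hf, hfeq, -⟩ := (WfDvdMonoid.not_unit_iff_exists_factors_eq x hx0).mp hxu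
    exact ⟨f, hf, hfeq⟩
  · -- half-factorial
    intro s t hs ht hprod
    have hks := carlitz_count hcard s hs
    have hkt := carlitz_count hcard t ht
    rw [hprod] at hks
    omega
  · -- not a UFD
    intro hufm
    have : IsPrincipalIdealRing O := isPrincipalIdealRing_of_ufm
    have h1 : ∀ g : ClassGroup O, g = 1 := by
      intro g
      obtain ⟨I, rfl⟩ := ClassGroup.mk0_surjective g
      exact (ClassGroup.mk0_eq_one_iff I.2).mpr (IsPrincipalIdealRing.principal _)
    have h2 : Fintype.card (ClassGroup O) = 1 :=
      Fintype.card_eq_one_iff.mpr ⟨1, fun g => h1 g⟩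
    omega
end
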